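/- arXiv:math/0502263 — 9 statements merged into one kernel-verified Lean document; each statement's English description precedes it below -/
import Mathlib

section
/- For all integers b ≥ 2, the sum over k from 2 to b of C(b,k)·(k-2)!·(b-k)! equals (b-1)!·(b-1). -/
/-! The `k`-th summand is `b! / (k (k - 1))`, so passing from `b` to `b + 1` multiplies each old
summand by `b + 1` and adds the new summand `(b - 1)!` for `k = b + 1`; the closed form satisfies
the same recursion, `(b + 1) (b - 1)! (b - 1) + (b - 1)! = b! b`. -/

open Finset Nat

theorem choose_succ_mul_factorial_sub {n k : ℕ} (hk : k ≤ n) :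
    (n + 1).choose k * (n + 1 - k)! = (n + 1) * (n.choose k * (n - k)!) := by
  apply Nat.eq_of_mul_eq_mul_right k.factorial_pos
  calc (n + 1).choose k * (n + 1 - k)! * k ! = (n + 1)! := by
        rw [mul_right_comm, choose_mul_factorial_mul_factorial (by omega)]
    _ = (n + 1) * n ! := factorial_succ n
    _ = (n + 1) * (n.choose k * (n - k)!) * k ! := by
        rw [← choose_mul_factorial_mul_factorial hk]; ring

theorem sum_Icc_choose_mul_factorial_succ {b : ℕ} (hb : 1 ≤ b) :
    ∑ k ∈ Icc 2 (b + 1), (b + 1).choose k * (k - 2)! * (b + 1 - k)!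
      = (b + 1) * ∑ k ∈ Icc 2 b, b.choose k * (k - 2)! * (b - k)! + (b - 1)! := by
  rw [sum_Icc_succ_top (by omega), mul_sum, choose_self, Nat.sub_self, factorial_zero,
    show b + 1 - 2 = b - 1 by omega, one_mul, mul_one]
  congr 1
  refine sum_congr rfl fun k hk => ?_
  rw [mul_right_comm, choose_succ_mul_factorial_sub (mem_Icc.mp hk).2]
  ring

theorem stmt_0_general (b : ℕ) :
    ∑ k ∈ Finset.Icc 2 b, Nat.choose b k * Nat.factorial (k - 2) * Nat.factorial (b - k)
      = Nat.factorial (b - 1) * (b - 1) := by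
  induction b with
  | zero => rfl
  | succ b ih =>
    rcases b.eq_zero_or_pos with rfl | hb
    · rfl
    rw [sum_Icc_choose_mul_factorial_succ hb, ih]
    obtain ⟨m, rfl⟩ := Nat.exists_eq_add_of_le' hb
    simp only [Nat.add_sub_cancel, factorial_succ]
    ring

theorem stmt_0 (b : ℕ) (hb : 2 ≤ b) :
    ∑ k ∈ Finset.Icc 2 b, Nat.choose b k * Nat.factorial (k - 2) * Nat.factorial (b - k)
      = Nat.factorial (b - 1) * (b - 1) :=
  stmt_0_general b
end

section
/- Let U be uniform on [0,1] and E standard exponential, independent, and let (Y(t))_{t≥0} be a standard Yule process independent of (U,E). Then P(Y(UE) = 1) = log 2, and for m ≥ 2, P(Y(UE) = m) = (1/m)·Σ_{k=1}^{m} C(m,k)·(-1)^{k+1}·log(k+1). -/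
open Real MeasureTheory Set Finset

noncomputable def yulePMF (m : ℕ) (t : ℝ) : ℝ :=
  (1 - Real.exp (-t)) ^ (m - 1) - (1 - Real.exp (-t)) ^ m

lemma exp_int {b : ℝ} (hb : 0 < b) :
    ∫ x in Ioi (0:ℝ), Real.exp (-(b*x)) = b⁻¹ := by
  have h := integral_Ioi_of_hasDerivAt_of_tendsto'
    (f := fun x => -Real.exp (-(b*x)) / b) (f' := fun x => Real.exp (-(b*x)))
    (a := 0) (m := 0) ?_ ?_ ?_
  · rw [h]; simp [neg_div, one_div]
  · intro x _
    have h1 : HasDerivAt (fun x : ℝ => -(b*x)) (-b) x := by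
      simpa [Pi.neg_def] using ((hasDerivAt_id x).const_mul b).neg
    have h2 := (Real.hasDerivAt_exp (-(b*x))).comp x h1
    have h3 := (h2.neg).div_const b
    convert h3 using 1
    · rfl
    · rfl
    · field_simp
  · have := exp_neg_integrableOn_Ioi (0:ℝ) hb
    simpa [neg_mul] using this
  · have h0 : Filter.Tendsto (fun x : ℝ => Real.exp (-(b*x))) Filter.atTop (nhds 0) :=
      Real.tendsto_exp_neg_atTop_nhds_zero.comp (Filter.tendsto_id.const_mul_atTop hb)
    simpa using (h0.neg).div_const b

lemma repr_lemma (j : ℕ) (u x : ℝ) :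
    (1 - Real.exp (-(u*x)))^j * Real.exp (-x)
      = ∑ k ∈ range (j+1),
          (j.choose k : ℝ) * (-1)^k * Real.exp (-((u*k+1)*x)) := by
  have h : (1 - Real.exp (-(u*x)))^j
      = ∑ k ∈ range (j+1), (-Real.exp (-(u*x)))^k * 1^(j-k) * (j.choose k : ℝ) := by
    rw [← add_pow]; ring_nf
  rw [h, Finset.sum_mul]
  refine Finset.sum_congr rfl fun k _ => ?_
  have he : Real.exp (-(u*x))^k = Real.exp (-(u*k*x)) := by
    rw [← Real.exp_nat_mul]; ring_nf
  rw [neg_pow, he, one_pow, mul_one,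
    show -((u*(k:ℝ)+1)*x) = -(u*k*x) + -x by ring, Real.exp_add]
  ring

lemma pos_denom {u : ℝ} (hu : 0 ≤ u) (k : ℕ) : (0:ℝ) < u*k+1 := by
  have : (0:ℝ) ≤ u*k := mul_nonneg hu (Nat.cast_nonneg k)
  linarith

lemma integ_lemma (j : ℕ) {u : ℝ} (hu : 0 ≤ u) :
    IntegrableOn (fun x => (1 - Real.exp (-(u*x)))^j * Real.exp (-x)) (Ioi (0:ℝ)) := by
  have : (fun x => (1 - Real.exp (-(u*x)))^j * Real.exp (-x))
      = fun x => ∑ k ∈ range (j+1), (j.choose k : ℝ) * (-1)^k * Real.exp (-((u*k+1)*x)) := by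
    funext x; exact repr_lemma j u x
  rw [this]
  apply integrable_finset_sum
  intro k _
  have h := exp_neg_integrableOn_Ioi (0:ℝ) (pos_denom hu k)
  exact (h.congr_fun (fun x _ => by rw [neg_mul]) measurableSet_Ioi).const_mul _

lemma inner_int (j : ℕ) {u : ℝ} (hu : 0 ≤ u) :
    ∫ x in Ioi (0:ℝ), (1 - Real.exp (-(u*x)))^j * Real.exp (-x)
      = ∑ k ∈ range (j+1), (j.choose k : ℝ) * (-1)^k * (u*k+1)⁻¹ := by
  rw [setIntegral_congr_fun measurableSet_Ioi (fun x _ => repr_lemma j u x)]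
  rw [integral_finset_sum]
  · refine Finset.sum_congr rfl fun k _ => ?_
    rw [MeasureTheory.integral_const_mul, exp_int (pos_denom hu k)]
  · intro k _
    have h := exp_neg_integrableOn_Ioi (0:ℝ) (pos_denom hu k)
    exact (h.congr_fun (fun x _ => by rw [neg_mul]) measurableSet_Ioi).const_mul _

lemma J_int (k : ℕ) :
    ∫ u in (0:ℝ)..1, (u*k+1)⁻¹ = if k = 0 then 1 else Real.log (k+1) / k := by
  rcases Nat.eq_zero_or_pos k with rfl | hk
  · simp
  · have hk' : (0:ℝ) < k := by exact_mod_cast hk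
    rw [if_neg hk.ne']
    have hderiv : ∀ u ∈ Set.uIcc (0:ℝ) 1,
        HasDerivAt (fun u : ℝ => Real.log (u*k+1) / k) ((u*k+1)⁻¹) u := by
      intro u hu
      rw [Set.uIcc_of_le (by norm_num)] at hu
      have hpos := pos_denom hu.1 k
      have h1 : HasDerivAt (fun u : ℝ => u*k+1) (k:ℝ) u := by
        simpa using ((hasDerivAt_id u).mul_const (k:ℝ)).add_const 1
      have h2 := (Real.hasDerivAt_log hpos.ne').comp u h1
      have h3 := h2.div_const (k:ℝ)
      convert h3 using 1
      · rfl
      · rfl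
      · rfl
      · field_simp
    rw [intervalIntegral.integral_eq_sub_of_hasDerivAt hderiv]
    · simp
    · apply ContinuousOn.intervalIntegrable
      apply ContinuousOn.inv₀
      · fun_prop
      · intro u hu
        rw [Set.uIcc_of_le (by norm_num)] at hu
        exact (pos_denom hu.1 k).ne'

set_option maxHeartbeats 1000000 in
lemma main_formula (m : ℕ) (hm : 1 ≤ m) :
    (∫ u in (0:ℝ)..1, ∫ x in Set.Ioi (0:ℝ), yulePMF m (u * x) * Real.exp (-x))
      = (1 / (m : ℝ)) * ∑ k ∈ Finset.Icc 1 m,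
          (Nat.choose m k : ℝ) * (-1) ^ (k + 1) * Real.log ((k : ℝ) + 1) := by
  obtain ⟨n, rfl⟩ : ∃ n, m = n + 1 := ⟨m - 1, by omega⟩
  clear hm
  have hm1 : n + 1 - 1 = n := by omega
  -- step 1: inner integral
  have step1 : ∀ u ∈ Set.uIcc (0:ℝ) 1,
      (∫ x in Set.Ioi (0:ℝ), yulePMF (n+1) (u * x) * Real.exp (-x))
        = (∑ k ∈ range (n+1), (n.choose k : ℝ) * (-1)^k * (u*k+1)⁻¹)
          - ∑ k ∈ range (n+1+1), ((n+1).choose k : ℝ) * (-1)^k * (u*k+1)⁻¹ := by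
    intro u hu
    rw [Set.uIcc_of_le (by norm_num)] at hu
    have hu0 : 0 ≤ u := hu.1
    have heq : ∀ x : ℝ, yulePMF (n+1) (u * x) * Real.exp (-x)
        = (1 - Real.exp (-(u*x)))^n * Real.exp (-x)
          - (1 - Real.exp (-(u*x)))^(n+1) * Real.exp (-x) := by
      intro x; simp only [yulePMF, hm1]; ring
    rw [setIntegral_congr_fun measurableSet_Ioi (fun x _ => heq x),
      integral_sub (integ_lemma n hu0) (integ_lemma (n+1) hu0),
      inner_int n hu0, inner_int (n+1) hu0]
  rw [intervalIntegral.integral_congr step1]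
  -- step 2: swap outer integral with sums
  have hII : ∀ k : ℕ, IntervalIntegrable (fun u : ℝ => (u*(k:ℝ)+1)⁻¹) volume 0 1 := by
    intro k
    apply ContinuousOn.intervalIntegrable
    apply ContinuousOn.inv₀
    · fun_prop
    · intro u hu
      rw [Set.uIcc_of_le (by norm_num)] at hu
      exact (pos_denom hu.1 k).ne'
  have hIIc : ∀ (j : ℕ), IntervalIntegrable
      (fun u : ℝ => ∑ k ∈ range (j+1), (j.choose k : ℝ) * (-1)^k * (u*(k:ℝ)+1)⁻¹) volume 0 1 := by
    intro j
    apply ContinuousOn.intervalIntegrable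
    apply continuousOn_finset_sum
    intro k _
    apply ContinuousOn.mul continuousOn_const
    apply ContinuousOn.inv₀ (by fun_prop)
    intro u hu
    rw [Set.uIcc_of_le (by norm_num)] at hu
    exact (pos_denom hu.1 k).ne'
  rw [intervalIntegral.integral_sub (hIIc n) (hIIc (n+1))]
  rw [intervalIntegral.integral_finset_sum (fun k _ => (hII k).const_mul ((n.choose k : ℝ) * (-1)^k)),
      intervalIntegral.integral_finset_sum (fun k _ => (hII k).const_mul (((n+1).choose k : ℝ) * (-1)^k))]
  have houter : ∀ (j : ℕ), ∑ k ∈ range (j+1),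
      (∫ u in (0:ℝ)..1, (j.choose k : ℝ) * (-1)^k * (u*(k:ℝ)+1)⁻¹)
      = (∑ k ∈ range j, (j.choose (k+1) : ℝ) * (-1)^(k+1) * (Real.log ((k:ℝ)+2) / ((k:ℝ)+1))) + 1 := by
    intro j
    rw [Finset.sum_range_succ']
    congr 1
    · refine Finset.sum_congr rfl fun k _ => ?_
      rw [intervalIntegral.integral_const_mul, J_int (k+1), if_neg (Nat.succ_ne_zero k)]
      push_cast
      ring_nf
    · rw [intervalIntegral.integral_const_mul, J_int 0]
      simp
  rw [houter n, houter (n+1)]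
  have hext : ∑ k ∈ range n, (n.choose (k+1) : ℝ) * (-1)^(k+1) * (Real.log ((k:ℝ)+2) / ((k:ℝ)+1))
      = ∑ k ∈ range (n+1), (n.choose (k+1) : ℝ) * (-1)^(k+1) * (Real.log ((k:ℝ)+2) / ((k:ℝ)+1)) := by
    rw [Finset.sum_range_succ, Nat.choose_succ_self]
    simp
  rw [hext]
  rw [show ∀ a b : ℝ, (a + 1) - (b + 1) = a - b from fun a b => by ring]
  rw [← Finset.sum_sub_distrib]
  rw [← Finset.Ico_add_one_right_eq_Icc, Finset.sum_Ico_eq_sum_range]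
  rw [show n + 1 + 1 - 1 = n + 1 from rfl, Finset.mul_sum]
  refine Finset.sum_congr rfl fun k _ => ?_
  have hc : ((n + 1) * n.choose k : ℕ) = ((n + 1).choose (k + 1) * (k + 1) : ℕ) := by
    simpa [Nat.succ_eq_add_one] using Nat.add_one_mul_choose_eq n k
  have h1 : (n + 1).choose (k + 1) = n.choose k + n.choose (k + 1) := Nat.choose_succ_succ n k
  rw [show (1:ℕ)+k = k+1 from by omega]
  rw [h1] at hc ⊢
  push_cast at hc ⊢
  have hk1 : ((k:ℝ)+1) ≠ 0 := by positivity
  have hn1 : ((n:ℝ)+1) ≠ 0 := by positivity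
  have hlog : Real.log ((k:ℝ) + 1 + 1) = Real.log ((k:ℝ)+2) := by congr 1; ring
  rw [hlog]
  have hcR : ((n:ℝ)+1) * (n.choose k : ℝ)
      = ((n.choose k : ℝ) + (n.choose (k+1) : ℝ)) * ((k:ℝ)+1) := by exact_mod_cast hc
  field_simp
  linear_combination ((-1)^k * Real.log ((k:ℝ)+2)) * hcR

/-- `P(Y(UE) = m) = ∫_0^1 ∫_0^∞ P(Y(ux) = m) e^{-x} dx du`, with `U` uniform on `[0,1]`,
`E` standard exponential, `Y` a standard Yule process, all independent. -/
theorem stmt_6 :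
    (∫ u in (0:ℝ)..1, ∫ x in Set.Ioi (0:ℝ), yulePMF 1 (u * x) * Real.exp (-x)) = Real.log 2 ∧
    ∀ m : ℕ, 2 ≤ m →
      (∫ u in (0:ℝ)..1, ∫ x in Set.Ioi (0:ℝ), yulePMF m (u * x) * Real.exp (-x))
        = (1 / (m : ℝ)) * ∑ k ∈ Finset.Icc 1 m,
            (Nat.choose m k : ℝ) * (-1) ^ (k + 1) * Real.log ((k : ℝ) + 1) := by
  constructor
  · rw [main_formula 1 le_rfl]
    norm_num
  · intro m hm
    exact main_formula m (by omega)
end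

section
/- For each m ≥ 1, the quantity (1/m)·Σ_{k=1}^{m} C(m,k)·(-1)^{k+1}·log(k+1) is strictly positive, and Σ_{m=1}^{∞} (1/m)·Σ_{k=1}^{m} C(m,k)·(-1)^{k+1}·log(k+1) = 1. -/
open MeasureTheory Real Set
open scoped ENNReal

open intervalIntegral in
private lemma stmt7_L1 {u : ℝ} (hu : u ∈ Set.Ioo (0:ℝ) 1) (k : ℕ) :
    ∫ s in Set.Ioc (0:ℝ) (k:ℝ), Real.exp (Real.log u * s) =
      (1 - u ^ k) / (-Real.log u) := by
  obtain ⟨hu0, hu1⟩ := hu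
  have hlog : Real.log u < 0 := Real.log_neg hu0 hu1
  have hlogne : Real.log u ≠ 0 := hlog.ne
  have h0k : (0:ℝ) ≤ (k:ℝ) := Nat.cast_nonneg k
  have huk : Real.exp (Real.log u * (k:ℝ)) = u ^ k := by
    rw [← Real.rpow_def_of_pos hu0, Real.rpow_natCast]
  rw [← intervalIntegral.integral_of_le h0k,
    integral_comp_mul_left (a := (0:ℝ)) (b := (k:ℝ)) Real.exp hlogne,
    mul_zero, integral_exp, huk, Real.exp_zero, smul_eq_mul]
  field_simp
  ring_nf

private lemma stmt7_L2 (k : ℕ) :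
    Integrable (fun p : ℝ × ℝ => Real.exp (Real.log p.1 * p.2))
      ((volume.restrict (Set.Ioo (0:ℝ) 1)).prod (volume.restrict (Set.Ioc (0:ℝ) (k:ℝ)))) := by
  have hmeas : Measurable fun p : ℝ × ℝ => Real.exp (Real.log p.1 * p.2) :=
    ((Real.measurable_log.comp measurable_fst).mul measurable_snd).exp
  refine Integrable.mono' (g := fun _ => (1:ℝ)) (integrable_const 1)
    hmeas.aestronglyMeasurable ?_
  rw [Measure.prod_restrict]
  refine (ae_restrict_iff' (measurableSet_Ioo.prod measurableSet_Ioc)).2 ?_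
  filter_upwards with p hp
  obtain ⟨⟨h01, h11⟩, h2, _⟩ := hp
  have hlog : Real.log p.1 < 0 := Real.log_neg h01 h11
  rw [Real.norm_eq_abs, abs_of_pos (Real.exp_pos _)]
  rw [show (1:ℝ) = Real.exp 0 by simp]
  exact Real.exp_le_exp.2 (by nlinarith)

private lemma stmt7_L3 {s : ℝ} (hs : 0 < s) :
    ∫ u in Set.Ioo (0:ℝ) 1, Real.exp (Real.log u * s) = (s + 1)⁻¹ := by
  have h1 : ∫ u in Set.Ioo (0:ℝ) 1, Real.exp (Real.log u * s)
      = ∫ u in Set.Ioo (0:ℝ) 1, u ^ s := by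
    refine setIntegral_congr_fun measurableSet_Ioo fun u hu => ?_
    rw [Real.rpow_def_of_pos hu.1]
  rw [h1, ← integral_Ioc_eq_integral_Ioo, ← intervalIntegral.integral_of_le zero_le_one,
    integral_rpow (Or.inl (by linarith))]
  rw [Real.one_rpow, Real.zero_rpow (by linarith)]
  rw [sub_zero, one_div]

private lemma stmt7_L4 (k : ℕ) :
    ∫ s in Set.Ioc (0:ℝ) (k:ℝ), ((s:ℝ) + 1)⁻¹ = Real.log ((k:ℝ) + 1) := by
  rw [← intervalIntegral.integral_of_le (Nat.cast_nonneg k)]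
  rw [intervalIntegral.integral_comp_add_right (fun y => y⁻¹) 1]
  rw [integral_inv (by
    intro h
    rw [Set.mem_uIcc] at h
    rcases h with ⟨h1, _⟩ | ⟨_, h2⟩ <;> [linarith; (have := Nat.cast_nonneg (α := ℝ) k; linarith)])]
  rw [zero_add, div_one]

private lemma stmt7_L5int (k : ℕ) :
    Integrable (fun u => (1 - u ^ k) / (-Real.log u)) (volume.restrict (Set.Ioo (0:ℝ) 1)) := by
  have h := (stmt7_L2 k).integral_prod_left
  refine h.congr ?_
  refine (ae_restrict_iff' measurableSet_Ioo).2 ?_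
  filter_upwards with u hu
  exact stmt7_L1 hu k

private lemma stmt7_L5 (k : ℕ) :
    ∫ u in Set.Ioo (0:ℝ) 1, (1 - u ^ k) / (-Real.log u) = Real.log ((k:ℝ) + 1) := by
  have h1 : ∫ u in Set.Ioo (0:ℝ) 1, (1 - u ^ k) / (-Real.log u)
      = ∫ u in Set.Ioo (0:ℝ) 1, ∫ s in Set.Ioc (0:ℝ) (k:ℝ), Real.exp (Real.log u * s) := by
    refine setIntegral_congr_fun measurableSet_Ioo fun u hu => ?_
    exact (stmt7_L1 hu k).symm
  rw [h1]
  rw [MeasureTheory.integral_integral_swap (stmt7_L2 k)]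
  have h2 : ∫ s in Set.Ioc (0:ℝ) (k:ℝ), (∫ u in Set.Ioo (0:ℝ) 1, Real.exp (Real.log u * s))
      = ∫ s in Set.Ioc (0:ℝ) (k:ℝ), ((s:ℝ) + 1)⁻¹ := by
    refine setIntegral_congr_fun measurableSet_Ioc fun s hs => ?_
    exact stmt7_L3 hs.1
  rw [h2, stmt7_L4]

private lemma stmt7_alg {m : ℕ} (hm : 1 ≤ m) (x : ℝ) :
    ∑ k ∈ Finset.Icc 1 m, (Nat.choose m k : ℝ) * (-1) ^ (k + 1) * (1 - x ^ k)
      = (1 - x) ^ m := by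
  have hsub : ∑ k ∈ Finset.Icc 1 m, (Nat.choose m k : ℝ) * (-1) ^ (k + 1) * (1 - x ^ k)
      = ∑ k ∈ Finset.range (m + 1), (Nat.choose m k : ℝ) * (-1) ^ (k + 1) * (1 - x ^ k) := by
    refine Finset.sum_subset (fun k hk => ?_) (fun k hk hk' => ?_)
    · rw [Finset.mem_Icc] at hk; rw [Finset.mem_range]; omega
    · rw [Finset.mem_range] at hk; rw [Finset.mem_Icc] at hk'
      have : k = 0 := by omega
      subst this; simp
  rw [hsub]
  have key : ∀ k : ℕ, (Nat.choose m k : ℝ) * (-1) ^ (k + 1) * (1 - x ^ k)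
      = (-x) ^ k * 1 ^ (m - k) * (Nat.choose m k : ℝ)
        - (-1) ^ k * 1 ^ (m - k) * (Nat.choose m k : ℝ) := by
    intro k
    rw [pow_succ, neg_pow]
    ring
  rw [Finset.sum_congr rfl fun k _ => key k, Finset.sum_sub_distrib,
    ← add_pow (-x) 1 m, ← add_pow (-1 : ℝ) 1 m]
  have : (-1 + 1 : ℝ) = 0 := by ring
  rw [this, zero_pow (by omega), sub_zero]
  ring_nf

private lemma stmt7_sum_eq_int {m : ℕ} (hm : 1 ≤ m) :
    ∑ k ∈ Finset.Icc 1 m, (Nat.choose m k : ℝ) * (-1) ^ (k + 1) * Real.log ((k:ℝ) + 1)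
      = ∫ u in Set.Ioo (0:ℝ) 1, (1 - u) ^ m / (-Real.log u) := by
  have h1 : ∀ k ∈ Finset.Icc 1 m,
      (Nat.choose m k : ℝ) * (-1) ^ (k + 1) * Real.log ((k:ℝ) + 1)
        = ∫ u in Set.Ioo (0:ℝ) 1,
            (Nat.choose m k : ℝ) * (-1) ^ (k + 1) * ((1 - u ^ k) / (-Real.log u)) := by
    intro k _
    rw [MeasureTheory.integral_const_mul, stmt7_L5 k]
  rw [Finset.sum_congr rfl h1, ← MeasureTheory.integral_finset_sum _
    (fun k _ => (stmt7_L5int k).const_mul _)]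
  refine setIntegral_congr_fun measurableSet_Ioo fun u hu => ?_
  have : ∑ k ∈ Finset.Icc 1 m,
      (Nat.choose m k : ℝ) * (-1) ^ (k + 1) * ((1 - u ^ k) / (-Real.log u))
      = (∑ k ∈ Finset.Icc 1 m, (Nat.choose m k : ℝ) * (-1) ^ (k + 1) * (1 - u ^ k))
          / (-Real.log u) := by
    rw [Finset.sum_div]
    exact Finset.sum_congr rfl fun k _ => by ring
  rw [this, stmt7_alg hm u]

private lemma stmt7_int_h {m : ℕ} (hm : 1 ≤ m) :
    Integrable (fun u => (1 - u) ^ m / (-Real.log u)) (volume.restrict (Set.Ioo (0:ℝ) 1)) := by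
  have h : Integrable (fun u => ∑ k ∈ Finset.Icc 1 m,
      (Nat.choose m k : ℝ) * (-1) ^ (k + 1) * ((1 - u ^ k) / (-Real.log u)))
      (volume.restrict (Set.Ioo (0:ℝ) 1)) :=
    MeasureTheory.integrable_finset_sum _ (fun k _ => (stmt7_L5int k).const_mul _)
  refine h.congr ?_
  refine (ae_restrict_iff' measurableSet_Ioo).2 ?_
  filter_upwards with u hu
  have : ∑ k ∈ Finset.Icc 1 m,
      (Nat.choose m k : ℝ) * (-1) ^ (k + 1) * ((1 - u ^ k) / (-Real.log u))
      = (∑ k ∈ Finset.Icc 1 m, (Nat.choose m k : ℝ) * (-1) ^ (k + 1) * (1 - u ^ k))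
          / (-Real.log u) := by
    rw [Finset.sum_div]; exact Finset.sum_congr rfl fun k _ => by ring
  rw [this, stmt7_alg hm u]

private lemma stmt7_h_nonneg {m : ℕ} {u : ℝ} (hu : u ∈ Set.Ioo (0:ℝ) 1) :
    0 ≤ (1 - u) ^ m / (-Real.log u) := by
  have hlog : Real.log u < 0 := Real.log_neg hu.1 hu.2
  have h1 : (0:ℝ) ≤ 1 - u := by linarith [hu.2]
  exact div_nonneg (pow_nonneg h1 m) (by linarith)

private lemma stmt7_h_pos {m : ℕ} {u : ℝ} (hu : u ∈ Set.Ioo (0:ℝ) 1) :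
    0 < (1 - u) ^ m / (-Real.log u) := by
  have hlog : Real.log u < 0 := Real.log_neg hu.1 hu.2
  have h1 : (0:ℝ) < 1 - u := by linarith [hu.2]
  exact div_pos (pow_pos h1 m) (by linarith)

private lemma stmt7_int_pos {m : ℕ} (hm : 1 ≤ m) :
    0 < ∫ u in Set.Ioo (0:ℝ) 1, (1 - u) ^ m / (-Real.log u) := by
  rw [setIntegral_pos_iff_support_of_nonneg_ae
    ((ae_restrict_iff' measurableSet_Ioo).2 (Filter.Eventually.of_forall
      fun u hu => stmt7_h_nonneg hu)) (stmt7_int_h hm)]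
  have hsub : Set.Ioo (0:ℝ) 1 ⊆ Function.support (fun u => (1 - u) ^ m / (-Real.log u)) :=
    fun u hu => (stmt7_h_pos hu).ne'
  calc (0:ℝ≥0∞) < 1 := by norm_num
    _ = volume (Set.Ioo (0:ℝ) 1) := by rw [Real.volume_Ioo]; norm_num
    _ ≤ volume (Function.support (fun u => (1 - u) ^ m / (-Real.log u)) ∩ Set.Ioo (0:ℝ) 1) :=
      measure_mono (Set.subset_inter hsub (subset_refl _))

private noncomputable def stmt7_g (n : ℕ) (u : ℝ) : ℝ :=
  (1 / ((n:ℝ) + 1)) * ((1 - u) ^ (n+1) / (-Real.log u))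

private lemma stmt7_g_hasSum {u : ℝ} (hu : u ∈ Set.Ioo (0:ℝ) 1) :
    HasSum (fun n => stmt7_g n u) 1 := by
  obtain ⟨hu0, hu1⟩ := hu
  have hlog : Real.log u < 0 := Real.log_neg hu0 hu1
  have hx : |1 - u| < 1 := abs_lt.2 ⟨by linarith, by linarith⟩
  have h := (Real.hasSum_pow_div_log_of_abs_lt_one hx).mul_right (-Real.log u)⁻¹
  rw [show (1:ℝ) - (1 - u) = u by ring] at h
  have hval : -Real.log u * (-Real.log u)⁻¹ = 1 := mul_inv_cancel₀ (by linarith)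
  rw [hval] at h
  refine h.congr_fun fun n => ?_
  unfold stmt7_g
  ring

private lemma stmt7_g_nonneg {n : ℕ} {u : ℝ} (hu : u ∈ Set.Ioo (0:ℝ) 1) :
    0 ≤ stmt7_g n u := by
  unfold stmt7_g
  have := stmt7_h_nonneg (m := n+1) hu
  positivity

private lemma stmt7_g_integrable (n : ℕ) :
    Integrable (stmt7_g n) (volume.restrict (Set.Ioo (0:ℝ) 1)) :=
  (stmt7_int_h (Nat.le_add_left 1 n)).const_mul _

private lemma stmt7_g_meas (n : ℕ) : Measurable (stmt7_g n) := by
  unfold stmt7_g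
  exact (((measurable_const.sub measurable_id).pow_const (n+1)).div
    Real.measurable_log.neg).const_mul _

theorem stmt_7 :
    (∀ m : ℕ, 1 ≤ m →
      0 < (1 / (m : ℝ)) * ∑ k ∈ Finset.Icc 1 m,
            (Nat.choose m k : ℝ) * (-1) ^ (k + 1) * Real.log ((k : ℝ) + 1)) ∧
    (∑' n : ℕ, (1 / ((n : ℝ) + 1)) * ∑ k ∈ Finset.Icc 1 (n + 1),
        (Nat.choose (n + 1) k : ℝ) * (-1) ^ (k + 1) * Real.log ((k : ℝ) + 1)) = 1 := by
  constructor
  · intro m hm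
    refine mul_pos (by positivity) ?_
    rw [stmt7_sum_eq_int hm]
    exact stmt7_int_pos hm
  · set t : ℕ → ℝ := fun n => (1 / ((n : ℝ) + 1)) * ∑ k ∈ Finset.Icc 1 (n + 1),
      (Nat.choose (n + 1) k : ℝ) * (-1) ^ (k + 1) * Real.log ((k : ℝ) + 1) with ht
    have h_t : ∀ n, t n = ∫ u in Set.Ioo (0:ℝ) 1, stmt7_g n u := by
      intro n
      rw [ht]
      simp only
      rw [stmt7_sum_eq_int (Nat.le_add_left 1 n), ← MeasureTheory.integral_const_mul]
      rfl
    have h_nn : ∀ n, 0 ≤ᵐ[volume.restrict (Set.Ioo (0:ℝ) 1)] stmt7_g n := fun n =>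
      (ae_restrict_iff' measurableSet_Ioo).2
        (Filter.Eventually.of_forall fun u hu => stmt7_g_nonneg hu)
    have hofReal_t : ∀ n, ENNReal.ofReal (t n)
        = ∫⁻ u in Set.Ioo (0:ℝ) 1, ENNReal.ofReal (stmt7_g n u) := by
      intro n
      rw [h_t n]
      exact MeasureTheory.ofReal_integral_eq_lintegral_ofReal (stmt7_g_integrable n) (h_nn n)
    have hsum_lint : ∑' n, ENNReal.ofReal (t n) = 1 := by
      simp_rw [hofReal_t]
      rw [← MeasureTheory.lintegral_tsum
        (fun n => ((stmt7_g_meas n).ennreal_ofReal).aemeasurable)]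
      have hcong : ∫⁻ u in Set.Ioo (0:ℝ) 1, ∑' n, ENNReal.ofReal (stmt7_g n u)
          = ∫⁻ u in Set.Ioo (0:ℝ) 1, 1 := by
        refine setLIntegral_congr_fun measurableSet_Ioo ?_
        intro u hu
        beta_reduce
        have hs := stmt7_g_hasSum hu
        rw [← ENNReal.ofReal_tsum_of_nonneg (fun n => stmt7_g_nonneg hu) hs.summable,
          hs.tsum_eq, ENNReal.ofReal_one]
      rw [hcong, setLIntegral_one, Real.volume_Ioo]
      norm_num
    have htnn : ∀ n, 0 ≤ t n := fun n => by
      rw [h_t n]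
      exact MeasureTheory.integral_nonneg_of_ae (h_nn n)
    have hsummable : Summable t := by
      have h1 := ENNReal.summable_toReal (by rw [hsum_lint]; exact ENNReal.one_ne_top)
      refine h1.congr fun n => ?_
      rw [ENNReal.toReal_ofReal (htnn n)]
    have hfin : ENNReal.ofReal (∑' n, t n) = 1 := by
      rw [ENNReal.ofReal_tsum_of_nonneg htnn hsummable, hsum_lint]
    have h2 := congrArg ENNReal.toReal hfin
    rwa [ENNReal.toReal_ofReal (tsum_nonneg htnn), ENNReal.toReal_one] at h2
end

section
/- Σ_{m=2}^{∞} ( (1/(m-1))·Σ_{k=1}^{m-1} C(m-1,k)·(-1)^{k+1}·log(k+1) ) = 1, equivalently e = ∏_{n=1}^{∞} ( ∏_{k=1}^{n} (k+1)^{C(n,k)·(-1)^{k+1}} )^{1/n}. -/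
open MeasureTheory intervalIntegral Real Set

lemma exp_int_s9 (c : ℝ) (hc : c ≠ 0) (b : ℝ) : ∫ s in (0:ℝ)..b, Real.exp (s * c) = (Real.exp (b*c) - 1)/c := by
  rw [intervalIntegral.integral_comp_mul_right (fun u => Real.exp u) hc]
  simp [integral_exp, smul_eq_mul, div_eq_inv_mul]

lemma one_div_int (b : ℝ) (hb : 0 ≤ b) : ∫ s in (0:ℝ)..b, 1/(s+1) = Real.log (b+1) := by
  rw [intervalIntegral.integral_comp_add_right (fun u => 1/u) 1]
  rw [integral_one_div]
  · simp
  · rw [Set.uIcc_of_le (by linarith : (0:ℝ)+1 ≤ b+1)]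
    simp only [Set.mem_Icc]
    intro h; linarith [h.1]

lemma lem_B {x : ℝ} (hx : x ∈ Set.Ioo (0:ℝ) 1) (k : ℕ) :
    ∫⁻ s in Set.Ioo (0:ℝ) k, ENNReal.ofReal (x ^ s) = ENNReal.ofReal ((x^k - 1)/Real.log x) := by
  obtain ⟨hx0, hx1⟩ := hx
  have hlog : Real.log x < 0 := Real.log_neg hx0 hx1
  have hcont : Continuous (fun s : ℝ => x ^ s) := by
    rw [show (fun s : ℝ => x ^ s) = fun s => Real.exp (Real.log x * s) from funext fun s => Real.rpow_def_of_pos hx0 s]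
    fun_prop
  have hint : IntegrableOn (fun s : ℝ => x ^ s) (Set.Ioo (0:ℝ) k) := by
    refine IntegrableOn.mono_set ?_ Set.Ioo_subset_Ioc_self
    rw [← Set.uIoc_of_le (by positivity : (0:ℝ) ≤ k), ← intervalIntegrable_iff]
    exact hcont.intervalIntegrable _ _
  rw [← ofReal_integral_eq_lintegral_ofReal hint (ae_of_all _ fun s => Real.rpow_nonneg hx0.le s)]
  congr 1
  rw [← integral_Ioc_eq_integral_Ioo, ← intervalIntegral.integral_of_le (by positivity : (0:ℝ) ≤ k)]
  have : ∀ s : ℝ, x ^ s = Real.exp (s * Real.log x) := fun s => by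
    rw [Real.rpow_def_of_pos hx0, mul_comm]
  simp_rw [this]
  rw [exp_int_s9 _ hlog.ne, mul_comm ((k:ℝ)) (Real.log x), ← Real.rpow_def_of_pos hx0, Real.rpow_natCast]

lemma lem_C {s : ℝ} (hs : -1 < s) :
    ∫⁻ x in Set.Ioo (0:ℝ) 1, ENNReal.ofReal (x ^ s) = ENNReal.ofReal (1/(s+1)) := by
  have hint : IntegrableOn (fun x : ℝ => x ^ s) (Set.Ioo (0:ℝ) 1) := by
    refine IntegrableOn.mono_set ?_ Set.Ioo_subset_Ioc_self
    rw [← Set.uIoc_of_le (by norm_num : (0:ℝ) ≤ 1), ← intervalIntegrable_iff]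
    exact intervalIntegral.intervalIntegrable_rpow' hs
  rw [← ofReal_integral_eq_lintegral_ofReal hint ((ae_restrict_iff' measurableSet_Ioo).2 (ae_of_all _ fun x hx => Real.rpow_nonneg hx.1.le s))]
  congr 1
  rw [← integral_Ioc_eq_integral_Ioo, ← intervalIntegral.integral_of_le (by norm_num : (0:ℝ) ≤ 1)]
  rw [integral_rpow (Or.inl hs)]
  rw [Real.one_rpow, Real.zero_rpow (by linarith)]
  ring

lemma lem_L1 (k : ℕ) : ∫⁻ x in Set.Ioo (0:ℝ) 1, ENNReal.ofReal ((x^k - 1)/Real.log x)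
    = ENNReal.ofReal (Real.log (k+1)) := by
  have step1 : ∫⁻ x in Set.Ioo (0:ℝ) 1, ENNReal.ofReal ((x^k - 1)/Real.log x)
      = ∫⁻ x in Set.Ioo (0:ℝ) 1, ∫⁻ s in Set.Ioo (0:ℝ) k, ENNReal.ofReal (Real.exp (s * Real.log x)) := by
    refine setLIntegral_congr_fun measurableSet_Ioo (fun x hx => ?_)
    rw [← lem_B hx k]
    refine setLIntegral_congr_fun measurableSet_Ioo (fun s _ => ?_)
    rw [Real.rpow_def_of_pos hx.1, mul_comm]
  have hmeas : Measurable (Function.uncurry fun (x s : ℝ) => ENNReal.ofReal (Real.exp (s * Real.log x))) := by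
    apply Measurable.ennreal_ofReal
    exact Real.measurable_exp.comp ((measurable_snd).mul (Real.measurable_log.comp measurable_fst))
  have step2 : ∫⁻ x in Set.Ioo (0:ℝ) 1, ∫⁻ s in Set.Ioo (0:ℝ) k, ENNReal.ofReal (Real.exp (s * Real.log x))
      = ∫⁻ s in Set.Ioo (0:ℝ) k, ∫⁻ x in Set.Ioo (0:ℝ) 1, ENNReal.ofReal (Real.exp (s * Real.log x)) :=
    lintegral_lintegral_swap hmeas.aemeasurable
  have step3 : ∫⁻ s in Set.Ioo (0:ℝ) k, ∫⁻ x in Set.Ioo (0:ℝ) 1, ENNReal.ofReal (Real.exp (s * Real.log x))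
      = ∫⁻ s in Set.Ioo (0:ℝ) k, ENNReal.ofReal (1/(s+1)) := by
    refine setLIntegral_congr_fun measurableSet_Ioo (fun s hs => ?_)
    rw [← lem_C (by linarith [hs.1] : (-1:ℝ) < s)]
    refine setLIntegral_congr_fun measurableSet_Ioo (fun x hx => ?_)
    rw [Real.rpow_def_of_pos hx.1, mul_comm]
  have hk : (0:ℝ) ≤ k := by positivity
  have step4 : ∫⁻ s in Set.Ioo (0:ℝ) k, ENNReal.ofReal (1/(s+1)) = ENNReal.ofReal (Real.log (k+1)) := by
    have hint : IntegrableOn (fun s : ℝ => 1/(s+1)) (Set.Ioo (0:ℝ) k) := by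
      refine IntegrableOn.mono_set ?_ Set.Ioo_subset_Ioc_self
      rw [← Set.uIoc_of_le hk, ← intervalIntegrable_iff]
      refine ContinuousOn.intervalIntegrable ?_
      refine ContinuousOn.div continuousOn_const (by fun_prop) fun s hs => ?_
      rw [Set.uIcc_of_le hk] at hs
      have := hs.1; intro h; linarith
    rw [← ofReal_integral_eq_lintegral_ofReal hint
      ((ae_restrict_iff' measurableSet_Ioo).2 (ae_of_all _ fun s hs => by have := hs.1; positivity))]
    congr 1
    rw [← integral_Ioc_eq_integral_Ioo, ← intervalIntegral.integral_of_le hk, one_div_int _ hk]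
  rw [step1, step2, step3, step4]

lemma lem_meas (k : ℕ) : Measurable (fun x : ℝ => (x^k - 1)/Real.log x) :=
  ((measurable_id.pow_const k).sub measurable_const).div Real.measurable_log

lemma lem_nonneg (k : ℕ) {x : ℝ} (hx : x ∈ Set.Ioo (0:ℝ) 1) : 0 ≤ (x^k - 1)/Real.log x :=
  div_nonneg_of_nonpos (by nlinarith [pow_le_one₀ hx.1.le hx.2.le (n := k)])
    (Real.log_nonpos hx.1.le hx.2.le)

lemma lem_nonneg_ae (k : ℕ) : 0 ≤ᵐ[volume.restrict (Set.Ioo (0:ℝ) 1)] fun x => (x^k - 1)/Real.log x :=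
  (ae_restrict_iff' measurableSet_Ioo).2 (ae_of_all _ fun x hx => lem_nonneg k hx)

lemma lem_integrable (k : ℕ) : IntegrableOn (fun x : ℝ => (x^k - 1)/Real.log x) (Set.Ioo (0:ℝ) 1) := by
  refine ⟨(lem_meas k).aestronglyMeasurable, ?_⟩
  rw [hasFiniteIntegral_iff_ofReal (lem_nonneg_ae k), lem_L1 k]
  exact ENNReal.ofReal_lt_top

lemma lem_I (k : ℕ) : ∫ x in Set.Ioo (0:ℝ) 1, (x^k - 1)/Real.log x = Real.log (k+1) := by
  rw [integral_eq_lintegral_of_nonneg_ae (lem_nonneg_ae k) (lem_meas k).aestronglyMeasurable,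
    lem_L1 k, ENNReal.toReal_ofReal]
  refine Real.log_nonneg (by simp [Nat.cast_nonneg])

lemma lem_rangeT (m : ℕ) (x : ℝ) :
    ∑ k ∈ Finset.range (m+1), (Nat.choose m k : ℝ) * (-1)^(k+1) * x^k = -(1-x)^m := by
  have h := add_pow (-x) (1:ℝ) m
  simp only [one_pow, mul_one] at h
  rw [show (1:ℝ) - x = -x + 1 by ring, h, ← Finset.sum_neg_distrib]
  refine Finset.sum_congr rfl fun k _ => ?_
  rw [neg_pow]
  ring

lemma lem_range_insert (m : ℕ) : Finset.range (m+1) = insert 0 (Finset.Icc 1 m) := by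
  ext a; simp [Nat.lt_succ_iff, Nat.one_le_iff_ne_zero]; omega

lemma lem_alg (m : ℕ) (hm : 1 ≤ m) (x : ℝ) :
    ∑ k ∈ Finset.Icc 1 m, (Nat.choose m k : ℝ) * (-1)^(k+1) * (x^k - 1) = -(1-x)^m := by
  have h0 : (0:ℕ) ∉ Finset.Icc 1 m := by simp
  have hx := lem_rangeT m x
  have h1 := lem_rangeT m 1
  rw [lem_range_insert, Finset.sum_insert h0] at hx h1
  norm_num at hx h1
  rw [zero_pow (by omega : m ≠ 0), neg_zero] at h1
  have expand : ∑ k ∈ Finset.Icc 1 m, (Nat.choose m k : ℝ) * (-1)^(k+1) * (x^k - 1)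
      = (∑ k ∈ Finset.Icc 1 m, (Nat.choose m k : ℝ) * (-1)^(k+1) * x^k)
        - ∑ k ∈ Finset.Icc 1 m, (Nat.choose m k : ℝ) * (-1)^(k+1) := by
    rw [← Finset.sum_sub_distrib]
    exact Finset.sum_congr rfl fun k _ => by ring
  rw [expand]
  linarith [hx, h1]

noncomputable def F (n : ℕ) (x : ℝ) : ℝ := (1/((n:ℝ)+1)) * ((1-x)^(n+1) / (-Real.log x))

lemma lem_a (n : ℕ) :
    (1 / ((n : ℝ) + 1)) * ∑ k ∈ Finset.Icc 1 (n + 1),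
      (Nat.choose (n + 1) k : ℝ) * (-1) ^ (k + 1) * Real.log ((k : ℝ) + 1)
    = ∫ x in Set.Ioo (0:ℝ) 1, F n x := by
  have hsum : ∑ k ∈ Finset.Icc 1 (n + 1),
      (Nat.choose (n + 1) k : ℝ) * (-1) ^ (k + 1) * Real.log ((k : ℝ) + 1)
      = ∫ x in Set.Ioo (0:ℝ) 1, (1-x)^(n+1) / (-Real.log x) := by
    have step : ∀ k ∈ Finset.Icc 1 (n+1),
        (Nat.choose (n + 1) k : ℝ) * (-1) ^ (k + 1) * Real.log ((k : ℝ) + 1)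
        = ∫ x in Set.Ioo (0:ℝ) 1, (Nat.choose (n + 1) k : ℝ) * (-1) ^ (k + 1) * ((x^k - 1)/Real.log x) := by
      intro k _
      rw [MeasureTheory.integral_const_mul, lem_I k]
    rw [Finset.sum_congr rfl step, ← MeasureTheory.integral_finset_sum]
    · refine setIntegral_congr_fun measurableSet_Ioo fun x hx => ?_
      have hlog : Real.log x ≠ 0 := (Real.log_neg hx.1 hx.2).ne
      have : ∑ k ∈ Finset.Icc 1 (n+1), (Nat.choose (n + 1) k : ℝ) * (-1) ^ (k + 1) * ((x^k - 1)/Real.log x)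
          = (∑ k ∈ Finset.Icc 1 (n+1), (Nat.choose (n + 1) k : ℝ) * (-1) ^ (k + 1) * (x^k - 1))/Real.log x := by
        rw [Finset.sum_div]
        exact Finset.sum_congr rfl fun k _ => by ring
      rw [this, lem_alg (n+1) (by omega) x, div_neg, neg_div]
    · intro k _
      exact (lem_integrable k).const_mul _
  rw [hsum, ← MeasureTheory.integral_const_mul]
  rfl

lemma F_nonneg {n : ℕ} {x : ℝ} (hx : x ∈ Set.Ioo (0:ℝ) 1) : 0 ≤ F n x := by
  obtain ⟨h0, h1⟩ := hx
  have hlog : Real.log x < 0 := Real.log_neg h0 h1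
  have : (0:ℝ) < -Real.log x := by linarith
  have h1x : (0:ℝ) ≤ 1 - x := by linarith
  unfold F
  positivity

lemma F_hasSum {x : ℝ} (hx : x ∈ Set.Ioo (0:ℝ) 1) : HasSum (fun n => F n x) 1 := by
  obtain ⟨h0, h1⟩ := hx
  have hlog : Real.log x < 0 := Real.log_neg h0 h1
  have habs : |1 - x| < 1 := by rw [abs_of_pos (by linarith)]; linarith
  have h := (Real.hasSum_pow_div_log_of_abs_lt_one habs).mul_right ((-Real.log x)⁻¹)
  have hx' : (1:ℝ) - (1 - x) = x := by ring
  rw [hx'] at h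
  have : -Real.log x * (-Real.log x)⁻¹ = 1 := mul_inv_cancel₀ (by linarith)
  rw [this] at h
  refine h.congr_fun fun n => ?_
  unfold F
  field_simp

lemma F_meas (n : ℕ) : Measurable (F n) := by
  unfold F
  exact measurable_const.mul (((measurable_const.sub measurable_id).pow_const _).div Real.measurable_log.neg)

lemma main_hasSum : HasSum (fun n : ℕ => (1 / ((n : ℝ) + 1)) * ∑ k ∈ Finset.Icc 1 (n + 1),
    (Nat.choose (n + 1) k : ℝ) * (-1) ^ (k + 1) * Real.log ((k : ℝ) + 1)) 1 := by
  set A : ℕ → ENNReal := fun n => ∫⁻ x in Set.Ioo (0:ℝ) 1, ENNReal.ofReal (F n x) with hA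
  have htsum : ∑' n, A n = 1 := by
    rw [← MeasureTheory.lintegral_tsum (fun n => ((F_meas n).ennreal_ofReal).aemeasurable)]
    have : ∫⁻ x in Set.Ioo (0:ℝ) 1, ∑' n, ENNReal.ofReal (F n x)
        = ∫⁻ x in Set.Ioo (0:ℝ) 1, 1 := by
      refine setLIntegral_congr_fun measurableSet_Ioo (fun x hx => ?_)
      rw [← ENNReal.ofReal_tsum_of_nonneg (fun n => F_nonneg hx) (F_hasSum hx).summable,
        (F_hasSum hx).tsum_eq, ENNReal.ofReal_one]
    rw [this, MeasureTheory.setLIntegral_one, Real.volume_Ioo]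
    norm_num
  have hFnn : ∀ n, 0 ≤ᵐ[volume.restrict (Set.Ioo (0:ℝ) 1)] F n := fun n =>
    (ae_restrict_iff' measurableSet_Ioo).2 (ae_of_all _ fun x hx => F_nonneg hx)
  have hvals : ∀ n : ℕ, (1 / ((n : ℝ) + 1)) * ∑ k ∈ Finset.Icc 1 (n + 1),
      (Nat.choose (n + 1) k : ℝ) * (-1) ^ (k + 1) * Real.log ((k : ℝ) + 1) = (A n).toReal := by
    intro n
    rw [lem_a n, integral_eq_lintegral_of_nonneg_ae (hFnn n) (F_meas n).aestronglyMeasurable]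
  have hsummable : Summable (fun n => (A n).toReal) :=
    ENNReal.summable_toReal (by rw [htsum]; exact ENNReal.one_ne_top)
  have htsumval : ∑' n, (A n).toReal = 1 := by
    rw [← ENNReal.tsum_toReal_eq (fun n => ne_top_of_le_ne_top ENNReal.one_ne_top
      (htsum ▸ ENNReal.le_tsum n)), htsum, ENNReal.toReal_one]
  have := hsummable.hasSum
  rw [htsumval] at this
  exact this.congr_fun fun n => hvals n

/-- Guillera–Sondow: `Σ_{m=2}^∞ (1/(m-1)) Σ_{k=1}^{m-1} C(m-1,k)(-1)^{k+1} log(k+1) = 1`,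
equivalently `e = ∏_{n=1}^∞ (∏_{k=1}^n (k+1)^{C(n,k)(-1)^{k+1}})^{1/n}` (indexing `n = m - 1`). -/
theorem stmt_9 :
    (∑' n : ℕ, (1 / ((n : ℝ) + 1)) * ∑ k ∈ Finset.Icc 1 (n + 1),
        (Nat.choose (n + 1) k : ℝ) * (-1) ^ (k + 1) * Real.log ((k : ℝ) + 1)) = 1 ∧
    (∏' n : ℕ, (∏ k ∈ Finset.Icc 1 (n + 1),
        ((k : ℝ) + 1) ^ ((Nat.choose (n + 1) k : ℝ) * (-1) ^ (k + 1))) ^ (1 / ((n : ℝ) + 1)))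
      = Real.exp 1 := by
  constructor
  · exact main_hasSum.tsum_eq
  · have hterm : ∀ n : ℕ, (∏ k ∈ Finset.Icc 1 (n + 1),
        ((k : ℝ) + 1) ^ ((Nat.choose (n + 1) k : ℝ) * (-1) ^ (k + 1))) ^ (1 / ((n : ℝ) + 1))
        = Real.exp ((1 / ((n : ℝ) + 1)) * ∑ k ∈ Finset.Icc 1 (n + 1),
          (Nat.choose (n + 1) k : ℝ) * (-1) ^ (k + 1) * Real.log ((k : ℝ) + 1)) := by
      intro n
      have hprod : ∏ k ∈ Finset.Icc 1 (n + 1),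
          ((k : ℝ) + 1) ^ ((Nat.choose (n + 1) k : ℝ) * (-1) ^ (k + 1))
          = Real.exp (∑ k ∈ Finset.Icc 1 (n + 1),
            (Nat.choose (n + 1) k : ℝ) * (-1) ^ (k + 1) * Real.log ((k : ℝ) + 1)) := by
        rw [Real.exp_sum]
        refine Finset.prod_congr rfl fun k _ => ?_
        rw [Real.rpow_def_of_pos (by positivity : (0:ℝ) < (k:ℝ) + 1)]
        ring_nf
      rw [hprod, Real.rpow_def_of_pos (Real.exp_pos _), Real.log_exp, mul_comm]
    have hp := main_hasSum.rexp
    rw [← hp.tprod_eq]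
    exact tprod_congr fun n => (hterm n)
end

section
/- For every integer r ≥ 1, e^{1/r} = ∏_{n=r}^{∞} ( ∏_{k=1}^{n} (k+1)^{C(n,k)·(-1)^{k+1}} )^{1/(n-r+1)}, equivalently 1/r = Σ_{n=r}^{∞} (1/(n-r+1))·Σ_{k=1}^{n} C(n,k)·(-1)^{k+1}·log(k+1). -/
open MeasureTheory Real Set

lemma lint_t {u : ℝ} (hu : u ∈ Ioo (0:ℝ) 1) (k : ℕ) :
    ∫⁻ t in Ioo (0:ℝ) (k:ℝ), ENNReal.ofReal (u ^ t) =
      ENNReal.ofReal ((u ^ (k:ℝ) - 1) / Real.log u) := by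
  obtain ⟨hu0, hu1⟩ := hu
  have hlog : Real.log u < 0 := Real.log_neg hu0 hu1
  have hcont : Continuous fun t : ℝ => u ^ t := by
    simp only [Real.rpow_def_of_pos hu0]
    exact Real.continuous_exp.comp (continuous_const.mul continuous_id)
  have hint : IntegrableOn (fun t : ℝ => u ^ t) (Ioo (0:ℝ) (k:ℝ)) := by
    exact (hcont.integrableOn_Icc).mono_set Ioo_subset_Icc_self
  rw [← ofReal_integral_eq_lintegral_ofReal hint]
  · congr 1
    rw [← integral_Ioc_eq_integral_Ioo, ← intervalIntegral.integral_of_le (by positivity)]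
    have : ∀ t : ℝ, u ^ t = Real.exp (t * Real.log u) := fun t => by
      rw [Real.rpow_def_of_pos hu0, mul_comm]
    simp_rw [this]
    rw [intervalIntegral.integral_comp_mul_right (fun x => Real.exp x) hlog.ne]
    rw [integral_exp]
    rw [smul_eq_mul, zero_mul, Real.exp_zero]
    ring
  · filter_upwards with t
    positivity

lemma lint_u {t : ℝ} (ht : 0 < t) :
    ∫⁻ u in Ioo (0:ℝ) 1, ENNReal.ofReal (u ^ t) = ENNReal.ofReal (1 / (t + 1)) := by
  have hint : IntegrableOn (fun u : ℝ => u ^ t) (Ioo (0:ℝ) 1) := by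
    rw [intervalIntegral.integrableOn_Ioo_rpow_iff one_pos]; linarith
  rw [← ofReal_integral_eq_lintegral_ofReal hint]
  · congr 1
    rw [← integral_Ioc_eq_integral_Ioo, ← intervalIntegral.integral_of_le zero_le_one]
    rw [integral_rpow (Or.inl (by linarith))]
    rw [Real.one_rpow, Real.zero_rpow (by linarith)]
    ring
  · filter_upwards [ae_restrict_mem measurableSet_Ioo] with u hu
    exact Real.rpow_nonneg hu.1.le t

lemma lint_inv (k : ℕ) :
    ∫⁻ x in Ioo (0:ℝ) (k:ℝ), ENNReal.ofReal (1 / (x + 1)) =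
      ENNReal.ofReal (Real.log ((k:ℝ) + 1)) := by
  have hcont : ContinuousOn (fun x : ℝ => 1 / (x + 1)) (Icc (0:ℝ) (k:ℝ)) := by
    apply ContinuousOn.div continuousOn_const (by fun_prop)
    intro x hx; have := hx.1; positivity
  have hint : IntegrableOn (fun x : ℝ => 1 / (x + 1)) (Ioo (0:ℝ) (k:ℝ)) :=
    (hcont.integrableOn_Icc).mono_set Ioo_subset_Icc_self
  rw [← ofReal_integral_eq_lintegral_ofReal hint]
  · congr 1
    rw [← integral_Ioc_eq_integral_Ioo, ← intervalIntegral.integral_of_le (by positivity)]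
    rw [intervalIntegral.integral_comp_add_right (fun x => 1 / x) 1]
    rw [integral_one_div (by
      intro h
      rw [Set.uIcc_of_le (by have : (0:ℝ) ≤ k := Nat.cast_nonneg k; linarith : (0:ℝ)+1 ≤ (k:ℝ)+1)] at h
      exact absurd h.1 (by norm_num)), zero_add, div_one]
  · filter_upwards [ae_restrict_mem measurableSet_Ioo] with x hx
    have := hx.1; positivity

lemma frullani_lint (k : ℕ) :
    ∫⁻ u in Ioo (0:ℝ) 1, ENNReal.ofReal ((u ^ (k:ℝ) - 1) / Real.log u) =
      ENNReal.ofReal (Real.log ((k:ℝ) + 1)) := by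
  have h1 : ∫⁻ u in Ioo (0:ℝ) 1, ENNReal.ofReal ((u ^ (k:ℝ) - 1) / Real.log u) =
      ∫⁻ u in Ioo (0:ℝ) 1, ∫⁻ t in Ioo (0:ℝ) (k:ℝ), ENNReal.ofReal (u ^ t) := by
    refine setLIntegral_congr_fun measurableSet_Ioo ?_
    intro u hu
    exact (lint_t hu k).symm
  have hmeas : AEMeasurable (Function.uncurry fun (u t : ℝ) => ENNReal.ofReal (u ^ t))
      ((volume.restrict (Ioo (0:ℝ) 1)).prod (volume.restrict (Ioo (0:ℝ) (k:ℝ)))) := by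
    rw [Measure.prod_restrict]
    have hg : Measurable fun p : ℝ × ℝ => ENNReal.ofReal (Real.exp (Real.log p.1 * p.2)) :=
      ENNReal.measurable_ofReal.comp (Real.measurable_exp.comp
        ((Real.measurable_log.comp measurable_fst).mul measurable_snd))
    refine hg.aemeasurable.congr ?_
    filter_upwards [ae_restrict_mem (measurableSet_Ioo.prod measurableSet_Ioo)] with p hp
    simp only [Function.uncurry]
    rw [Real.rpow_def_of_pos hp.1.1]
  rw [h1, lintegral_lintegral_swap hmeas]
  rw [← lint_inv k]
  refine setLIntegral_congr_fun measurableSet_Ioo ?_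
  intro t ht
  exact lint_u ht.1

lemma g_meas (k : ℕ) : Measurable (fun u : ℝ => (u ^ k - 1) / Real.log u) :=
  ((measurable_id.pow_const k).sub measurable_const).div Real.measurable_log

lemma g_nonneg {u : ℝ} (hu : u ∈ Ioo (0:ℝ) 1) (k : ℕ) : 0 ≤ (u ^ k - 1) / Real.log u := by
  have h1 : u ^ k ≤ 1 := pow_le_one₀ hu.1.le hu.2.le
  have h2 : Real.log u < 0 := Real.log_neg hu.1 hu.2
  have key : (u ^ k - 1) / Real.log u = (1 - u ^ k) / (-Real.log u) := by
    rw [div_neg, ← neg_div, neg_sub]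
  rw [key]
  exact div_nonneg (by linarith) (by linarith)

lemma frullani (k : ℕ) :
    IntegrableOn (fun u : ℝ => (u ^ k - 1) / Real.log u) (Ioo (0:ℝ) 1) ∧
    ∫ u in Ioo (0:ℝ) 1, (u ^ k - 1) / Real.log u = Real.log ((k:ℝ) + 1) := by
  have hnn : 0 ≤ᵐ[volume.restrict (Ioo (0:ℝ) 1)] fun u : ℝ => (u ^ k - 1) / Real.log u := by
    filter_upwards [ae_restrict_mem measurableSet_Ioo] with u hu
    exact g_nonneg hu k
  have hlint : ∫⁻ u in Ioo (0:ℝ) 1, ENNReal.ofReal ((u ^ k - 1) / Real.log u) =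
      ENNReal.ofReal (Real.log ((k:ℝ) + 1)) := by
    rw [← frullani_lint k]
    refine setLIntegral_congr_fun measurableSet_Ioo ?_
    intro u hu
    simp only [Real.rpow_natCast]
  have hintg : IntegrableOn (fun u : ℝ => (u ^ k - 1) / Real.log u) (Ioo (0:ℝ) 1) := by
    refine ⟨(g_meas k).aestronglyMeasurable, ?_⟩
    rw [hasFiniteIntegral_iff_ofReal hnn, hlint]
    exact ENNReal.ofReal_lt_top
  refine ⟨hintg, ?_⟩
  rw [integral_eq_lintegral_of_nonneg_ae hnn (g_meas k).aestronglyMeasurable, hlint,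
    ENNReal.toReal_ofReal (Real.log_nonneg (by linarith [Nat.cast_nonneg (α:=ℝ) k]))]

lemma binom_sum (n : ℕ) (u : ℝ) :
    ∑ k ∈ Finset.Icc 1 n, (Nat.choose n k : ℝ) * (-1) ^ (k + 1) * u ^ k
      = 1 - (1 - u) ^ n := by
  have hpow : (1 - u) ^ n = ∑ k ∈ Finset.range (n + 1), (-u) ^ k * (Nat.choose n k : ℝ) := by
    rw [show (1:ℝ) - u = -u + 1 by ring, add_pow]
    simp
  have hsplit : ∑ k ∈ Finset.range (n + 1), (-u) ^ k * (Nat.choose n k : ℝ) =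
      1 + ∑ k ∈ Finset.Icc 1 n, (-u) ^ k * (Nat.choose n k : ℝ) := by
    rw [Finset.range_eq_Ico, ← Finset.sum_Ico_consecutive _ (Nat.zero_le 1) (by omega),
      ← Finset.Ico_add_one_right_eq_Icc]
    simp
  rw [hpow, hsplit]
  have : ∀ k ∈ Finset.Icc 1 n, (Nat.choose n k : ℝ) * (-1) ^ (k + 1) * u ^ k
      = -((-u) ^ k * (Nat.choose n k : ℝ)) := by
    intro k _
    rw [neg_pow, pow_succ]
    ring
  rw [Finset.sum_congr rfl this, Finset.sum_neg_distrib]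
  ring

lemma S_int (n : ℕ) (hn : 1 ≤ n) :
    IntegrableOn (fun u : ℝ => (1 - u) ^ n / (-Real.log u)) (Ioo (0:ℝ) 1) ∧
    ∫ u in Ioo (0:ℝ) 1, (1 - u) ^ n / (-Real.log u)
      = ∑ k ∈ Finset.Icc 1 n, (Nat.choose n k : ℝ) * (-1) ^ (k + 1) * Real.log ((k:ℝ) + 1) := by
  set F := fun u : ℝ => ∑ k ∈ Finset.Icc 1 n,
    (Nat.choose n k : ℝ) * (-1) ^ (k + 1) * ((u ^ k - 1) / Real.log u) with hF
  have hsum1 : ∑ k ∈ Finset.Icc 1 n, (Nat.choose n k : ℝ) * (-1) ^ (k + 1) = 1 := by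
    have := binom_sum n 1
    simp only [one_pow, mul_one] at this
    rw [this, sub_self, zero_pow (by omega)]
    ring
  have hptwise : ∀ u ∈ Ioo (0:ℝ) 1, F u = (1 - u) ^ n / (-Real.log u) := by
    intro u hu
    have hlog : Real.log u ≠ 0 := (Real.log_neg hu.1 hu.2).ne
    have : F u = ((∑ k ∈ Finset.Icc 1 n, (Nat.choose n k : ℝ) * (-1) ^ (k + 1) * u ^ k)
        - ∑ k ∈ Finset.Icc 1 n, (Nat.choose n k : ℝ) * (-1) ^ (k + 1)) / Real.log u := by
      simp only [hF]
      rw [sub_div, Finset.sum_div, Finset.sum_div, ← Finset.sum_sub_distrib]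
      refine Finset.sum_congr rfl fun k _ => ?_
      field_simp
    rw [this, binom_sum n u, hsum1, div_neg, ← neg_div]
    congr 1
    ring
  have hFi : IntegrableOn F (Ioo (0:ℝ) 1) := by
    apply integrable_finset_sum
    intro k _
    exact ((frullani k).1).const_mul _
  constructor
  · exact hFi.congr_fun hptwise measurableSet_Ioo
  · rw [← setIntegral_congr_fun measurableSet_Ioo hptwise, hF]
    rw [integral_finset_sum _ (fun k _ => ((frullani k).1).const_mul _)]
    refine Finset.sum_congr rfl fun k _ => ?_
    rw [integral_const_mul, (frullani k).2]

lemma key (r : ℕ) (hr : 1 ≤ r) :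
    HasSum (fun j : ℕ => (1 / ((j : ℝ) + 1)) * ∑ k ∈ Finset.Icc 1 (j + r),
        (Nat.choose (j + r) k : ℝ) * (-1) ^ (k + 1) * Real.log ((k : ℝ) + 1)) (1 / (r : ℝ)) := by
  set term := fun j : ℕ => (1 / ((j : ℝ) + 1)) * ∑ k ∈ Finset.Icc 1 (j + r),
        (Nat.choose (j + r) k : ℝ) * (-1) ^ (k + 1) * Real.log ((k : ℝ) + 1) with hterm
  set h := fun (j : ℕ) (u : ℝ) => (1 / ((j : ℝ) + 1)) * ((1 - u) ^ (j + r) / (-Real.log u))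
    with hh
  have hhi : ∀ j : ℕ, IntegrableOn (h j) (Ioo (0:ℝ) 1) := fun j =>
    ((S_int (j + r) (by omega)).1).const_mul _
  have hhnn : ∀ j : ℕ, 0 ≤ᵐ[volume.restrict (Ioo (0:ℝ) 1)] h j := by
    intro j
    filter_upwards [ae_restrict_mem measurableSet_Ioo] with u hu
    have h1 : (0:ℝ) < 1 - u := by have := hu.2; linarith
    have h2 : (0:ℝ) < -Real.log u := by have := Real.log_neg hu.1 hu.2; linarith
    positivity
  have hterm_eq : ∀ j : ℕ, term j = ∫ u in Ioo (0:ℝ) 1, h j u := by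
    intro j
    rw [hterm, hh]
    simp only
    rw [integral_const_mul, (S_int (j + r) (by omega)).2]
  have ha : ∀ j : ℕ, ENNReal.ofReal (term j) = ∫⁻ u in Ioo (0:ℝ) 1, ENNReal.ofReal (h j u) := by
    intro j
    rw [hterm_eq j]
    exact ofReal_integral_eq_lintegral_ofReal (hhi j) (hhnn j)
  have hmeas : ∀ j : ℕ, Measurable fun u : ℝ => ENNReal.ofReal (h j u) := by
    intro j
    apply ENNReal.measurable_ofReal.comp
    exact (((measurable_const.sub measurable_id).pow_const _).div
      Real.measurable_log.neg).const_mul _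
  have hswap : ∑' j : ℕ, ENNReal.ofReal (term j) =
      ∫⁻ u in Ioo (0:ℝ) 1, ∑' j : ℕ, ENNReal.ofReal (h j u) := by
    simp_rw [ha]
    exact (lintegral_tsum fun j => (hmeas j).aemeasurable).symm
  have hptsum : ∀ u ∈ Ioo (0:ℝ) 1, HasSum (fun j => h j u) ((1 - u) ^ (r - 1)) := by
    intro u hu
    have h1 : |1 - u| < 1 := by rw [abs_lt]; constructor <;> [linarith [hu.2]; linarith [hu.1]]
    have h2 : Real.log u < 0 := Real.log_neg hu.1 hu.2
    have hs := (hasSum_pow_div_log_of_abs_lt_one h1).mul_left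
      ((1 - u) ^ (r - 1) / (-Real.log u))
    rw [show (1:ℝ) - (1 - u) = u by ring] at hs
    have hval : (1 - u) ^ (r - 1) / -Real.log u * -Real.log u = (1 - u) ^ (r - 1) :=
      div_mul_cancel₀ _ (by linarith)
    rw [hval] at hs
    convert hs using 1
    case e'_3 => rfl
    funext j
    rw [hh]
    simp only
    have hpow : (1 - u) ^ (r - 1) * (1 - u) ^ (j + 1) = (1 - u) ^ (j + r) := by
      rw [← pow_add]
      congr 1
      omega
    field_simp
    rw [← hpow]
  have hpt : ∀ u ∈ Ioo (0:ℝ) 1, (∑' j : ℕ, ENNReal.ofReal (h j u)) =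
      ENNReal.ofReal ((1 - u) ^ (r - 1)) := by
    intro u hu
    have hs := hptsum u hu
    have hnn : ∀ j : ℕ, 0 ≤ h j u := by
      intro j
      have h1 : (0:ℝ) < 1 - u := by have := hu.2; linarith
      have h2 : (0:ℝ) < -Real.log u := by have := Real.log_neg hu.1 hu.2; linarith
      rw [hh]; simp only
      positivity
    rw [← ENNReal.ofReal_tsum_of_nonneg hnn hs.summable, hs.tsum_eq]
  have hfinal : ∫⁻ u in Ioo (0:ℝ) 1, ENNReal.ofReal ((1 - u) ^ (r - 1)) =
      ENNReal.ofReal (1 / (r : ℝ)) := by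
    have hint : IntegrableOn (fun u : ℝ => (1 - u) ^ (r - 1)) (Ioo (0:ℝ) 1) := by
      apply Continuous.integrableOn_Icc (by fun_prop) |>.mono_set Ioo_subset_Icc_self
    rw [← ofReal_integral_eq_lintegral_ofReal hint]
    · congr 1
      rw [← integral_Ioc_eq_integral_Ioo, ← intervalIntegral.integral_of_le zero_le_one]
      rw [intervalIntegral.integral_comp_sub_left (fun x => x ^ (r - 1)) 1]
      norm_num
      rw [Nat.cast_sub hr]
      push_cast
      ring
    · filter_upwards [ae_restrict_mem measurableSet_Ioo] with u hu
      have : (0:ℝ) < 1 - u := by have := hu.2; linarith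
      positivity
  have hmain : ∑' j : ℕ, ENNReal.ofReal (term j) = ENNReal.ofReal (1 / (r : ℝ)) := by
    rw [hswap, ← hfinal]
    exact setLIntegral_congr_fun measurableSet_Ioo (by intro u hu; exact hpt u hu)
  have htermnn : ∀ j : ℕ, 0 ≤ term j := by
    intro j
    rw [hterm_eq j]
    exact setIntegral_nonneg measurableSet_Ioo (fun u hu => by
      have h1 : (0:ℝ) < 1 - u := by have := hu.2; linarith
      have h2 : (0:ℝ) < -Real.log u := by have := Real.log_neg hu.1 hu.2; linarith
      rw [hh]; simp only; positivity)
  have hsummable : Summable term := by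
    have hne : ∑' j : ℕ, ENNReal.ofReal (term j) ≠ ⊤ := by
      rw [hmain]; exact ENNReal.ofReal_ne_top
    have := ENNReal.summable_toReal hne
    refine this.congr fun j => ?_
    rw [ENNReal.toReal_ofReal (htermnn j)]
  have htsum : ∑' j, term j = 1 / (r : ℝ) := by
    have h1 : (∑' j : ℕ, ENNReal.ofReal (term j)).toReal = ∑' j, term j := by
      rw [ENNReal.tsum_toReal_eq (fun j => ENNReal.ofReal_ne_top)]
      exact tsum_congr fun j => ENNReal.toReal_ofReal (htermnn j)
    rw [← h1, hmain, ENNReal.toReal_ofReal (by positivity)]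
  exact htsum ▸ hsummable.hasSum

lemma hasProd_exp {f : ℕ → ℝ} {a : ℝ} (hf : HasSum f a) :
    HasProd (fun j => Real.exp (f j)) (Real.exp a) := by
  have h := (Real.continuous_exp.tendsto a).comp hf
  refine h.congr fun s => ?_
  exact Real.exp_sum s f

lemma factor_eq (r j : ℕ) :
    (∏ k ∈ Finset.Icc 1 (j + r),
        ((k : ℝ) + 1) ^ ((Nat.choose (j + r) k : ℝ) * (-1) ^ (k + 1))) ^ (1 / ((j : ℝ) + 1))
      = Real.exp ((1 / ((j : ℝ) + 1)) * ∑ k ∈ Finset.Icc 1 (j + r),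
        (Nat.choose (j + r) k : ℝ) * (-1) ^ (k + 1) * Real.log ((k : ℝ) + 1)) := by
  have hinner : ∏ k ∈ Finset.Icc 1 (j + r),
      ((k : ℝ) + 1) ^ ((Nat.choose (j + r) k : ℝ) * (-1) ^ (k + 1))
      = Real.exp (∑ k ∈ Finset.Icc 1 (j + r),
        Real.log ((k : ℝ) + 1) * ((Nat.choose (j + r) k : ℝ) * (-1) ^ (k + 1))) := by
    rw [Real.exp_sum]
    refine Finset.prod_congr rfl fun k _ => ?_
    rw [Real.rpow_def_of_pos (by positivity)]
  rw [hinner, Real.rpow_def_of_pos (Real.exp_pos _), Real.log_exp]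
  congr 1
  rw [Finset.mul_sum, Finset.sum_mul]
  exact Finset.sum_congr rfl fun k _ => by ring

/-- For `r ≥ 1`: `1/r = Σ_{n=r}^∞ (1/(n-r+1)) Σ_{k=1}^n C(n,k)(-1)^{k+1} log(k+1)`
(indexing `n = j + r`), equivalently `e^{1/r}` is the corresponding infinite product. -/
theorem stmt_10 (r : ℕ) (hr : 1 ≤ r) :
    (∑' j : ℕ, (1 / ((j : ℝ) + 1)) * ∑ k ∈ Finset.Icc 1 (j + r),
        (Nat.choose (j + r) k : ℝ) * (-1) ^ (k + 1) * Real.log ((k : ℝ) + 1)) = 1 / (r : ℝ) ∧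
    (∏' j : ℕ, (∏ k ∈ Finset.Icc 1 (j + r),
        ((k : ℝ) + 1) ^ ((Nat.choose (j + r) k : ℝ) * (-1) ^ (k + 1))) ^ (1 / ((j : ℝ) + 1)))
      = Real.exp (1 / (r : ℝ)) := by
  constructor
  · exact (key r hr).tsum_eq
  · rw [tprod_congr (fun j => factor_eq r j)]
    exact (hasProd_exp (key r hr)).tprod_eq
end

section
/- Fix m ≥ 2. Suppose nonnegative coefficients (a_{n,k})_{2≤k≤n} satisfy a_{n,k} = ((n−k+1)/(n+1))·a_{n+1,k} + ((k+1)/(n+1))·a_{n+1,k+1}, and b_n = Σ_{k=2}^{n} a_{n,k} > 0. Let x_m ∈ (0,1] and define x_n = Σ_{k=2}^{n−m+1} (a_{n,k}/b_n)·x_{n−k+1} for n ≥ m+1. Then |x_{n−1} − x_n| ≤ m/(n−1) for all n ≥ m+1. -/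
open Finset

theorem stmt_13 (m : ℕ) (hm : 2 ≤ m) (a : ℕ → ℕ → ℝ)
    (hnn : ∀ n k : ℕ, 2 ≤ k → k ≤ n → 0 ≤ a n k)
    (hcons : ∀ n k : ℕ, 2 ≤ k → k ≤ n →
      a n k = (((n : ℝ) - (k : ℝ) + 1) / ((n : ℝ) + 1)) * a (n + 1) k
            + (((k : ℝ) + 1) / ((n : ℝ) + 1)) * a (n + 1) (k + 1))
    (b : ℕ → ℝ) (hb : ∀ n : ℕ, 2 ≤ n → b n = ∑ k ∈ Finset.Icc 2 n, a n k)
    (hbpos : ∀ n : ℕ, 2 ≤ n → 0 < b n)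
    (x : ℕ → ℝ) (hxm : 0 < x m ∧ x m ≤ 1)
    (hrec : ∀ n : ℕ, m + 1 ≤ n →
      x n = ∑ k ∈ Finset.Icc 2 (n - m + 1), (a n k / b n) * x (n - k + 1)) :
    ∀ n : ℕ, m + 1 ≤ n → |x (n - 1) - x n| ≤ (m : ℝ) / ((n : ℝ) - 1) := by
  -- partial sums of a are at most b
  have hpart : ∀ n t : ℕ, 2 ≤ n → t ≤ n → ∑ k ∈ Icc 2 t, a n k ≤ b n := by
    intro n t hn ht
    rw [hb n hn]
    exact Finset.sum_le_sum_of_subset_of_nonneg (Icc_subset_Icc le_rfl ht)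
      (fun k hk _ => hnn n k (mem_Icc.mp hk).1 (mem_Icc.mp hk).2)
  -- x stays in [0,1]
  have hx01 : ∀ n : ℕ, m ≤ n → 0 ≤ x n ∧ x n ≤ 1 := by
    intro n
    induction n using Nat.strong_induction_on with
    | _ n ih =>
      intro hn
      rcases eq_or_lt_of_le hn with h | h
      · rw [← h]; exact ⟨hxm.1.le, hxm.2⟩
      · have hn' : m + 1 ≤ n := h
        have hb2 : 2 ≤ n := by omega
        have hbn := hbpos n hb2
        have hterm : ∀ k ∈ Icc 2 (n - m + 1), 0 ≤ a n k := fun k hk =>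
          hnn n k (mem_Icc.mp hk).1 (by have := (mem_Icc.mp hk).2; omega)
        have hxk : ∀ k ∈ Icc 2 (n - m + 1), 0 ≤ x (n - k + 1) ∧ x (n - k + 1) ≤ 1 := by
          intro k hk
          obtain ⟨hk2, hk'⟩ := mem_Icc.mp hk
          exact ih (n - k + 1) (by omega) (by omega)
        constructor
        · rw [hrec n hn']
          exact Finset.sum_nonneg fun k hk =>
            mul_nonneg (div_nonneg (hterm k hk) hbn.le) (hxk k hk).1
        · rw [hrec n hn']
          calc ∑ k ∈ Icc 2 (n - m + 1), (a n k / b n) * x (n - k + 1)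
              ≤ ∑ k ∈ Icc 2 (n - m + 1), (a n k / b n) := by
                refine Finset.sum_le_sum fun k hk => ?_
                have h0 : 0 ≤ a n k / b n := div_nonneg (hterm k hk) hbn.le
                exact mul_le_of_le_one_right h0 (hxk k hk).2
            _ = (∑ k ∈ Icc 2 (n - m + 1), a n k) / b n := by rw [Finset.sum_div]
            _ ≤ b n / b n := by
                gcongr
                exact hpart n (n - m + 1) hb2 (by omega)
            _ = 1 := div_self hbn.ne'
  -- recursion for b
  have hbrec : ∀ n : ℕ, 2 ≤ n → b n = b (n + 1) - (2 / ((n : ℝ) + 1)) * a (n + 1) 2 := by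
    intro n hn
    have hne : ((n : ℝ) + 1) ≠ 0 := by positivity
    have h1 : b n = ∑ k ∈ Icc 2 n,
        ((((n : ℝ) - k + 1) / ((n : ℝ) + 1)) * a (n + 1) k
          + (((k : ℝ) + 1) / ((n : ℝ) + 1)) * a (n + 1) (k + 1)) := by
      rw [hb n hn]
      exact Finset.sum_congr rfl fun k hk =>
        hcons n k (mem_Icc.mp hk).1 (mem_Icc.mp hk).2
    have hshift : ∑ k ∈ Icc 2 n, (((k : ℝ) + 1) / ((n : ℝ) + 1)) * a (n + 1) (k + 1)
        = ∑ k ∈ Icc 3 (n + 1), ((k : ℝ) / ((n : ℝ) + 1)) * a (n + 1) k := by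
      rw [show (3:ℕ) = 2 + 1 from rfl, ← Finset.map_add_right_Icc, Finset.sum_map]
      refine Finset.sum_congr rfl fun k hk => ?_
      simp only [addRightEmbedding_apply]
      push_cast
      ring
    have e1 : ∑ k ∈ Icc 2 (n + 1), (((n : ℝ) - k + 1) / ((n : ℝ) + 1)) * a (n + 1) k
        = ∑ k ∈ Icc 2 n, (((n : ℝ) - k + 1) / ((n : ℝ) + 1)) * a (n + 1) k := by
      rw [Finset.sum_Icc_succ_top (by omega)]
      have h0 : ((n : ℝ) - ((n + 1 : ℕ) : ℝ) + 1) / ((n : ℝ) + 1) * a (n + 1) (n + 1) = 0 := by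
        push_cast; ring
      rw [h0, add_zero]
    have h2mem : (2:ℕ) ∈ Icc 2 (n + 1) := mem_Icc.mpr ⟨le_rfl, by omega⟩
    have e2 : ∑ k ∈ Icc 2 (n + 1), ((k : ℝ) / ((n : ℝ) + 1)) * a (n + 1) k
        = ((2 : ℝ) / ((n : ℝ) + 1)) * a (n + 1) 2
          + ∑ k ∈ Icc 3 (n + 1), ((k : ℝ) / ((n : ℝ) + 1)) * a (n + 1) k := by
      rw [show Icc 3 (n+1) = (Icc 2 (n+1)).erase 2 by
            rw [Finset.Icc_erase_left]; exact (Finset.Icc_add_one_left_eq_Ioc 2 (n+1)).symm]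
      rw [← Finset.add_sum_erase _ (fun k : ℕ => ((k : ℝ) / ((n : ℝ) + 1)) * a (n + 1) k) h2mem]
      norm_num
    have e3 : ∑ k ∈ Icc 2 (n + 1), (((n : ℝ) - k + 1) / ((n : ℝ) + 1)) * a (n + 1) k
        + ∑ k ∈ Icc 2 (n + 1), ((k : ℝ) / ((n : ℝ) + 1)) * a (n + 1) k
        = b (n + 1) := by
      rw [← Finset.sum_add_distrib, hb (n+1) (by omega)]
      refine Finset.sum_congr rfl fun k hk => ?_
      field_simp
      ring
    rw [h1, Finset.sum_add_distrib, hshift, ← e1]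
    linarith [e3, e2]
  -- main induction
  intro n
  induction n using Nat.strong_induction_on with
  | _ n ih =>
    intro hn
    have hb2n : 2 ≤ n := by omega
    have hbn := hbpos n hb2n
    have hn0 : (0:ℝ) < (n:ℝ) := by positivity
    have hnR : (0:ℝ) < (n:ℝ) - 1 := by
      have : (2:ℝ) ≤ (n:ℝ) := by exact_mod_cast hb2n
      linarith
    have hm0 : (0:ℝ) ≤ (m:ℝ) := by positivity
    rcases eq_or_lt_of_le hn with hcase | hcase
    · -- base case n = m + 1
      subst hcase
      have hx := hrec (m+1) le_rfl
      rw [show m + 1 - m + 1 = 2 by omega, Finset.Icc_self, Finset.sum_singleton,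
        show m + 1 - 2 + 1 = m by omega] at hx
      have hbm := hbpos (m+1) (by omega)
      have ha2 : 0 ≤ a (m+1) 2 := hnn (m+1) 2 le_rfl (by omega)
      have hale : a (m+1) 2 ≤ b (m+1) := by
        rw [hb (m+1) (by omega)]
        exact Finset.single_le_sum
          (fun k hk => hnn (m+1) k (mem_Icc.mp hk).1 (mem_Icc.mp hk).2)
          (mem_Icc.mpr ⟨le_rfl, by omega⟩)
      have hc0 : 0 ≤ a (m+1) 2 / b (m+1) := div_nonneg ha2 hbm.le
      have hc1 : a (m+1) 2 / b (m+1) ≤ 1 := by rw [div_le_one hbm]; exact hale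
      rw [show m + 1 - 1 = m by omega, hx]
      have hR : (m:ℝ) / (((m+1:ℕ):ℝ) - 1) = 1 := by
        push_cast
        rw [add_sub_cancel_right]
        exact div_self (by positivity)
      rw [hR, abs_of_nonneg (by nlinarith [hxm.1, hxm.2])]
      nlinarith [hxm.1, hxm.2]
    · -- step case: n ≥ m + 2
      have hstep : m + 2 ≤ n := hcase
      have hbn1pos := hbpos (n-1) (by omega)
      have hcast1 : ((n - 1 : ℕ) : ℝ) = (n:ℝ) - 1 := by
        rw [Nat.cast_sub (by omega : 1 ≤ n)]; norm_num
      have key1 : b (n-1) * x (n-1) = ∑ k ∈ Icc 2 (n-m), a (n-1) k * x (n-k) := by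
        rw [hrec (n-1) (by omega), Finset.mul_sum,
            show n - 1 - m + 1 = n - m by omega]
        refine Finset.sum_congr rfl fun k hk => ?_
        obtain ⟨hk2, hkn⟩ := mem_Icc.mp hk
        rw [show n - 1 - k + 1 = n - k by omega]
        field_simp
      have key2 : b (n-1) * x (n-1)
          = (∑ k ∈ Icc 2 (n-m), (((n:ℝ) - k)/(n:ℝ)) * a n k * x (n-k))
          + (∑ k ∈ Icc 2 (n-m), (((k:ℝ) + 1)/(n:ℝ)) * a n (k+1) * x (n-k)) := by
        rw [key1, ← Finset.sum_add_distrib]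
        refine Finset.sum_congr rfl fun k hk => ?_
        obtain ⟨hk2, hkn⟩ := mem_Icc.mp hk
        have hc := hcons (n-1) k hk2 (by omega)
        rw [show n - 1 + 1 = n by omega, hcast1] at hc
        rw [hc]
        ring_nf
      have key3 : ∑ k ∈ Icc 2 (n-m), (((k:ℝ)+1)/(n:ℝ)) * a n (k+1) * x (n-k)
          = ∑ k ∈ Icc 3 (n-m+1), ((k:ℝ)/(n:ℝ)) * a n k * x (n-k+1) := by
        rw [show (3:ℕ) = 2+1 from rfl, show n - m + 1 = (n-m)+1 from rfl,
            ← Finset.map_add_right_Icc, Finset.sum_map]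
        refine Finset.sum_congr rfl fun k hk => ?_
        obtain ⟨hk2, hkn⟩ := mem_Icc.mp hk
        simp only [addRightEmbedding_apply]
        rw [show n - (k+1) + 1 = n - k by omega]
        push_cast
        ring
      have key4 : b n * x n = ∑ k ∈ Icc 2 (n-m+1), a n k * x (n-k+1) := by
        rw [hrec n (by omega), Finset.mul_sum]
        refine Finset.sum_congr rfl fun k hk => ?_
        field_simp
      have h2mem : (2:ℕ) ∈ Icc 2 (n-m+1) := mem_Icc.mpr ⟨le_rfl, by omega⟩
      have key5 : ∑ k ∈ Icc 2 (n-m+1), ((k:ℝ)/(n:ℝ)) * a n k * x (n-k+1)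
          = ((2:ℝ)/(n:ℝ)) * a n 2 * x (n-1)
            + ∑ k ∈ Icc 3 (n-m+1), ((k:ℝ)/(n:ℝ)) * a n k * x (n-k+1) := by
        rw [show Icc 3 (n-m+1) = (Icc 2 (n-m+1)).erase 2 by
              rw [Finset.Icc_erase_left]; exact (Finset.Icc_add_one_left_eq_Ioc 2 (n-m+1)).symm]
        rw [← Finset.add_sum_erase _ (fun k : ℕ => ((k:ℝ)/(n:ℝ)) * a n k * x (n-k+1)) h2mem]
        rw [show n - 2 + 1 = n - 1 by omega]
        norm_num
      have hbr : b n = b (n-1) + (2/(n:ℝ)) * a n 2 := by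
        have h := hbrec (n-1) (by omega)
        rw [show n - 1 + 1 = n by omega, hcast1,
          show (n:ℝ) - 1 + 1 = (n:ℝ) by ring] at h
        linarith
      have key6 : ∑ k ∈ Icc 2 (n-m+1), a n k * x (n-k+1)
            - ∑ k ∈ Icc 2 (n-m+1), ((k:ℝ)/(n:ℝ)) * a n k * x (n-k+1)
          = ∑ k ∈ Icc 2 (n-m+1), (((n:ℝ)-k)/(n:ℝ)) * a n k * x (n-k+1) := by
        rw [← Finset.sum_sub_distrib]
        refine Finset.sum_congr rfl fun k hk => ?_
        field_simp
      have key7 : ∑ k ∈ Icc 2 (n-m+1), (((n:ℝ)-k)/(n:ℝ)) * a n k * x (n-k+1)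
          = (∑ k ∈ Icc 2 (n-m), (((n:ℝ)-k)/(n:ℝ)) * a n k * x (n-k+1))
            + (((m:ℝ)-1)/(n:ℝ)) * a n (n-m+1) * x m := by
        rw [show n - m + 1 = (n - m) + 1 from rfl,
            Finset.sum_Icc_succ_top (by omega)]
        congr 1
        rw [show n - (n - m + 1) + 1 = m by omega]
        push_cast [Nat.cast_sub (show m ≤ n by omega)]
        ring_nf
      have hmain : b n * (x (n-1) - x n)
          = (∑ k ∈ Icc 2 (n-m), (((n:ℝ)-k)/(n:ℝ)) * a n k * (x (n-k) - x (n-k+1)))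
            - (((m:ℝ)-1)/(n:ℝ)) * a n (n-m+1) * x m := by
        have expand : b n * (x (n-1) - x n)
            = b (n-1) * x (n-1) + (2/(n:ℝ)) * a n 2 * x (n-1) - b n * x n := by
          rw [hbr]; ring
        rw [expand, key2, key3, key4]
        have final : ∑ k ∈ Icc 2 (n-m), (((n:ℝ)-k)/(n:ℝ)) * a n k * (x (n-k) - x (n-k+1))
            = (∑ k ∈ Icc 2 (n-m), (((n:ℝ)-k)/(n:ℝ)) * a n k * x (n-k))
              - ∑ k ∈ Icc 2 (n-m), (((n:ℝ)-k)/(n:ℝ)) * a n k * x (n-k+1) := by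
          rw [← Finset.sum_sub_distrib]
          exact Finset.sum_congr rfl fun k hk => by ring
        have comb : ((2:ℝ)/(n:ℝ)) * a n 2 * x (n-1)
            = ∑ k ∈ Icc 2 (n-m+1), ((k:ℝ)/(n:ℝ)) * a n k * x (n-k+1)
              - ∑ k ∈ Icc 3 (n-m+1), ((k:ℝ)/(n:ℝ)) * a n k * x (n-k+1) := by
          rw [key5]; ring
        rw [comb]
        linarith [key6, key7, final]
      -- now the bound
      have h1 : |∑ k ∈ Icc 2 (n-m), (((n:ℝ)-k)/(n:ℝ)) * a n k * (x (n-k) - x (n-k+1))|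
          ≤ ∑ k ∈ Icc 2 (n-m), ((m:ℝ)/(n:ℝ)) * a n k := by
        refine (Finset.abs_sum_le_sum_abs _ _).trans (Finset.sum_le_sum fun k hk => ?_)
        obtain ⟨hk2, hkn⟩ := mem_Icc.mp hk
        have hckpos : (0:ℝ) < (n:ℝ) - k := by
          have : (k:ℝ) < n := by exact_mod_cast (show k < n by omega)
          linarith
        have hak : 0 ≤ a n k := hnn n k hk2 (by omega)
        have hcnn : (0:ℝ) ≤ ((n:ℝ)-k)/(n:ℝ) * a n k :=
          mul_nonneg (div_nonneg hckpos.le hn0.le) hak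
        have hih := ih (n - k + 1) (by omega) (by omega)
        rw [show n - k + 1 - 1 = n - k by omega,
          show ((n - k + 1 : ℕ):ℝ) - 1 = (n:ℝ) - k by
            push_cast [Nat.cast_sub (show k ≤ n by omega)]; ring] at hih
        rw [abs_mul, abs_of_nonneg hcnn]
        calc ((n:ℝ)-k)/(n:ℝ) * a n k * |x (n-k) - x (n-k+1)|
            ≤ ((n:ℝ)-k)/(n:ℝ) * a n k * ((m:ℝ)/((n:ℝ)-k)) :=
              mul_le_mul_of_nonneg_left hih hcnn
          _ = ((m:ℝ)/(n:ℝ)) * a n k := by field_simp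
      have ha' : 0 ≤ a n (n-m+1) := hnn n (n-m+1) (by omega) (by omega)
      have hm1 : (0:ℝ) ≤ (m:ℝ) - 1 := by
        have : (2:ℝ) ≤ (m:ℝ) := by exact_mod_cast hm
        linarith
      have h2 : |(((m:ℝ)-1)/(n:ℝ)) * a n (n-m+1) * x m| ≤ ((m:ℝ)/(n:ℝ)) * a n (n-m+1) := by
        rw [abs_of_nonneg (mul_nonneg (mul_nonneg (div_nonneg hm1 hn0.le) ha') hxm.1.le)]
        calc ((m:ℝ)-1)/(n:ℝ) * a n (n-m+1) * x m
            ≤ ((m:ℝ)-1)/(n:ℝ) * a n (n-m+1) * 1 :=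
              mul_le_mul_of_nonneg_left hxm.2
                (mul_nonneg (div_nonneg hm1 hn0.le) ha')
          _ ≤ (m:ℝ)/(n:ℝ) * a n (n-m+1) := by
              rw [mul_one]
              gcongr
              linarith
      have habs : |b n * (x (n-1) - x n)| ≤ ((m:ℝ)/(n:ℝ)) * b n := by
        rw [hmain]
        calc |(∑ k ∈ Icc 2 (n-m), (((n:ℝ)-k)/(n:ℝ)) * a n k * (x (n-k) - x (n-k+1)))
              - (((m:ℝ)-1)/(n:ℝ)) * a n (n-m+1) * x m|
            ≤ |∑ k ∈ Icc 2 (n-m), (((n:ℝ)-k)/(n:ℝ)) * a n k * (x (n-k) - x (n-k+1))|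
              + |(((m:ℝ)-1)/(n:ℝ)) * a n (n-m+1) * x m| := abs_sub _ _
          _ ≤ (∑ k ∈ Icc 2 (n-m), ((m:ℝ)/(n:ℝ)) * a n k) + ((m:ℝ)/(n:ℝ)) * a n (n-m+1) :=
              add_le_add h1 h2
          _ = ((m:ℝ)/(n:ℝ)) * ∑ k ∈ Icc 2 (n-m+1), a n k := by
              rw [show n - m + 1 = (n - m) + 1 from rfl,
                Finset.sum_Icc_succ_top (by omega), mul_add, Finset.mul_sum]
          _ ≤ ((m:ℝ)/(n:ℝ)) * b n :=
              mul_le_mul_of_nonneg_left (hpart n (n-m+1) hb2n (by omega))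
                (by positivity)
      have hfin : |x (n-1) - x n| ≤ (m:ℝ)/(n:ℝ) := by
        rw [abs_mul, abs_of_pos hbn] at habs
        have h' : |x (n-1) - x n| * b n ≤ ((m:ℝ)/(n:ℝ)) * b n := by linarith
        exact le_of_mul_le_mul_right h' hbn
      calc |x (n-1) - x n| ≤ (m:ℝ)/(n:ℝ) := hfin
        _ ≤ (m:ℝ)/((n:ℝ)-1) :=
            div_le_div_of_nonneg_left hm0 hnR (by linarith)
end

section
/- Fix m ≥ 2 and let x_m^{(m)} = 1/(m−1)^2 and, for n ≥ m+1, x_n^{(m)} = (n/(n−1))·Σ_{k=2}^{n−m+1} x_{n−k+1}^{(m)}/(k(k−1)). Then lim_{n→∞} x_n^{(m)} = (1/(m−1))·Σ_{k=1}^{m−1} C(m−1,k)·(−1)^{k+1}·log(k+1). -/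
open Filter Finset MeasureTheory intervalIntegral

/-- Gregory-type coefficients: reciprocal power series of `-log(1-t)/t = ∑ t^k/(k+1)`. -/
noncomputable def bsC : ℕ → ℝ
  | 0 => 1
  | (n+1) => -∑ k ∈ (Finset.range (n+1)).attach,
      bsC k / ((n + 2 - (k : ℕ) : ℕ) : ℝ)
  decreasing_by exact k.2 |> Finset.mem_range.mp

lemma bsC_zero : bsC 0 = 1 := by rw [bsC]

lemma bsC_succ (n : ℕ) : bsC (n+1) = -∑ k ∈ Finset.range (n+1),
    bsC k / ((n + 2 - k : ℕ) : ℝ) := by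
  rw [bsC]
  rw [← Finset.sum_attach (Finset.range (n+1)) (fun k => bsC k / ((n + 2 - k : ℕ) : ℝ))]

/-- The defining convolution identity: for `N ≥ 1`, `∑_{k=0}^{N} C_k / (N+1-k) = 0`. -/
lemma bsC_conv (n : ℕ) : ∑ k ∈ Finset.range (n+2), bsC k / ((n + 2 - k : ℕ) : ℝ) = 0 := by
  rw [Finset.sum_range_succ]
  have h1 : ((n + 2 - (n+1) : ℕ) : ℝ) = 1 := by
    norm_num
  rw [h1, bsC_succ]
  ring

lemma bsC_one : bsC 1 = -(1/2) := by
  rw [bsC_succ]; simp [bsC_zero]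

lemma bsC_nonpos : ∀ n : ℕ, bsC (n+1) ≤ 0 := by
  intro n
  induction n using Nat.strong_induction_on with
  | _ n IH =>
    match n with
    | 0 => rw [bsC_one]; norm_num
    | (n+1) =>
      -- bsC (n+2) ≤ 0
      have hsucc : bsC (n+2) = -(∑ i ∈ Finset.range (n+1),
          bsC (i+1) / ((n:ℝ) + 2 - i) + 1/((n:ℝ)+3)) := by
        rw [bsC_succ, Finset.sum_range_succ']
        congr 1
        congr 1
        · apply Finset.sum_congr rfl
          intro i hi
          have hi' : i ≤ n := Nat.lt_succ_iff.mp (Finset.mem_range.mp hi)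
          congr 1
          have : (n + 1 + 2 - (i+1) : ℕ) = n + 2 - i := by omega
          rw [this]
          have : (n + 2 - i : ℕ) = n + 2 - i := rfl
          push_cast [Nat.cast_sub (by omega : i ≤ n + 2)]
          ring
        · rw [bsC_zero]
          have : ((n + 1 + 2 - 0 : ℕ) : ℝ) = (n:ℝ) + 3 := by push_cast; ring
          rw [this]
      have hconv : ∑ i ∈ Finset.range (n+1), bsC (i+1) / ((n:ℝ) + 1 - i)
          = -(1/((n:ℝ)+2)) := by
        have h0 := bsC_conv n
        rw [Finset.sum_range_succ'] at h0
        have h1 : ∑ i ∈ Finset.range (n+1), bsC (i+1) / ((n + 2 - (i+1) : ℕ) : ℝ)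
            = ∑ i ∈ Finset.range (n+1), bsC (i+1) / ((n:ℝ) + 1 - i) := by
          apply Finset.sum_congr rfl
          intro i hi
          have hi' : i ≤ n := Nat.lt_succ_iff.mp (Finset.mem_range.mp hi)
          congr 1
          have : (n + 2 - (i+1) : ℕ) = n + 1 - i := by omega
          rw [this]
          push_cast [Nat.cast_sub (by omega : i ≤ n + 1)]
          ring
        rw [h1, bsC_zero] at h0
        have h2 : ((n + 2 - 0 : ℕ) : ℝ) = (n:ℝ) + 2 := by push_cast; ring
        rw [h2] at h0
        have : (1:ℝ)/((n:ℝ)+2) = 1/((n:ℝ)+2) := rfl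
        field_simp at h0 ⊢
        linarith
      rw [hsucc]
      have key : ∑ i ∈ Finset.range (n+1), (-(bsC (i+1))) / ((n:ℝ) + 2 - i)
          ≤ (((n:ℝ)+2)/((n:ℝ)+3)) *
            ∑ i ∈ Finset.range (n+1), (-(bsC (i+1))) / ((n:ℝ) + 1 - i) := by
        rw [Finset.mul_sum]
        apply Finset.sum_le_sum
        intro i hi
        have hi' : i ≤ n := Nat.lt_succ_iff.mp (Finset.mem_range.mp hi)
        have hci : 0 ≤ -(bsC (i+1)) := by
          have := IH i (by omega)
          linarith
        have hd1 : (0:ℝ) < (n:ℝ) + 2 - i := by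
          have : (i:ℝ) ≤ n := by exact_mod_cast hi'
          linarith
        have hd2 : (0:ℝ) < (n:ℝ) + 1 - i := by
          have : (i:ℝ) ≤ n := by exact_mod_cast hi'
          linarith
        have hd3 : (0:ℝ) < (n:ℝ) + 3 := by positivity
        have hfrac : 1/((n:ℝ)+2-i) ≤ ((n:ℝ)+2)/(((n:ℝ)+3)*((n:ℝ)+1-i)) := by
          rw [div_le_div_iff₀ hd1 (by positivity)]
          have : (0:ℝ) ≤ (i:ℝ) := by positivity
          nlinarith
        calc (-(bsC (i+1)))/((n:ℝ)+2-i) = (-(bsC (i+1))) * (1/((n:ℝ)+2-i)) := by ring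
          _ ≤ (-(bsC (i+1))) * (((n:ℝ)+2)/(((n:ℝ)+3)*((n:ℝ)+1-i))) :=
              mul_le_mul_of_nonneg_left hfrac hci
          _ = ((n:ℝ)+2)/((n:ℝ)+3) * ((-(bsC (i+1)))/((n:ℝ)+1-i)) := by
              field_simp
      have hs : ∑ i ∈ Finset.range (n+1), (-(bsC (i+1))) / ((n:ℝ) + 2 - i)
          = -∑ i ∈ Finset.range (n+1), bsC (i+1) / ((n:ℝ) + 2 - i) := by
        rw [← Finset.sum_neg_distrib]
        apply Finset.sum_congr rfl; intros; ring
      have hs2 : ∑ i ∈ Finset.range (n+1), (-(bsC (i+1))) / ((n:ℝ) + 1 - i)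
          = -∑ i ∈ Finset.range (n+1), bsC (i+1) / ((n:ℝ) + 1 - i) := by
        rw [← Finset.sum_neg_distrib]
        apply Finset.sum_congr rfl; intros; ring
      rw [hs, hs2, hconv] at key
      have hn3 : (0:ℝ) < (n:ℝ) + 3 := by positivity
      have hn2 : (0:ℝ) < (n:ℝ) + 2 := by positivity
      have : (((n:ℝ)+2)/((n:ℝ)+3)) * (-(-(1/((n:ℝ)+2)))) = 1/((n:ℝ)+3) := by
        field_simp
      rw [this] at key
      linarith

lemma bsC_shift_conv (n : ℕ) :
    ∑ i ∈ Finset.range (n+1), (-(bsC (i+1))) / ((n:ℝ) + 1 - i) = 1/((n:ℝ)+2) := by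
  have h0 := bsC_conv n
  rw [Finset.sum_range_succ'] at h0
  have h1 : ∑ i ∈ Finset.range (n+1), bsC (i+1) / ((n + 2 - (i+1) : ℕ) : ℝ)
      = ∑ i ∈ Finset.range (n+1), bsC (i+1) / ((n:ℝ) + 1 - i) := by
    apply Finset.sum_congr rfl
    intro i hi
    have hi' : i ≤ n := Nat.lt_succ_iff.mp (Finset.mem_range.mp hi)
    congr 1
    have : (n + 2 - (i+1) : ℕ) = n + 1 - i := by omega
    rw [this]
    push_cast [Nat.cast_sub (by omega : i ≤ n + 1)]
    ring
  rw [h1, bsC_zero] at h0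
  have h2 : ((n + 2 - 0 : ℕ) : ℝ) = (n:ℝ) + 2 := by push_cast; ring
  rw [h2] at h0
  have : ∑ i ∈ Finset.range (n+1), (-(bsC (i+1))) / ((n:ℝ) + 1 - i)
      = -∑ i ∈ Finset.range (n+1), bsC (i+1) / ((n:ℝ) + 1 - i) := by
    rw [← Finset.sum_neg_distrib]
    exact Finset.sum_congr rfl (fun _ _ => by ring)
  rw [this]
  linarith

lemma bsC_sum_range_le (N : ℕ) : ∑ i ∈ Finset.range N, (-(bsC (i+1))) ≤ 1 := by
  match N with
  | 0 => simp
  | (n+1) =>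
    have h := bsC_shift_conv n
    have hn2 : (0:ℝ) < (n:ℝ) + 2 := by positivity
    have key : ∑ i ∈ Finset.range (n+1), (-(bsC (i+1))) * (1/((n:ℝ)+2))
        ≤ 1/((n:ℝ)+2) := by
      rw [← h]
      apply Finset.sum_le_sum
      intro i hi
      have hi' : i ≤ n := Nat.lt_succ_iff.mp (Finset.mem_range.mp hi)
      have hci : 0 ≤ -(bsC (i+1)) := by linarith [bsC_nonpos i]
      have hd : (0:ℝ) < (n:ℝ) + 1 - i := by
        have : (i:ℝ) ≤ n := by exact_mod_cast hi'
        linarith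
      rw [h, mul_one_div, div_le_div_iff₀ (by positivity) hd]
      have : (i:ℝ) ≤ n := by exact_mod_cast hi'
      nlinarith
    calc ∑ i ∈ Finset.range (n+1), (-(bsC (i+1)))
        = (∑ i ∈ Finset.range (n+1), (-(bsC (i+1))) * (1/((n:ℝ)+2))) * ((n:ℝ)+2) := by
          rw [Finset.sum_mul]
          apply Finset.sum_congr rfl
          intros
          field_simp
      _ ≤ (1/((n:ℝ)+2)) * ((n:ℝ)+2) := by
          apply mul_le_mul_of_nonneg_right key (le_of_lt hn2)
      _ = 1 := by field_simp

lemma bsC_neg_summable : Summable (fun i => -(bsC (i+1))) :=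
  summable_of_sum_range_le (fun i => by linarith [bsC_nonpos i]) bsC_sum_range_le

lemma bsC_abs_le_one (i : ℕ) : |bsC i| ≤ 1 := by
  match i with
  | 0 => rw [bsC_zero]; norm_num
  | (n+1) =>
    have h1 : -(bsC (n+1)) ≤ 1 := by
      have := bsC_sum_range_le (n+1)
      have hs : ∑ i ∈ Finset.range (n+1), (-(bsC (i+1))) ≥ -(bsC (n+1)) := by
        rw [show (n+1) = n + 1 from rfl]
        have := Finset.single_le_sum (f := fun i => -(bsC (i+1)))
          (fun i _ => by simpa using neg_nonneg.mpr (bsC_nonpos i)) (Finset.self_mem_range_succ n)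
        simpa using this
      linarith
    have h2 := bsC_nonpos n
    rw [abs_le]; constructor <;> linarith

lemma bsC_mul_summable {w : ℕ → ℝ} (hw : ∀ i, |w i| ≤ 1) :
    Summable (fun i => bsC (i+1) * w i) := by
  apply Summable.of_norm
  apply Summable.of_nonneg_of_le (fun i => norm_nonneg _)
    (fun i => ?_) bsC_neg_summable
  show ‖bsC (i+1) * w i‖ ≤ -(bsC (i+1))
  rw [Real.norm_eq_abs, abs_mul]
  have h1 : |bsC (i+1)| = -(bsC (i+1)) := abs_of_nonpos (bsC_nonpos i)
  calc |bsC (i+1)| * |w i| ≤ |bsC (i+1)| * 1 :=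
        mul_le_mul_of_nonneg_left (hw i) (abs_nonneg _)
    _ = -(bsC (i+1)) := by rw [h1]; ring

lemma bsC_pow_summable_norm {t : ℝ} (ht : 0 ≤ t) (ht1 : t < 1) :
    Summable (fun i => ‖bsC i * t^i‖) := by
  apply Summable.of_nonneg_of_le (fun i => norm_nonneg _) (fun i => ?_)
    (summable_geometric_of_lt_one ht ht1)
  rw [Real.norm_eq_abs, abs_mul]
  calc |bsC i| * |t^i| ≤ 1 * |t^i| :=
        mul_le_mul_of_nonneg_right (bsC_abs_le_one i) (abs_nonneg _)
    _ = t^i := by rw [one_mul, abs_of_nonneg (pow_nonneg ht i)]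

lemma logser_summable_norm {t : ℝ} (ht : 0 ≤ t) (ht1 : t < 1) :
    Summable (fun j : ℕ => ‖t^j / ((j:ℝ)+1)‖) := by
  apply Summable.of_nonneg_of_le (fun i => norm_nonneg _) (fun j => ?_)
    (summable_geometric_of_lt_one ht ht1)
  rw [Real.norm_eq_abs, abs_div, abs_of_nonneg (pow_nonneg ht j),
    abs_of_nonneg (by positivity : (0:ℝ) ≤ (j:ℝ)+1)]
  rw [div_le_iff₀ (by positivity)]
  nlinarith [pow_nonneg ht j, (Nat.cast_nonneg j : (0:ℝ) ≤ j)]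

lemma logser_tsum {t : ℝ} (ht : 0 < t) (ht1 : t < 1) :
    ∑' j : ℕ, t^j / ((j:ℝ)+1) = (-Real.log (1-t)) / t := by
  have hB := Real.hasSum_pow_div_log_of_abs_lt_one
    (by rw [abs_of_nonneg (le_of_lt ht)]; exact ht1)
  have h2 := hB.div_const t
  have heq : (fun j : ℕ => t^(j+1) / ((j:ℝ)+1) / t) = (fun j : ℕ => t^j / ((j:ℝ)+1)) := by
    funext j
    rw [pow_succ]
    field_simp
  rw [heq] at h2
  exact h2.tsum_eq

lemma bsC_pow_tsum {t : ℝ} (ht : 0 < t) (ht1 : t < 1) :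
    ∑' i : ℕ, bsC i * t^i = t / (-Real.log (1-t)) := by
  have hlog : 0 < -Real.log (1-t) := by
    have : Real.log (1-t) < 0 := Real.log_neg (by linarith) (by linarith)
    linarith
  have hf := bsC_pow_summable_norm (le_of_lt ht) ht1
  have hg := logser_summable_norm (le_of_lt ht) ht1
  have hprod := tsum_mul_tsum_eq_tsum_sum_antidiagonal_of_summable_norm
    (f := fun i => bsC i * t^i) (g := fun j => t^j / ((j:ℝ)+1)) hf hg
  have hdiag : ∀ n : ℕ, ∑ kl ∈ Finset.HasAntidiagonal.antidiagonal n,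
      (bsC kl.1 * t^kl.1) * (t^kl.2 / ((kl.2:ℝ)+1)) = if n = 0 then 1 else 0 := by
    intro n
    rw [Finset.Nat.sum_antidiagonal_eq_sum_range_succ_mk]
    match n with
    | 0 => simp [bsC_zero]
    | (n+1) =>
      have : ∑ k ∈ Finset.range (n+2),
          (bsC k * t^k) * (t^(n+1-k) / (((n+1-k : ℕ):ℝ)+1))
          = t^(n+1) * ∑ k ∈ Finset.range (n+2), bsC k / ((n + 2 - k : ℕ) : ℝ) := by
        rw [Finset.mul_sum]
        apply Finset.sum_congr rfl
        intro k hk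
        have hk' : k ≤ n + 1 := Nat.lt_succ_iff.mp (Finset.mem_range.mp hk)
        have hpow : t^k * t^(n+1-k) = t^(n+1) := by
          rw [← pow_add]
          congr 1
          omega
        have hden : ((n + 1 - k : ℕ) : ℝ) + 1 = ((n + 2 - k : ℕ) : ℝ) := by
          have h1 : (n + 2 - k : ℕ) = (n + 1 - k) + 1 := by omega
          rw [h1]
          push_cast
          ring
        calc (bsC k * t^k) * (t^(n+1-k) / (((n+1-k : ℕ):ℝ)+1))
            = (t^k * t^(n+1-k)) * (bsC k / (((n+1-k : ℕ):ℝ)+1)) := by ring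
          _ = t^(n+1) * (bsC k / ((n + 2 - k : ℕ) : ℝ)) := by rw [hpow, hden]
      rw [this, bsC_conv n]
      simp
  rw [funext hdiag, tsum_ite_eq] at hprod
  rw [logser_tsum ht ht1] at hprod
  have htne : (1:ℝ) = (∑' i : ℕ, bsC i * t^i) * ((-Real.log (1-t)) / t) := hprod.symm
  field_simp at htne
  rw [eq_div_iff (ne_of_gt hlog)]
  linarith [htne]



lemma exp_integral_aux (c : ℝ) (hc : c ≠ 0) (k : ℝ) :
    ∫ s in (0:ℝ)..k, Real.exp (c * s) = (Real.exp (c * k) - 1) / c := by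
  rw [intervalIntegral.integral_comp_mul_left (fun x => Real.exp x) hc]
  rw [integral_exp]
  simp [smul_eq_mul]
  field_simp

lemma frullani_log (k : ℕ) :
    ∫ u in Set.Ioc (0:ℝ) 1, (1 - u^k) / (-Real.log u) = Real.log ((k:ℝ)+1) := by
  rcases Nat.eq_zero_or_pos k with hk0 | hkpos
  · subst hk0; simp
  have hk : (0:ℝ) < k := by exact_mod_cast hkpos
  -- the two-variable function
  set F : ℝ × ℝ → ℝ := fun p => Real.exp (p.2 * Real.log p.1) with hF
  set μ := volume.restrict (Set.Ioc (0:ℝ) 1) with hμ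
  set ν := volume.restrict (Set.Ioc (0:ℝ) (k:ℝ)) with hν
  haveI : IsFiniteMeasure μ := by
    constructor
    rw [hμ, Measure.restrict_apply_univ]
    exact measure_Ioc_lt_top
  haveI : IsFiniteMeasure ν := by
    constructor
    rw [hν, Measure.restrict_apply_univ]
    exact measure_Ioc_lt_top
  have hFmeas : AEStronglyMeasurable F (μ.prod ν) := by
    apply Measurable.aestronglyMeasurable
    exact (Real.measurable_exp.comp
      ((measurable_snd).mul (Real.measurable_log.comp measurable_fst)))
  have hFint : Integrable F (μ.prod ν) := by
    apply Integrable.mono' (integrable_const 1) hFmeas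
    have hprodae : ∀ᵐ p ∂(μ.prod ν), p.1 ∈ Set.Ioc (0:ℝ) 1 ∧ p.2 ∈ Set.Ioc (0:ℝ) (k:ℝ) := by
      rw [hμ, hν, Measure.prod_restrict]
      filter_upwards [ae_restrict_mem (measurableSet_Ioc.prod measurableSet_Ioc)] with p hp
      exact ⟨hp.1, hp.2⟩
    filter_upwards [hprodae] with p hp
    rcases hp with ⟨h1, h2⟩
    rw [Real.norm_eq_abs, abs_of_pos (Real.exp_pos _)]
    rw [← Real.exp_zero]
    apply Real.exp_le_exp.mpr
    have hlog : Real.log p.1 ≤ 0 := Real.log_nonpos (le_of_lt h1.1) h1.2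
    exact mul_nonpos_of_nonneg_of_nonpos (le_of_lt h2.1) hlog
  have hswap := MeasureTheory.integral_integral_swap (f := fun u s => F (u, s)) hFint
  -- LHS of swap equals our integral
  have hne1 : ∀ᵐ u : ℝ ∂volume, u ≠ 1 := by
    rw [ae_iff]
    have : {u : ℝ | ¬ u ≠ 1} = {1} := by ext u; simp
    rw [this]
    exact measure_singleton 1
  have hL : (∫ u, (∫ s, F (u, s) ∂ν) ∂μ)
      = ∫ u in Set.Ioc (0:ℝ) 1, (1 - u^k) / (-Real.log u) := by
    rw [hμ]
    apply MeasureTheory.integral_congr_ae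
    filter_upwards [ae_restrict_mem measurableSet_Ioc, ae_restrict_of_ae hne1] with u hu hne
    · have h1 : u < 1 := lt_of_le_of_ne hu.2 hne
      have hlogneg : Real.log u < 0 := Real.log_neg hu.1 h1
      have hlogne : Real.log u ≠ 0 := ne_of_lt hlogneg
      rw [hν, ← intervalIntegral.integral_of_le (by positivity : (0:ℝ) ≤ (k:ℝ))]
      have : ∀ s, F (u, s) = Real.exp ((Real.log u) * s) := by
        intro s; rw [hF]; simp [mul_comm]
      simp_rw [this]
      rw [exp_integral_aux _ hlogne]
      have hexp : Real.exp (Real.log u * k) = u ^ k := by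
        rw [mul_comm, Real.exp_nat_mul, Real.exp_log hu.1]
      rw [hexp]
      rw [div_eq_div_iff hlogne (by exact neg_ne_zero.mpr hlogne)]
      ring
  rw [← hL, hswap]
  have hR : ∀ s ∈ Set.Ioc (0:ℝ) (k:ℝ), (∫ u, F (u, s) ∂μ) = 1/(s+1) := by
    intro s hs
    rw [hμ, ← intervalIntegral.integral_of_le (zero_le_one)]
    have heq : ∫ u in (0:ℝ)..1, F (u, s) = ∫ u in (0:ℝ)..1, u ^ s := by
      rw [intervalIntegral.integral_of_le (zero_le_one),
        intervalIntegral.integral_of_le (zero_le_one)]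
      apply setIntegral_congr_fun measurableSet_Ioc
      intro u hu
      show Real.exp (s * Real.log u) = u ^ s
      rw [Real.rpow_def_of_pos hu.1, mul_comm]
    rw [heq, integral_rpow (Or.inl (by linarith [hs.1] : (-1:ℝ) < s))]
    rw [Real.one_rpow, Real.zero_rpow (ne_of_gt (by linarith [hs.1] : (0:ℝ) < s + 1))]
    norm_num
  have hRint : (∫ s, (∫ u, F (u, s) ∂μ) ∂ν) = ∫ s in Set.Ioc (0:ℝ) (k:ℝ), 1/(s+1) := by
    rw [hν]
    apply setIntegral_congr_fun measurableSet_Ioc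
    intro s hs
    exact hR s hs
  rw [hRint, ← intervalIntegral.integral_of_le (by positivity : (0:ℝ) ≤ (k:ℝ))]
  have h1 : ∀ s : ℝ, (1:ℝ)/(s+1) = (fun x => x⁻¹) (s + 1) := by
    intro s; simp [one_div]
  simp_rw [h1]
  rw [intervalIntegral.integral_comp_add_right (fun x => x⁻¹) 1]
  rw [integral_inv (by
    intro h
    rw [Set.mem_uIcc] at h
    rcases h with ⟨h1', h2'⟩ | ⟨h1', h2'⟩ <;> linarith)]
  norm_num

lemma frullani_integrable (k : ℕ) :
    IntegrableOn (fun u => (1 - u^k) / (-Real.log u)) (Set.Ioc (0:ℝ) 1) := by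
  apply Integrable.mono' (integrable_const (k:ℝ))
  · apply Measurable.aestronglyMeasurable
    exact ((measurable_const.sub (measurable_id.pow_const k)).div
      Real.measurable_log.neg)
  · filter_upwards [ae_restrict_mem measurableSet_Ioc] with u hu
    rcases eq_or_lt_of_le hu.2 with h1 | h1
    · subst h1
      norm_num [Real.log_one]
    · have hlog : 0 < -Real.log u := by
        have := Real.log_neg hu.1 h1
        linarith
      have hnum : 0 ≤ 1 - u^k := by
        have : u^k ≤ 1 := pow_le_one₀ (le_of_lt hu.1) (le_of_lt h1)
        linarith
      rw [Real.norm_eq_abs, abs_of_nonneg (div_nonneg hnum (le_of_lt hlog))]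
      rw [div_le_iff₀ hlog]
      have h2 : 1 - u^k ≤ k * (1 - u) := by
        have hb := one_add_mul_le_pow (by linarith [hu.1] : (-2:ℝ) ≤ u - 1) k
        have : 1 + (u - 1) = u := by ring
        rw [this] at hb
        nlinarith
      have h3 : 1 - u ≤ -Real.log u := by
        have := Real.log_le_sub_one_of_pos hu.1
        linarith
      calc 1 - u^k ≤ k * (1 - u) := h2
        _ ≤ k * (-Real.log u) := by
            apply mul_le_mul_of_nonneg_left h3 (Nat.cast_nonneg k)

lemma alternating_choose_real (n : ℕ) (hn : 1 ≤ n) :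
    ∑ k ∈ Finset.range (n+1), (-1:ℝ)^k * (Nat.choose n k : ℝ) = 0 := by
  have h := Int.alternating_sum_range_choose (n := n)
  rw [if_neg (by omega)] at h
  have := congrArg (fun z : ℤ => (z : ℝ)) h
  push_cast at this
  convert this using 2

lemma binom_log_integral (m : ℕ) (hm : 2 ≤ m) :
    ∫ u in Set.Ioc (0:ℝ) 1, (1-u)^(m-1) / (-Real.log u)
      = ∑ k ∈ Finset.Icc 1 (m-1),
        (Nat.choose (m-1) k : ℝ) * (-1)^(k+1) * Real.log ((k:ℝ)+1) := by
  have hpoint : ∀ u : ℝ, (1-u)^(m-1) / (-Real.log u)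
      = ∑ k ∈ Finset.range m, (Nat.choose (m-1) k : ℝ) * (-1)^(k+1) *
          ((1 - u^k) / (-Real.log u)) := by
    intro u
    have hnum : (1-u)^(m-1)
        = ∑ k ∈ Finset.range m, (Nat.choose (m-1) k : ℝ) * (-1)^(k+1) * (1 - u^k) := by
      have hbin : (1-u)^(m-1) = ∑ k ∈ Finset.range m, (-u)^k * (Nat.choose (m-1) k : ℝ) := by
        have := add_pow (-u) 1 (m-1)
        simp only [one_pow, mul_one] at this
        rw [show (-u) + 1 = 1 - u by ring] at this
        rw [this]
        rw [show m - 1 + 1 = m by omega]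
      have halt := alternating_choose_real (m-1) (by omega)
      calc (1-u)^(m-1) = ∑ k ∈ Finset.range m, (-u)^k * (Nat.choose (m-1) k : ℝ) := hbin
        _ = (∑ k ∈ Finset.range m, (-1:ℝ)^k * (Nat.choose (m-1) k : ℝ) * u^k) := by
            apply Finset.sum_congr rfl; intros k _
            rw [neg_pow]; ring
        _ = ∑ k ∈ Finset.range m, ((Nat.choose (m-1) k : ℝ) * (-1)^(k+1) * (1 - u^k)
              + (-1:ℝ)^k * (Nat.choose (m-1) k : ℝ)) := by
            apply Finset.sum_congr rfl; intros k _
            ring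
        _ = ∑ k ∈ Finset.range m, (Nat.choose (m-1) k : ℝ) * (-1)^(k+1) * (1 - u^k) := by
            rw [Finset.sum_add_distrib]
            rw [show Finset.range m = Finset.range ((m-1)+1) by congr 1; omega] at *
            rw [halt]
            ring
    rw [hnum, Finset.sum_div]
    apply Finset.sum_congr rfl; intros k _
    ring
  simp_rw [hpoint]
  rw [MeasureTheory.integral_finset_sum]
  · have : ∀ k ∈ Finset.range m,
        (∫ u in Set.Ioc (0:ℝ) 1, (Nat.choose (m-1) k : ℝ) * (-1)^(k+1) *
          ((1 - u^k) / (-Real.log u)))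
        = (Nat.choose (m-1) k : ℝ) * (-1)^(k+1) * Real.log ((k:ℝ)+1) := by
      intro k _
      rw [MeasureTheory.integral_const_mul, frullani_log k]
    rw [Finset.sum_congr rfl this]
    -- drop the k = 0 term
    rw [show Finset.range m = Finset.range ((m-1)+1) by congr 1; omega]
    rw [Finset.sum_range_succ']
    have h0 : (Nat.choose (m-1) 0 : ℝ) * (-1)^(0+1) * Real.log ((0:ℕ):ℝ) + 0 = 0 := by
      simp
    rw [show ((Nat.choose (m-1) 0 : ℝ) * (-1)^(0+1) * Real.log (((0:ℕ):ℝ)+1)) = 0 by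
      simp]
    rw [add_zero]
    rw [show Finset.Icc 1 (m-1) = Finset.Ico 1 ((m-1)+1) by rw [Finset.Ico_add_one_right_eq_Icc]]
    rw [Finset.sum_Ico_eq_sum_range]
    exact Finset.sum_congr rfl (fun i _ => by rw [Nat.add_comm])
  · intro k _
    exact (frullani_integrable k).const_mul _

lemma key_value (m : ℕ) (hm : 2 ≤ m) :
    1/((m:ℝ)-1) + ∑' i : ℕ, bsC (i+1) / ((m:ℝ)+i)
      = ∑ k ∈ Finset.Icc 1 (m-1),
        (Nat.choose (m-1) k : ℝ) * (-1)^(k+1) * Real.log ((k:ℝ)+1) := by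
  have hm1 : (1:ℝ) ≤ (m:ℝ) - 1 := by
    have : (2:ℝ) ≤ m := by exact_mod_cast hm
    linarith
  set Fi : ℕ → ℝ → ℝ := fun i u => bsC (i+1) * u^(m-1+i) with hFi
  have hFiInt : ∀ i, IntegrableOn (Fi i) (Set.Ioc (0:ℝ) 1) := by
    intro i
    exact (Continuous.integrableOn_Ioc (by continuity))
  have hpowint : ∀ j : ℕ, (∫ u in Set.Ioc (0:ℝ) 1, u^j) = 1/((j:ℝ)+1) := by
    intro j
    rw [← intervalIntegral.integral_of_le zero_le_one, integral_pow]
    norm_num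
  have hFival : ∀ i, (∫ u in Set.Ioc (0:ℝ) 1, Fi i u) = bsC (i+1) / ((m:ℝ)+i) := by
    intro i
    rw [hFi]
    simp only
    rw [MeasureTheory.integral_const_mul, hpowint]
    have : ((m-1+i : ℕ):ℝ) + 1 = (m:ℝ) + i := by
      push_cast [Nat.cast_sub (by omega : 1 ≤ m)]
      ring
    rw [this]
    ring
  have hnorm : ∀ i, (∫ u in Set.Ioc (0:ℝ) 1, ‖Fi i u‖) ≤ -(bsC (i+1)) := by
    intro i
    have : ∀ u, ‖Fi i u‖ = |bsC (i+1)| * |u^(m-1+i)| := by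
      intro u; rw [hFi]; simp [abs_mul]
    simp_rw [this]
    rw [MeasureTheory.integral_const_mul]
    have habs : (∫ u in Set.Ioc (0:ℝ) 1, |u^(m-1+i)|) = 1/(((m-1+i:ℕ):ℝ)+1) := by
      rw [← hpowint (m-1+i)]
      apply setIntegral_congr_fun measurableSet_Ioc
      intro u hu
      exact abs_of_nonneg (pow_nonneg (le_of_lt hu.1) _)
    rw [habs]
    have h1 : |bsC (i+1)| = -(bsC (i+1)) := abs_of_nonpos (bsC_nonpos i)
    rw [h1]
    have h2 : (0:ℝ) < ((m-1+i:ℕ):ℝ)+1 := by positivity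
    have h3 : (1:ℝ)/(((m-1+i:ℕ):ℝ)+1) ≤ 1 := by
      rw [div_le_one h2]
      have : (1:ℝ) ≤ ((m-1+i:ℕ):ℝ) := by
        have : 1 ≤ m - 1 + i := by omega
        exact_mod_cast this
      linarith
    nlinarith [neg_nonneg.mpr (bsC_nonpos i)]
  have hsumnorm : Summable (fun i => ∫ u in Set.Ioc (0:ℝ) 1, ‖Fi i u‖) := by
    apply Summable.of_nonneg_of_le
      (fun i => integral_nonneg (fun u => norm_nonneg _)) hnorm bsC_neg_summable
  have hswap := MeasureTheory.integral_tsum_of_summable_integral_norm hFiInt hsumnorm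
  simp_rw [hFival] at hswap
  -- identify the integrand a.e.
  have hne1 : ∀ᵐ u : ℝ ∂volume, u ≠ 1 := by
    rw [ae_iff]
    have : {u : ℝ | ¬ u ≠ 1} = {1} := by ext u; simp
    rw [this]
    exact measure_singleton 1
  have hae : ∀ᵐ u ∂(volume.restrict (Set.Ioc (0:ℝ) 1)),
      (∑' i, Fi i u) = u^(m-1)/(-Real.log (1-u)) - u^(m-2) := by
    filter_upwards [ae_restrict_mem measurableSet_Ioc, ae_restrict_of_ae hne1] with u hu hne
    have h1 : u < 1 := lt_of_le_of_ne hu.2 hne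
    have hsum : Summable (fun i : ℕ => bsC i * u^i) :=
      (bsC_pow_summable_norm (le_of_lt hu.1) h1).of_norm
    have hshift := hsum.tsum_eq_zero_add
    rw [bsC_pow_tsum hu.1 h1, bsC_zero] at hshift
    simp only [pow_zero, mul_one] at hshift
    have hts : ∑' i : ℕ, bsC (i+1) * u^(i+1) = u/(-Real.log (1-u)) - 1 := by
      linarith [hshift]
    have hFieq : ∀ i : ℕ, Fi i u = u^(m-2) * (bsC (i+1) * u^(i+1)) := by
      intro i
      rw [hFi]
      simp only
      rw [show m-1+i = (m-2)+(i+1) by omega, pow_add]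
      ring
    simp_rw [hFieq]
    rw [tsum_mul_left, hts]
    have hup : u^(m-2) * u = u^(m-1) := by
      rw [← pow_succ]
      congr 1
      omega
    rw [mul_sub, mul_one]
    rw [show u^(m-2) * (u/(-Real.log (1-u))) = (u^(m-2) * u)/(-Real.log (1-u)) from by ring,
      hup]
  rw [MeasureTheory.integral_congr_ae hae] at hswap
  -- split the integral
  have hφint : IntegrableOn (fun u => u^(m-1)/(-Real.log (1-u))) (Set.Ioc (0:ℝ) 1) := by
    apply Integrable.mono' (integrable_const (1:ℝ))
    · apply Measurable.aestronglyMeasurable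
      exact (measurable_id.pow_const (m-1)).div
        ((Real.measurable_log.comp (measurable_const.sub measurable_id)).neg)
    · filter_upwards [ae_restrict_mem measurableSet_Ioc] with u hu
      rcases eq_or_lt_of_le hu.2 with h1 | h1
      · subst h1
        norm_num [Real.log_one]
      · have hlog : 0 < -Real.log (1-u) := by
          have := Real.log_neg (x := 1-u) (by linarith) (by linarith [hu.1])
          linarith
        have hle : u ≤ -Real.log (1-u) := by
          have := Real.log_le_sub_one_of_pos (by linarith : (0:ℝ) < 1-u)
          linarith
        have hpow : u^(m-1) ≤ u :=
          pow_le_of_le_one (le_of_lt hu.1) (le_of_lt h1) (by omega)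
        have hnn : 0 ≤ u^(m-1)/(-Real.log (1-u)) :=
          div_nonneg (pow_nonneg (le_of_lt hu.1) _) (le_of_lt hlog)
        rw [Real.norm_eq_abs, abs_of_nonneg hnn, div_le_one hlog]
        linarith
  have hψint : IntegrableOn (fun u : ℝ => u^(m-2)) (Set.Ioc (0:ℝ) 1) :=
    Continuous.integrableOn_Ioc (by continuity)
  rw [MeasureTheory.integral_sub hφint hψint] at hswap
  rw [hpowint (m-2)] at hswap
  have hcast : ((m-2:ℕ):ℝ) + 1 = (m:ℝ) - 1 := by
    push_cast [Nat.cast_sub (by omega : 2 ≤ m)]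
    ring
  rw [hcast] at hswap
  -- change of variables u ↦ 1 - u
  have hsub : (∫ u in Set.Ioc (0:ℝ) 1, u^(m-1)/(-Real.log (1-u)))
      = ∫ u in Set.Ioc (0:ℝ) 1, (1-u)^(m-1)/(-Real.log u) := by
    rw [← intervalIntegral.integral_of_le zero_le_one,
      ← intervalIntegral.integral_of_le zero_le_one]
    have := intervalIntegral.integral_comp_sub_left
      (a := (0:ℝ)) (b := (1:ℝ)) (fun u => (1-u)^(m-1)/(-Real.log u)) 1
    simp only [sub_zero, sub_self] at this
    rw [← this]
    apply intervalIntegral.integral_congr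
    intro u _
    simp only
    rw [show (1:ℝ) - (1 - u) = u from by ring]
  rw [hsub, binom_log_integral m hm] at hswap
  rw [hswap]
  ring

-- telescoping helper
lemma tel_aux (n p : ℕ) (hp : p ≤ n) :
    ∑ j ∈ Finset.Ico p n, 1/((((n:ℝ)-j)+1)*((n:ℝ)-j)) = 1 - 1/(((n:ℝ)-p)+1) := by
  rw [Finset.sum_Ico_eq_sum_range]
  set f : ℕ → ℝ := fun l => 1/(((n:ℝ)-p-(l:ℕ))+1) with hf
  have hterm : ∀ i ∈ Finset.range (n-p),
      1/((((n:ℝ)-(p+i:ℕ))+1)*((n:ℝ)-(p+i:ℕ))) = f (i+1) - f i := by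
    intro i hi
    rw [hf]
    have hi' : i < n - p := Finset.mem_range.mp hi
    have h1 : (i:ℝ) < (n:ℝ) - p := by
      have : (i:ℝ) + p < n := by exact_mod_cast (by omega : i + p < n)
      linarith
    have h2 : (0:ℝ) < (n:ℝ) - p - i := by linarith
    simp only
    push_cast
    rw [div_sub_div _ _ (by linarith : ((n:ℝ)-p-(i+1))+1 ≠ 0) (by linarith : ((n:ℝ)-p-i)+1 ≠ 0)]
    rw [div_eq_div_iff (by nlinarith) (by nlinarith)]
    ring
  rw [Finset.sum_congr rfl hterm, Finset.sum_range_sub f]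
  rw [hf]
  have hc : ((n - p : ℕ):ℝ) = (n:ℝ) - p := by
    push_cast [Nat.cast_sub hp]; ring
  simp only
  rw [hc]
  simp

lemma W_eq (m n : ℕ) (hm : 2 ≤ m) (hn : m + 1 ≤ n) :
    ∑ i ∈ Finset.Ico m n, bsC (i-m+1) / ((n:ℝ)-i) = -(1/(((n:ℝ)-m)+1)) := by
  have h0 := bsC_conv (n-m-1)
  have hnm : n - m - 1 + 2 = n - m + 1 := by omega
  rw [hnm] at h0
  rw [Finset.sum_range_succ'] at h0
  have hc0 : ((n - m + 1 - 0 : ℕ):ℝ) = ((n:ℝ)-m)+1 := by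
    have : (n - m + 1 - 0 : ℕ) = n - m + 1 := by omega
    rw [this]
    push_cast [Nat.cast_sub (by omega : m ≤ n)]
    ring
  rw [hc0] at h0
  have hW : ∑ i ∈ Finset.Ico m n, bsC (i-m+1) / ((n:ℝ)-i)
      = ∑ l ∈ Finset.range (n-m), bsC (l+1) / ((n - m + 1 - (l+1) : ℕ):ℝ) := by
    rw [Finset.sum_Ico_eq_sum_range]
    apply Finset.sum_congr rfl
    intro l hl
    have hl' : l < n - m := Finset.mem_range.mp hl
    have h1 : m + l - m + 1 = l + 1 := by omega
    have h2 : (n - m + 1 - (l+1) : ℕ) = n - m - l := by omega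
    rw [h1, h2]
    congr 1
    push_cast [Nat.cast_sub (by omega : m + l ≤ n), Nat.cast_sub (by omega : l ≤ n - m),
      Nat.cast_sub (by omega : m ≤ n)]
    ring
  rw [hW]
  rw [bsC_zero] at h0
  linarith [h0]

lemma H_rec (m n : ℕ) (hm : 2 ≤ m) (hn : m + 1 ≤ n) :
    (((n:ℝ)-1)/n) * (1 + ((m:ℝ)-1) * ∑ j ∈ Finset.Ico m n, bsC (j-m+1) / (j:ℝ))
      = ∑ k ∈ Finset.Icc 2 (n-m+1),
          (1 + ((m:ℝ)-1) * ∑ j ∈ Finset.Ico m (n-k+1), bsC (j-m+1) / (j:ℝ))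
            / ((k:ℝ) * ((k:ℝ)-1)) := by
  set c : ℝ := (m:ℝ) - 1 with hc
  set D : ℕ → ℝ := fun i => bsC (i-m+1) / (i:ℝ) with hD
  set G : ℕ → ℝ := fun j =>
    (1 + c * ∑ i ∈ Finset.Ico m j, D i) * (1/((((n:ℝ)-j)+1)*((n:ℝ)-j))) with hG
  -- Step A: reindex the RHS
  have hA : ∑ k ∈ Finset.Icc 2 (n-m+1),
      (1 + c * ∑ j ∈ Finset.Ico m (n-k+1), D j) / ((k:ℝ) * ((k:ℝ)-1))
      = ∑ j ∈ Finset.Ico m n, G j := by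
    apply Finset.sum_nbij' (i := fun k => n - k + 1) (j := fun j => n - j + 1)
    · intro k hk
      rw [Finset.mem_Icc] at hk
      rw [Finset.mem_Ico]
      omega
    · intro j hj
      rw [Finset.mem_Ico] at hj
      rw [Finset.mem_Icc]
      omega
    · intro k hk
      rw [Finset.mem_Icc] at hk
      omega
    · intro j hj
      rw [Finset.mem_Ico] at hj
      omega
    · intro k hk
      rw [Finset.mem_Icc] at hk
      rw [hG]
      simp only
      have hcast : ((n - k + 1 : ℕ):ℝ) = (n:ℝ) - k + 1 := by
        push_cast [Nat.cast_sub (by omega : k ≤ n)]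
        ring
      rw [hcast]
      have h1 : (n:ℝ) - ((n:ℝ) - k + 1) + 1 = (k:ℝ) := by ring
      have h2 : (n:ℝ) - ((n:ℝ) - k + 1) = (k:ℝ) - 1 := by ring
      rw [h1, h2]
      rw [div_eq_mul_one_div]
  rw [hA, hG]
  simp only
  have hsplit : ∀ j ∈ Finset.Ico m n,
      (1 + c * ∑ i ∈ Finset.Ico m j, D i) * (1/((((n:ℝ)-j)+1)*((n:ℝ)-j)))
      = 1/((((n:ℝ)-j)+1)*((n:ℝ)-j))
        + c * ∑ i ∈ Finset.Ico m j, D i * (1/((((n:ℝ)-j)+1)*((n:ℝ)-j))) := by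
    intro j _
    rw [add_mul, one_mul, mul_assoc, Finset.sum_mul]
  rw [Finset.sum_congr rfl hsplit, Finset.sum_add_distrib, ← Finset.mul_sum]
  rw [tel_aux n m (by omega)]
  rw [← Finset.sum_Ico_Ico_comm' m n (fun i j => D i * (1/((((n:ℝ)-j)+1)*((n:ℝ)-j))))]
  have hinner : ∀ i ∈ Finset.Ico m n,
      ∑ j ∈ Finset.Ico (i+1) n, D i * (1/((((n:ℝ)-j)+1)*((n:ℝ)-j)))
      = D i - (1/(n:ℝ)) * D i - (1/(n:ℝ)) * (bsC (i-m+1) / ((n:ℝ)-i)) := by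
    intro i hi
    rw [Finset.mem_Ico] at hi
    rw [← Finset.mul_sum, tel_aux n (i+1) (by omega)]
    have hcast : ((i+1:ℕ):ℝ) = (i:ℝ) + 1 := by push_cast; ring
    rw [hcast]
    have h1 : ((n:ℝ) - ((i:ℝ)+1)) + 1 = (n:ℝ) - i := by ring
    rw [h1]
    -- per-term algebraic identity
    rw [hD]
    simp only
    have hi0 : (0:ℝ) < (i:ℝ) := by
      have : (2:ℝ) ≤ (i:ℝ) := by exact_mod_cast (by omega : 2 ≤ i)
      linarith
    have hni : (0:ℝ) < (n:ℝ) - i := by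
      have : (i:ℝ) < (n:ℝ) := by exact_mod_cast hi.2
      linarith
    have hn0 : (0:ℝ) < (n:ℝ) := by
      have : (0:ℕ) < n := by omega
      exact_mod_cast this
    field_simp
    ring
  rw [Finset.sum_congr rfl hinner]
  rw [Finset.sum_sub_distrib, Finset.sum_sub_distrib, ← Finset.mul_sum, ← Finset.mul_sum]
  rw [W_eq m n hm hn]
  have hn0 : (0:ℝ) < (n:ℝ) := by
    have : (0:ℕ) < n := by omega
    exact_mod_cast this
  have hnm0 : (0:ℝ) < ((n:ℝ) - m) + 1 := by
    have : (m:ℝ) + 1 ≤ (n:ℝ) := by exact_mod_cast hn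
    linarith
  field_simp
  ring

theorem stmt_14 (m : ℕ) (hm : 2 ≤ m) (x : ℕ → ℝ)
    (hxm : x m = 1 / ((m : ℝ) - 1) ^ 2)
    (hrec : ∀ n : ℕ, m + 1 ≤ n →
      x n = ((n : ℝ) / ((n : ℝ) - 1)) *
        ∑ k ∈ Finset.Icc 2 (n - m + 1), x (n - k + 1) / ((k : ℝ) * ((k : ℝ) - 1))) :
    Tendsto x atTop (nhds ((1 / ((m : ℝ) - 1)) *
      ∑ k ∈ Finset.Icc 1 (m - 1),
        (Nat.choose (m - 1) k : ℝ) * (-1) ^ (k + 1) * Real.log ((k : ℝ) + 1))) := by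
  set c : ℝ := (m:ℝ) - 1 with hcdef
  have hc1 : (1:ℝ) ≤ c := by
    have : (2:ℝ) ≤ (m:ℝ) := by exact_mod_cast hm
    rw [hcdef]; linarith
  have hc0 : c ≠ 0 := by linarith
  set H : ℕ → ℝ := fun n => 1 + c * ∑ j ∈ Finset.Ico m n, bsC (j-m+1) / (j:ℝ) with hH
  -- explicit formula for x
  have hxeq : ∀ n, m ≤ n → x n = H n / c^2 := by
    intro n
    induction n using Nat.strong_induction_on with
    | _ n IH =>
      intro hmn
      rcases eq_or_lt_of_le hmn with heq | hlt
      · rw [← heq, hxm, hH]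
        simp
      · have hn1 : m + 1 ≤ n := hlt
        rw [hrec n hn1]
        have hterm : ∀ k ∈ Finset.Icc 2 (n-m+1),
            x (n-k+1) / ((k:ℝ) * ((k:ℝ)-1))
            = (H (n-k+1) / ((k:ℝ) * ((k:ℝ)-1))) * (1/c^2) := by
          intro k hk
          rw [Finset.mem_Icc] at hk
          rw [IH (n-k+1) (by omega) (by omega)]
          ring
        rw [Finset.sum_congr rfl hterm, ← Finset.sum_mul]
        have hHrec := H_rec m n hm hn1
        rw [hH]
        simp only
        rw [← hHrec]
        have hn0 : (0:ℝ) < (n:ℝ) := by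
          have : (0:ℕ) < n := by omega
          exact_mod_cast this
        have hn1' : (0:ℝ) < (n:ℝ) - 1 := by
          have : (2:ℝ) ≤ (n:ℝ) := by exact_mod_cast (by omega : 2 ≤ n)
          linarith
        field_simp
        ring
  -- convergence of the partial sums
  have hw : ∀ i : ℕ, |1/((m:ℝ)+i)| ≤ 1 := by
    intro i
    have h1 : (1:ℝ) ≤ (m:ℝ) + i := by
      have : (2:ℝ) ≤ (m:ℝ) := by exact_mod_cast hm
      have : (0:ℝ) ≤ (i:ℝ) := by positivity
      linarith
    rw [abs_of_nonneg (by positivity)]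
    rw [div_le_one (by linarith)]
    linarith
  have hsummable : Summable (fun i => bsC (i+1) / ((m:ℝ)+i)) := by
    have := bsC_mul_summable hw
    apply this.congr
    intro i
    rw [mul_one_div]
  set T : ℝ := ∑' i, bsC (i+1) / ((m:ℝ)+i) with hT
  have hHsum : ∀ n : ℕ, (∑ j ∈ Finset.Ico m n, bsC (j-m+1) / (j:ℝ))
      = ∑ i ∈ Finset.range (n-m), bsC (i+1) / ((m:ℝ)+i) := by
    intro n
    rw [Finset.sum_Ico_eq_sum_range]
    apply Finset.sum_congr rfl
    intro i _
    have h1 : m + i - m + 1 = i + 1 := by omega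
    rw [h1]
    congr 1
    push_cast
    ring
  have htend0 : Tendsto (fun N => ∑ i ∈ Finset.range N, bsC (i+1) / ((m:ℝ)+i))
      atTop (nhds T) := hsummable.hasSum.tendsto_sum_nat
  have htend1 : Tendsto (fun n : ℕ => ∑ i ∈ Finset.range (n-m), bsC (i+1) / ((m:ℝ)+i))
      atTop (nhds T) := htend0.comp (tendsto_sub_atTop_nat m)
  have htend2 : Tendsto (fun n : ℕ => H n / c^2) atTop (nhds ((1 + c * T)/c^2)) := by
    apply Tendsto.div_const
    apply Tendsto.const_add
    apply Tendsto.const_mul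
    exact htend1.congr (fun n => (hHsum n).symm)
  have hfinal : Tendsto x atTop (nhds ((1 + c * T)/c^2)) := by
    apply htend2.congr'
    filter_upwards [eventually_ge_atTop m] with n hn
    exact (hxeq n hn).symm
  have hval : (1 + c * T)/c^2 = (1/c) * ∑ k ∈ Finset.Icc 1 (m-1),
      (Nat.choose (m-1) k : ℝ) * (-1)^(k+1) * Real.log ((k:ℝ)+1) := by
    rw [← key_value m hm, ← hT, hcdef]
    have hm1 : (m:ℝ) - 1 ≠ 0 := hc0
    field_simp
  rw [← hval]
  exact hfinal
end

section
/- For m ≥ 2 and t ∈ [0,1), define f_{(m)}(t) = Σ_{n=1}^{∞} x_{n+m−1}^{(m)} t^{n+m−2}, where x_m^{(m)} = 1/(m−1)^2 and x_n^{(m)} = (n/(n−1))·Σ_{k=2}^{n−m+1} x_{n−k+1}^{(m)}/(k(k−1)) for n ≥ m+1. Then (1−t)·f_{(m)}(t) = −(1/(m−1))·∫_0^t u^{m−1}/log(1−u) du. -/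
open Finset

namespace Stmt15

noncomputable def aa (m : ℕ) (x : ℕ → ℝ) (i : ℕ) : ℝ := if m ≤ i then x i else 0

noncomputable def qq (m : ℕ) (x : ℕ → ℝ) (i : ℕ) : ℝ := aa m x (i+1) - aa m x i

lemma sum_inv_eq (K : ℕ) (hK : 1 ≤ K) :
    (∑ k ∈ Finset.Icc 2 K, 1/((k:ℝ)*((k:ℝ)-1))) = 1 - 1/(K:ℝ) := by
  induction K, hK using Nat.le_induction with
  | base => simp
  | succ K hK ih =>
    rw [Finset.sum_Icc_succ_top (by omega : 2 ≤ K + 1), ih]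
    have h1 : (K:ℝ) ≠ 0 := by
      have : (1:ℝ) ≤ (K:ℝ) := by exact_mod_cast hK
      linarith
    have h2 : ((K:ℝ)+1) ≠ 0 := by positivity
    push_cast
    rw [show (K:ℝ)+1-1 = K by ring]
    field_simp
    ring

lemma sum_inv_le_one (K : ℕ) :
    (∑ k ∈ Finset.Icc 2 K, 1/((k:ℝ)*((k:ℝ)-1))) ≤ 1 := by
  rcases Nat.eq_zero_or_pos K with h | h
  · subst h; simp
  · rw [sum_inv_eq K h]
    have : (0:ℝ) < (K:ℝ) := by exact_mod_cast h
    have : 0 ≤ 1/(K:ℝ) := by positivity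
    linarith

lemma abs_x_le (m : ℕ) (x : ℕ → ℝ) (hm : 2 ≤ m)
    (hxm : x m = 1 / ((m : ℝ) - 1) ^ 2)
    (hrec : ∀ n : ℕ, m + 1 ≤ n →
      x n = ((n : ℝ) / ((n : ℝ) - 1)) *
        ∑ k ∈ Finset.Icc 2 (n - m + 1), x (n - k + 1) / ((k : ℝ) * ((k : ℝ) - 1))) :
    ∀ n, m ≤ n → |x n| ≤ (n:ℝ) := by
  intro n
  induction n using Nat.strong_induction_on with
  | _ n ih =>
    intro hn
    have hmR : (2:ℝ) ≤ (m:ℝ) := by exact_mod_cast hm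
    rcases eq_or_lt_of_le hn with h | h
    · rw [← h, hxm]
      have h1 : (1:ℝ) ≤ (m:ℝ) - 1 := by linarith
      have h2 : (1:ℝ) ≤ ((m:ℝ) - 1)^2 := by nlinarith
      rw [abs_of_nonneg (by positivity)]
      have : 1 / ((m:ℝ)-1)^2 ≤ 1 := by
        rw [div_le_one (by positivity)]; exact h2
      linarith
    · have hn1 : m + 1 ≤ n := h
      have hnR : (3:ℝ) ≤ (n:ℝ) := by
        have : 3 ≤ n := by omega
        exact_mod_cast this
      have hn1R : (0:ℝ) < (n:ℝ) - 1 := by linarith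
      have hsum : |∑ k ∈ Finset.Icc 2 (n - m + 1), x (n - k + 1) / ((k : ℝ) * ((k : ℝ) - 1))|
          ≤ (n:ℝ) - 1 := by
        calc |∑ k ∈ Finset.Icc 2 (n - m + 1), x (n - k + 1) / ((k : ℝ) * ((k : ℝ) - 1))|
            ≤ ∑ k ∈ Finset.Icc 2 (n - m + 1), |x (n - k + 1) / ((k : ℝ) * ((k : ℝ) - 1))| :=
              Finset.abs_sum_le_sum_abs _ _
          _ ≤ ∑ k ∈ Finset.Icc 2 (n - m + 1), ((n:ℝ) - 1) * (1/((k:ℝ)*((k:ℝ)-1))) := by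
              refine Finset.sum_le_sum (fun k hk => ?_)
              obtain ⟨hk2, hkle⟩ := Finset.mem_Icc.mp hk
              have hkR : (2:ℝ) ≤ (k:ℝ) := by exact_mod_cast hk2
              have hden : (0:ℝ) < (k:ℝ)*((k:ℝ)-1) := by nlinarith
              rw [abs_div, abs_of_nonneg hden.le, div_le_iff₀ hden]
              have hidx : m ≤ n - k + 1 := by omega
              have hlt : n - k + 1 < n := by omega
              have hb := ih (n - k + 1) hlt hidx
              have hcast : ((n - k + 1 : ℕ) : ℝ) ≤ (n:ℝ) - 1 := by
                have h' : n - k + 1 ≤ n - 1 := by omega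
                have h'' : ((n - k + 1 : ℕ) : ℝ) ≤ ((n - 1 : ℕ) : ℝ) := by exact_mod_cast h'
                have h''' : ((n - 1 : ℕ) : ℝ) = (n:ℝ) - 1 := by
                  have : 1 ≤ n := by omega
                  push_cast [this]; ring
                linarith
              calc |x (n - k + 1)| ≤ ((n - k + 1 : ℕ) : ℝ) := hb
                _ ≤ (n:ℝ) - 1 := hcast
                _ = ((n:ℝ) - 1) * (1/((k:ℝ)*((k:ℝ)-1))) * ((k:ℝ)*((k:ℝ)-1)) := by
                    have hk1 : (k:ℝ)-1 ≠ 0 := by linarith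
                    field_simp
          _ = ((n:ℝ) - 1) * ∑ k ∈ Finset.Icc 2 (n - m + 1), (1/((k:ℝ)*((k:ℝ)-1))) := by
              rw [Finset.mul_sum]
          _ ≤ ((n:ℝ) - 1) * 1 := by
              have := sum_inv_le_one (n - m + 1)
              nlinarith [sum_inv_le_one (n - m + 1)]
          _ = (n:ℝ) - 1 := by ring
      rw [hrec n hn1, abs_mul, abs_of_nonneg (by positivity : (0:ℝ) ≤ (n:ℝ)/((n:ℝ)-1))]
      calc (n:ℝ)/((n:ℝ)-1) * |∑ k ∈ Finset.Icc 2 (n - m + 1), x (n - k + 1) / ((k : ℝ) * ((k : ℝ) - 1))|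
          ≤ (n:ℝ)/((n:ℝ)-1) * ((n:ℝ)-1) := by
            have h0 : (0:ℝ) ≤ (n:ℝ)/((n:ℝ)-1) := by positivity
            exact mul_le_mul_of_nonneg_left hsum h0
        _ = (n:ℝ) := by field_simp


lemma summable_sq {r : ℝ} (h0 : 0 ≤ r) (h1 : r < 1) :
    Summable (fun n : ℕ => ((n:ℝ)+1)^2 * r^n) := by
  have hr : ‖r‖ < 1 := by rwa [Real.norm_eq_abs, abs_of_nonneg h0]
  have h2 := summable_pow_mul_geometric_of_norm_lt_one (R := ℝ) 2 hr
  have hone := summable_pow_mul_geometric_of_norm_lt_one (R := ℝ) 1 hr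
  have h0' := summable_pow_mul_geometric_of_norm_lt_one (R := ℝ) 0 hr
  have := (h2.add (hone.mul_left 2)).add h0'
  refine this.congr (fun n => ?_)
  push_cast
  ring

section
variable {m : ℕ} {x : ℕ → ℝ}

lemma abs_aa_le (habs : ∀ n, m ≤ n → |x n| ≤ (n:ℝ)) (i : ℕ) : |aa m x i| ≤ (i:ℝ) := by
  unfold aa
  by_cases h : m ≤ i
  · rw [if_pos h]; exact habs i h
  · rw [if_neg h]; simp

lemma abs_qq_le (habs : ∀ n, m ≤ n → |x n| ≤ (n:ℝ)) (i : ℕ) :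
    |qq m x i| ≤ 2*(i:ℝ)+2 := by
  unfold qq
  calc |aa m x (i+1) - aa m x i| ≤ |aa m x (i+1)| + |aa m x i| := abs_sub _ _
    _ ≤ ((i+1:ℕ):ℝ) + (i:ℝ) := add_le_add (abs_aa_le habs (i+1)) (abs_aa_le habs i)
    _ ≤ 2*(i:ℝ)+2 := by push_cast; linarith

end

-- main coefficient identity
lemma coeffSum (m : ℕ) (x : ℕ → ℝ) (hm : 2 ≤ m)
    (hxm : x m = 1 / ((m : ℝ) - 1) ^ 2)
    (hrec : ∀ n : ℕ, m + 1 ≤ n →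
      x n = ((n : ℝ) / ((n : ℝ) - 1)) *
        ∑ k ∈ Finset.Icc 2 (n - m + 1), x (n - k + 1) / ((k : ℝ) * ((k : ℝ) - 1)))
    (N : ℕ) :
    (∑ p ∈ Finset.HasAntidiagonal.antidiagonal N, ((p.2:ℝ)+1) * qq m x (p.2+1) / ((p.1:ℝ)+1))
      = if N = m - 2 then 1/((m:ℝ)-1) else 0 := by
  have hmR : (2:ℝ) ≤ (m:ℝ) := by exact_mod_cast hm
  -- convert to a range sum over the second coordinate
  have step1 : (∑ p ∈ Finset.HasAntidiagonal.antidiagonal N, ((p.2:ℝ)+1) * qq m x (p.2+1) / ((p.1:ℝ)+1))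
      = ∑ j ∈ Finset.range (N+1), ((j:ℝ)+1) * qq m x (j+1) / (((N-j : ℕ):ℝ)+1) := by
    rw [Finset.Nat.sum_antidiagonal_eq_sum_range_succ_mk]
    rw [← Finset.sum_range_reflect]
    refine Finset.sum_congr rfl (fun j hj => ?_)
    have hj' : j ≤ N := by simpa [Nat.lt_succ_iff] using hj
    have e1 : N + 1 - 1 - j = N - j := by omega
    have e2 : N - (N - j) = j := by omega
    rw [e1, e2]
  rw [step1]
  by_cases hsmall : N + 2 < m
  · rw [if_neg (by omega)]
    refine Finset.sum_eq_zero (fun j hj => ?_)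
    have hj' : j ≤ N := by simpa [Nat.lt_succ_iff] using hj
    have : qq m x (j+1) = 0 := by
      simp only [qq, aa, if_neg (by omega : ¬ m ≤ j + 1 + 1), if_neg (by omega : ¬ m ≤ j + 1)]
      ring
    rw [this]; ring
  by_cases heq : N + 2 = m
  · rw [if_pos (by omega)]
    rw [Finset.sum_eq_single_of_mem N (Finset.self_mem_range_succ N)]
    · have e0 : N - N = 0 := by omega
      have hq : qq m x (N+1) = x m := by
        simp only [qq, aa, if_pos (by omega : m ≤ N + 1 + 1), if_neg (by omega : ¬ m ≤ N + 1)]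
        have : N + 1 + 1 = m := by omega
        rw [this]; ring
      rw [e0, hq, hxm]
      have hcast : ((N:ℝ)+1) = (m:ℝ) - 1 := by
        have : (N:ℕ) = m - 2 := by omega
        subst this
        have : ((m - 2 : ℕ):ℝ) = (m:ℝ) - 2 := by
          push_cast [Nat.cast_sub hm]; ring
        rw [this]; ring
      rw [hcast]
      have h1 : (m:ℝ) - 1 ≠ 0 := by linarith
      push_cast
      field_simp
      ring
    · intro j hj hjne
      have hj' : j ≤ N := by simpa [Nat.lt_succ_iff] using hj
      have : qq m x (j+1) = 0 := by
        simp only [qq, aa, if_neg (by omega : ¬ m ≤ j + 1 + 1), if_neg (by omega : ¬ m ≤ j + 1)]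
        ring
      rw [this]; ring
  -- main case : N + 2 ≥ m + 1
  have hc : m + 1 ≤ N + 2 := by omega
  rw [if_neg (by omega)]
  -- rewrite denominators with real subtraction
  have step2 : ∑ j ∈ Finset.range (N+1), ((j:ℝ)+1) * qq m x (j+1) / (((N-j : ℕ):ℝ)+1)
      = ∑ j ∈ Finset.range (N+1), ((j:ℝ)+1) * qq m x (j+1) / ((N:ℝ)-(j:ℝ)+1) := by
    refine Finset.sum_congr rfl (fun j hj => ?_)
    have hj' : j ≤ N := by simpa [Nat.lt_succ_iff] using hj
    rw [Nat.cast_sub hj']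
  rw [step2]
  set T : ℕ → ℝ := fun j => (j:ℝ) * aa m x (j+1) / ((N:ℝ) - (j:ℝ) + 2) with hT
  have key : ∀ j ∈ Finset.range (N+1),
      ((j:ℝ)+1) * qq m x (j+1) / ((N:ℝ)-(j:ℝ)+1)
        = (T (j+1) - T j) - ((N:ℝ)+2) * (aa m x (j+1) / (((N:ℝ)-(j:ℝ)+2) * ((N:ℝ)-(j:ℝ)+1))) := by
    intro j hj
    have hj' : j ≤ N := by simpa [Nat.lt_succ_iff] using hj
    have hjR : (j:ℝ) ≤ (N:ℝ) := by exact_mod_cast hj'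
    have h1 : (N:ℝ)-(j:ℝ)+1 ≠ 0 := by linarith
    have h2 : (N:ℝ)-(j:ℝ)+2 ≠ 0 := by linarith
    have e : T (j+1) = ((j:ℝ)+1) * aa m x (j+2) / ((N:ℝ) - (j:ℝ) + 1) := by
      simp only [hT]
      push_cast
      congr 1
      ring
    rw [e]
    simp only [hT, qq]
    field_simp
    ring
  rw [Finset.sum_congr rfl key, Finset.sum_sub_distrib, Finset.sum_range_sub T (N+1),
    ← Finset.mul_sum]
  have hT0 : T 0 = 0 := by simp [hT]
  have hTN : T (N+1) = ((N:ℝ)+1) * aa m x (N+2) := by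
    simp only [hT]
    push_cast
    have : (N:ℝ) - ((N:ℝ)+1) + 2 = 1 := by ring
    rw [this]
    simp
  rw [hT0, hTN, sub_zero]
  -- now reindex the second sum
  have step3 : ∑ j ∈ Finset.range (N+1), aa m x (j+1) / (((N:ℝ)-(j:ℝ)+2) * ((N:ℝ)-(j:ℝ)+1))
      = ∑ k ∈ Finset.Icc 2 (N+2), aa m x (N+3-k) / ((k:ℝ)*((k:ℝ)-1)) := by
    refine Finset.sum_nbij' (fun j => N+2-j) (fun k => N+2-k) ?_ ?_ ?_ ?_ ?_
    · intro j hj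
      have : j ≤ N := by simpa [Nat.lt_succ_iff] using hj
      simp only [Finset.mem_Icc]; omega
    · intro k hk
      simp only [Finset.mem_Icc] at hk
      simp only [Finset.mem_range]; omega
    · intro j hj
      have : j ≤ N := by simpa [Nat.lt_succ_iff] using hj
      omega
    · intro k hk
      simp only [Finset.mem_Icc] at hk
      omega
    · intro j hj
      have hj' : j ≤ N := by simpa [Nat.lt_succ_iff] using hj
      have e1 : N + 3 - (N + 2 - j) = j + 1 := by omega
      have e2 : ((N + 2 - j : ℕ):ℝ) = (N:ℝ) - (j:ℝ) + 2 := by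
        have : j ≤ N + 2 := by omega
        push_cast [Nat.cast_sub this]; ring
      rw [e1, e2]
      ring_nf
  rw [step3]
  -- restrict to the support and identify with the recursion sum
  have step4 : ∑ k ∈ Finset.Icc 2 (N+2), aa m x (N+3-k) / ((k:ℝ)*((k:ℝ)-1))
      = ∑ k ∈ Finset.Icc 2 (N+2-m+1), x (N+2-k+1) / ((k:ℝ)*((k:ℝ)-1)) := by
    have hsub : Finset.Icc 2 (N+2-m+1) ⊆ Finset.Icc 2 (N+2) := by
      intro k hk
      simp only [Finset.mem_Icc] at hk ⊢
      omega
    have hzero : ∀ k ∈ Finset.Icc 2 (N+2), k ∉ Finset.Icc 2 (N+2-m+1) →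
        aa m x (N+3-k) / ((k:ℝ)*((k:ℝ)-1)) = 0 := by
      intro k hk hk'
      simp only [Finset.mem_Icc] at hk hk'
      have : ¬ m ≤ N + 3 - k := by omega
      simp [aa, if_neg this]
    rw [← Finset.sum_subset hsub hzero]
    refine Finset.sum_congr rfl (fun k hk => ?_)
    simp only [Finset.mem_Icc] at hk
    have e1 : N + 3 - k = N + 2 - k + 1 := by omega
    have e2 : m ≤ N + 2 - k + 1 := by omega
    rw [e1]
    simp [aa, if_pos e2]
  rw [step4]
  -- use the recursion
  have hx := hrec (N+2) hc
  have hcast1 : ((N+2:ℕ):ℝ) = (N:ℝ)+2 := by push_cast; ring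
  rw [hcast1] at hx
  have hNpos : (N:ℝ)+1 ≠ 0 := by positivity
  have haN2 : aa m x (N+2) = x (N+2) := by simp [aa, if_pos (by omega : m ≤ N+2)]
  rw [haN2]
  have hx' : x (N+2) = (((N:ℝ)+2)/(((N:ℝ)+2)-1)) *
      ∑ k ∈ Finset.Icc 2 (N+2-m+1), x (N+2-k+1) / ((k:ℝ)*((k:ℝ)-1)) := hx
  rw [hx']
  have : ((N:ℝ)+2)-1 = (N:ℝ)+1 := by ring
  rw [this]
  field_simp
  ring


end Stmt15

open Stmt15

set_option maxHeartbeats 1000000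

/-- Generating function identity: with `f_{(m)}(t) = Σ_{n≥1} x_{n+m-1} t^{n+m-2}`
(indexed here by `j = n - 1`), `(1-t) f_{(m)}(t) = -(1/(m-1)) ∫_0^t u^{m-1}/log(1-u) du`. -/
theorem stmt_15 (m : ℕ) (hm : 2 ≤ m) (x : ℕ → ℝ)
    (hxm : x m = 1 / ((m : ℝ) - 1) ^ 2)
    (hrec : ∀ n : ℕ, m + 1 ≤ n →
      x n = ((n : ℝ) / ((n : ℝ) - 1)) *
        ∑ k ∈ Finset.Icc 2 (n - m + 1), x (n - k + 1) / ((k : ℝ) * ((k : ℝ) - 1))) :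
    ∀ t : ℝ, t ∈ Set.Ico (0 : ℝ) 1 →
      (1 - t) * (∑' j : ℕ, x (j + m) * t ^ (j + m - 1))
        = -(1 / ((m : ℝ) - 1)) * ∫ u in (0:ℝ)..t, u ^ (m - 1) / Real.log (1 - u) := by
  have hmR : (2:ℝ) ≤ (m:ℝ) := by exact_mod_cast hm
  have habs := abs_x_le m x hm hxm hrec
  intro t ht
  obtain ⟨ht0, ht1⟩ := ht
  have habs_t : |t| < 1 := by rwa [abs_of_nonneg ht0]
  set r : ℝ := (1+t)/2 with hr
  have hr0 : 0 < r := by rw [hr]; linarith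
  have hrt : t < r := by rw [hr]; linarith
  have hr1 : r < 1 := by rw [hr]; linarith
  -- the bound sequence for the derivative series
  set w : ℕ → ℝ := fun i => (2/r) * (((i:ℝ)+1)^2 * r^i) with hw
  have hwsum : Summable w := (summable_sq hr0.le hr1).mul_left _
  have hbound : ∀ (i : ℕ) (y : ℝ), |y| ≤ r → ‖qq m x i * ((i:ℝ) * y^(i-1))‖ ≤ w i := by
    intro i y hy
    match i with
    | 0 =>
      have : ‖qq m x 0 * (((0:ℕ):ℝ) * y^(0-1))‖ = 0 := by simp
      rw [this, hw]
      positivity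
    | (j+1) =>
      have h1 : ‖qq m x (j+1) * (((j+1:ℕ):ℝ) * y^(j+1-1))‖
          = |qq m x (j+1)| * (((j:ℝ)+1) * |y|^j) := by
        rw [norm_mul, Real.norm_eq_abs, Real.norm_eq_abs, abs_mul, abs_pow]
        push_cast
        rw [abs_of_nonneg (by positivity : (0:ℝ) ≤ (j:ℝ)+1)]
      rw [h1]
      have h2 : |qq m x (j+1)| ≤ 2*((j:ℝ)+1)+2 := by
        have := abs_qq_le habs (j+1); push_cast at this ⊢; linarith
      have h3 : |y|^j ≤ r^j := pow_le_pow_left₀ (abs_nonneg y) hy j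
      have h4 : w (j+1) = 2*(((j:ℝ)+2)^2 * r^j) := by
        rw [hw]
        have : r ≠ 0 := hr0.ne'
        push_cast
        field_simp
        ring
      rw [h4]
      have hyj : (0:ℝ) ≤ |y|^j := by positivity
      have hrj : (0:ℝ) ≤ r^j := by positivity
      calc |qq m x (j+1)| * (((j:ℝ)+1) * |y|^j)
          ≤ (2*((j:ℝ)+1)+2) * (((j:ℝ)+1) * |y|^j) := by
            refine mul_le_mul_of_nonneg_right h2 (by positivity)
        _ ≤ (2*((j:ℝ)+1)+2) * (((j:ℝ)+1) * r^j) := by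
            refine mul_le_mul_of_nonneg_left
              (mul_le_mul_of_nonneg_left h3 (by positivity)) (by positivity)
        _ ≤ 2*(((j:ℝ)+2)^2 * r^j) := by
            nlinarith [mul_nonneg hrj (show (0:ℝ) ≤ (j:ℝ)+2 by positivity)]
  -- derivative of F
  have hderivF : ∀ y ∈ Metric.ball (0:ℝ) r,
      HasDerivAt (fun z => ∑' i, qq m x i * z^i)
        (∑' i, qq m x i * ((i:ℝ) * y^(i-1))) y := by
    intro y hy
    refine hasDerivAt_tsum_of_isPreconnected hwsum Metric.isOpen_ball
      (convex_ball (0:ℝ) r).isPreconnected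
      (fun n z _ => (hasDerivAt_pow n z).const_mul (qq m x n)) ?_
      (Metric.mem_ball_self hr0) ?_ hy
    · intro n z hz
      have : |z| ≤ r := by
        rw [Metric.mem_ball, Real.dist_eq, sub_zero] at hz
        exact hz.le
      exact hbound n z this
    · refine summable_of_ne_finset_zero (s := {0}) (fun b hb => ?_)
      have : b ≠ 0 := by simpa using hb
      simp [zero_pow this]
  have hball : Set.Icc (0:ℝ) t ⊆ Metric.ball (0:ℝ) r := by
    intro y hy
    rw [Metric.mem_ball, Real.dist_eq, sub_zero]
    rw [Set.mem_Icc] at hy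
    rw [abs_of_nonneg hy.1]
    exact lt_of_le_of_lt hy.2 hrt
  -- continuity of G on [0,t]
  have hGcont : ContinuousOn (fun y => ∑' i, qq m x i * ((i:ℝ) * y^(i-1)))
      (Set.Icc (0:ℝ) t) := by
    refine (tendstoUniformlyOn_tsum hwsum (fun i y hy => ?_)).continuousOn
      (Filter.Eventually.frequently (Filter.Eventually.of_forall (fun s => ?_)))
    · have : |y| ≤ r := by
        rw [Set.mem_Icc] at hy
        rw [abs_of_nonneg hy.1]
        exact (le_of_lt (lt_of_le_of_lt hy.2 hrt))
      exact hbound i y this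
    · exact (continuous_finset_sum _ (fun i _ => by fun_prop)).continuousOn
  -- FTC
  have hFTC : (∫ y in (0:ℝ)..t, (∑' i, qq m x i * ((i:ℝ) * y^(i-1))))
      = (∑' i, qq m x i * t^i) - (∑' i, qq m x i * (0:ℝ)^i) := by
    refine intervalIntegral.integral_eq_sub_of_hasDerivAt
      (f := fun z => ∑' i, qq m x i * z ^ i)
      (f' := fun y => ∑' i, qq m x i * ((i:ℝ) * y^(i-1))) (fun y hy => ?_) ?_
    · rw [Set.uIcc_of_le ht0] at hy
      exact hderivF y (hball hy)
    · refine ContinuousOn.intervalIntegrable ?_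
      rwa [Set.uIcc_of_le ht0]
  have hF0 : (∑' i, qq m x i * (0:ℝ)^i) = 0 := by
    rw [tsum_eq_single 0 (fun b hb => by simp [zero_pow hb])]
    have hq0 : qq m x 0 = 0 := by
      simp only [qq, aa]
      rw [if_neg (by omega : ¬ m ≤ 0+1), if_neg (by omega : ¬ m ≤ 0)]
      ring
    rw [hq0, zero_mul]
  -- identification of the integrand
  have hGval : ∀ u : ℝ, 0 < u → u < 1 →
      (∑' i, qq m x i * ((i:ℝ) * u^(i-1)))
        = -(1/((m:ℝ)-1)) * (u^(m-1)/Real.log (1-u)) := by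
    intro u hu0 hu1
    have habsu : |u| < 1 := by rw [abs_of_pos hu0]; exact hu1
    have hlog : Real.log (1-u) < 0 := Real.log_neg (by linarith) (by linarith)
    have hsqu : Summable (fun n : ℕ => ((n:ℝ)+1)^2 * |u|^n) := summable_sq (abs_nonneg u) habsu
    have hl : Summable (fun k : ℕ => ‖u^(k+1)/((k:ℝ)+1)‖) := by
      refine Summable.of_nonneg_of_le (fun k => norm_nonneg _) (fun k => ?_) hsqu
      rw [Real.norm_eq_abs, abs_div, abs_pow]
      rw [abs_of_nonneg (by positivity : (0:ℝ) ≤ (k:ℝ)+1)]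
      have h1 : |u|^(k+1) / ((k:ℝ)+1) ≤ |u|^k := by
        rw [div_le_iff₀ (by positivity)]
        have : |u|^(k+1) = |u| * |u|^k := by ring
        rw [this]
        nlinarith [pow_nonneg (abs_nonneg u) k, abs_nonneg u]
      have h2 : (1:ℝ) ≤ ((k:ℝ)+1)^2 := by nlinarith [Nat.cast_nonneg (α := ℝ) k]
      have h3 : |u|^k ≤ ((k:ℝ)+1)^2 * |u|^k := by
        nlinarith [pow_nonneg (abs_nonneg u) k]
      linarith
    have hh : Summable (fun i : ℕ => ‖(((i:ℝ)+1) * qq m x (i+1)) * u^i‖) := by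
      refine Summable.of_nonneg_of_le (fun i => norm_nonneg _)
        (fun i => ?_) (hsqu.mul_left 4)
      rw [Real.norm_eq_abs, abs_mul, abs_mul, abs_pow]
      rw [abs_of_nonneg (by positivity : (0:ℝ) ≤ (i:ℝ)+1)]
      have h2 : |qq m x (i+1)| ≤ 2*(i:ℝ)+4 := by
        have := abs_qq_le habs (i+1); push_cast at this; linarith
      have h3 : ((i:ℝ)+1) * (2*(i:ℝ)+4) ≤ 4*((i:ℝ)+1)^2 := by nlinarith
      calc ((i:ℝ)+1) * |qq m x (i+1)| * |u|^i
          ≤ ((i:ℝ)+1) * (2*(i:ℝ)+4) * |u|^i :=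
            mul_le_mul_of_nonneg_right
              (mul_le_mul_of_nonneg_left h2 (by positivity))
              (pow_nonneg (abs_nonneg u) i)
        _ ≤ 4*((i:ℝ)+1)^2 * |u|^i :=
            mul_le_mul_of_nonneg_right h3 (pow_nonneg (abs_nonneg u) i)
        _ = 4*(((i:ℝ)+1)^2 * |u|^i) := by ring
    -- shift the derivative series
    have hGsum : Summable (fun i : ℕ => qq m x i * ((i:ℝ) * u^(i-1))) := by
      rw [← summable_nat_add_iff 1]
      refine hh.of_norm.congr (fun i => ?_)
      simp only [Nat.add_sub_cancel]
      push_cast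
      ring
    have hshift : (∑' i, qq m x i * ((i:ℝ) * u^(i-1)))
        = ∑' i : ℕ, (((i:ℝ)+1) * qq m x (i+1)) * u^i := by
      rw [Summable.tsum_eq_zero_add hGsum]
      simp only [Nat.cast_zero, zero_mul, mul_zero, zero_add]
      refine tsum_congr (fun i => ?_)
      simp only [Nat.add_sub_cancel]
      push_cast
      ring
    have hne : -Real.log (1-u) ≠ 0 := by
      have : 0 < -Real.log (1-u) := by linarith
      exact this.ne'
    have hLt : (∑' k : ℕ, u^(k+1)/((k:ℝ)+1)) = -Real.log (1-u) :=
      (Real.hasSum_pow_div_log_of_abs_lt_one habsu).tsum_eq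
    have inner : ∀ N : ℕ, (∑ p ∈ Finset.HasAntidiagonal.antidiagonal N,
        (u^(p.1+1)/((p.1:ℝ)+1)) * ((((p.2:ℝ)+1) * qq m x (p.2+1)) * u^(p.2)))
          = (if N = m-2 then 1/((m:ℝ)-1) else 0) * u^(N+1) := by
      intro N
      have hterm : ∀ p ∈ Finset.HasAntidiagonal.antidiagonal N,
          (u^(p.1+1)/((p.1:ℝ)+1)) * ((((p.2:ℝ)+1) * qq m x (p.2+1)) * u^(p.2))
            = (((p.2:ℝ)+1) * qq m x (p.2+1) / ((p.1:ℝ)+1)) * u^(N+1) := by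
        intro p hp
        have hp' : p.1 + p.2 = N := Finset.HasAntidiagonal.mem_antidiagonal.mp hp
        have hpow : u^(p.1+1) * u^(p.2) = u^(N+1) := by
          rw [← pow_add]; congr 1; omega
        calc (u^(p.1+1)/((p.1:ℝ)+1)) * ((((p.2:ℝ)+1) * qq m x (p.2+1)) * u^(p.2))
            = (((p.2:ℝ)+1) * qq m x (p.2+1) / ((p.1:ℝ)+1)) * (u^(p.1+1) * u^(p.2)) := by
              ring
          _ = (((p.2:ℝ)+1) * qq m x (p.2+1) / ((p.1:ℝ)+1)) * u^(N+1) := by rw [hpow]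
      rw [Finset.sum_congr rfl hterm, ← Finset.sum_mul, coeffSum m x hm hxm hrec N]
    have key : (-Real.log (1-u)) * (∑' i : ℕ, (((i:ℝ)+1) * qq m x (i+1)) * u^i)
        = (1/((m:ℝ)-1)) * u^(m-1) := by
      rw [← hLt, tsum_mul_tsum_eq_tsum_sum_antidiagonal_of_summable_norm hl hh,
        tsum_congr inner]
      rw [tsum_eq_single (m-2) (fun N hN => by rw [if_neg hN, zero_mul])]
      rw [if_pos rfl]
      have hmm : m - 2 + 1 = m - 1 := by omega
      rw [hmm]
    have hm1 : (m:ℝ)-1 ≠ 0 := by linarith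
    have hlogne : Real.log (1-u) ≠ 0 := ne_of_lt hlog
    rw [hshift]
    have h5 : (∑' i : ℕ, (((i:ℝ)+1) * qq m x (i+1)) * u^i)
        = ((1/((m:ℝ)-1)) * u^(m-1)) / (-Real.log (1-u)) := by
      rw [← key, mul_div_cancel_left₀ _ hne]
    rw [h5]
    field_simp
  -- summability at t for the reindexing/split
  have hsqt : Summable (fun n : ℕ => ((n:ℝ)+1)^2 * |t|^n) := summable_sq (abs_nonneg t) habs_t
  have habs_t1 : ∀ i : ℕ, |t|^i ≤ |t|^i := fun i => le_rfl
  have S1 : Summable (fun i : ℕ => aa m x (i+1) * t^i) := by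
    refine Summable.of_norm_bounded hsqt (fun i => ?_)
    rw [Real.norm_eq_abs, abs_mul, abs_pow]
    have h1 : |aa m x (i+1)| ≤ (i:ℝ)+1 := by
      have := abs_aa_le habs (i+1); push_cast at this; linarith
    have h2 : (i:ℝ)+1 ≤ ((i:ℝ)+1)^2 := by nlinarith [Nat.cast_nonneg (α := ℝ) i]
    have := pow_nonneg (abs_nonneg t) i
    nlinarith [abs_nonneg (aa m x (i+1))]
  have S0 : Summable (fun i : ℕ => aa m x i * t^i) := by
    refine Summable.of_norm_bounded hsqt (fun i => ?_)
    rw [Real.norm_eq_abs, abs_mul, abs_pow]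
    have h1 : |aa m x i| ≤ (i:ℝ)+1 := by
      have := abs_aa_le habs i; linarith
    have h2 : (i:ℝ)+1 ≤ ((i:ℝ)+1)^2 := by nlinarith [Nat.cast_nonneg (α := ℝ) i]
    have := pow_nonneg (abs_nonneg t) i
    nlinarith [abs_nonneg (aa m x i)]
  -- reindex the original sum
  have hreindex : (∑' j : ℕ, x (j + m) * t ^ (j + m - 1))
      = ∑' i : ℕ, aa m x (i+1) * t^i := by
    have hinj : Function.Injective (fun j : ℕ => j + (m-1)) := by
      intro a b h
      simpa using h
    have hsupp : Function.support (fun i : ℕ => aa m x (i+1) * t^i)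
        ⊆ Set.range (fun j : ℕ => j + (m-1)) := by
      intro i hi
      by_cases hcase : m - 1 ≤ i
      · refine ⟨i - (m-1), ?_⟩
        dsimp only
        omega
      · exfalso
        apply hi
        have : ¬ m ≤ i + 1 := by omega
        simp [aa, if_neg this]
    have heq := Function.Injective.tsum_eq hinj hsupp
    rw [← heq]
    refine tsum_congr (fun j => ?_)
    have e1 : j + (m-1) + 1 = j + m := by omega
    have e2 : j + m - 1 = j + (m-1) := by omega
    simp only [e1, e2]
    have : m ≤ j + m := by omega
    simp [aa, if_pos this]
  -- split (1-t) * f = sum of q-series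
  have hsplit : (1-t) * (∑' i : ℕ, aa m x (i+1) * t^i) = ∑' i : ℕ, qq m x i * t^i := by
    have h1 : (∑' i : ℕ, qq m x i * t^i)
        = (∑' i : ℕ, aa m x (i+1) * t^i) - ∑' i : ℕ, aa m x i * t^i := by
      rw [← Summable.tsum_sub S1 S0]
      refine tsum_congr (fun i => ?_)
      simp only [qq]
      ring
    have h2 : (∑' i : ℕ, aa m x i * t^i) = t * ∑' i : ℕ, aa m x (i+1) * t^i := by
      rw [Summable.tsum_eq_zero_add S0]
      have h0 : aa m x 0 = 0 := by
        simp only [aa]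
        rw [if_neg (by omega : ¬ m ≤ 0)]
      rw [h0, zero_mul, zero_add, ← tsum_mul_left]
      refine tsum_congr (fun i => ?_)
      ring
    rw [h1, h2]
    ring
  -- final assembly
  have hint2 : (∫ y in (0:ℝ)..t, (∑' i, qq m x i * ((i:ℝ) * y^(i-1))))
      = ∫ u in (0:ℝ)..t, -(1/((m:ℝ)-1)) * (u^(m-1)/Real.log (1-u)) := by
    refine intervalIntegral.integral_congr_ae ?_
    refine MeasureTheory.ae_of_all _ (fun u hu => ?_)
    rw [Set.uIoc_of_le ht0] at hu
    exact hGval u hu.1 (lt_of_le_of_lt hu.2 ht1)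
  calc (1 - t) * (∑' j : ℕ, x (j + m) * t ^ (j + m - 1))
      = (1-t) * ∑' i : ℕ, aa m x (i+1) * t^i := by rw [hreindex]
    _ = ∑' i : ℕ, qq m x i * t^i := hsplit
    _ = (∑' i, qq m x i * t^i) - (∑' i, qq m x i * (0:ℝ)^i) := by rw [hF0, sub_zero]
    _ = ∫ y in (0:ℝ)..t, (∑' i, qq m x i * ((i:ℝ) * y^(i-1))) := hFTC.symm
    _ = ∫ u in (0:ℝ)..t, -(1/((m:ℝ)-1)) * (u^(m-1)/Real.log (1-u)) := hint2
    _ = -(1 / ((m : ℝ) - 1)) * ∫ u in (0:ℝ)..t, u ^ (m - 1) / Real.log (1 - u) :=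
        intervalIntegral.integral_const_mul _ _
end

section
/- For m ≥ 2, lim_{t→1−} (1/(m−1))·∫_0^{−log(1−t)} [(1−e^{−r})^{m−1} − (1−e^{−r})^m]/r dr = (1/(m−1))·Σ_{k=1}^{m−1} C(m−1,k)·(−1)^{k+1}·log(k+1). -/
open Filter

open MeasureTheory Set Real

lemma aux_h_int {ε : ℝ} (hε : 0 < ε) :
    IntegrableOn (fun u : ℝ => Real.exp (-u) / u) (Ioi ε) := by
  have h0 : IntegrableOn (fun u : ℝ => Real.exp (-1 * u)) (Ioi ε) :=
    exp_neg_integrableOn_Ioi ε one_pos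
  have h1 : IntegrableOn (fun u : ℝ => ε⁻¹ * Real.exp (-1 * u)) (Ioi ε) := h0.const_mul _
  refine h1.mono' ?_ ?_
  · exact ((Real.measurable_exp.comp measurable_neg).div measurable_id).aestronglyMeasurable
  · filter_upwards [ae_restrict_mem measurableSet_Ioi] with u hu
    have hu0 : 0 < u := hε.trans hu
    rw [norm_div, Real.norm_eq_abs, Real.norm_eq_abs, abs_of_pos (Real.exp_pos _),
      abs_of_pos hu0, neg_one_mul]
    rw [div_le_iff₀ hu0]
    calc Real.exp (-u) ≤ ε⁻¹ * Real.exp (-u) * ε := by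
          rw [mul_comm _ ε, ← mul_assoc, mul_inv_cancel₀ hε.ne', one_mul]
      _ ≤ ε⁻¹ * Real.exp (-u) * u := by
          refine mul_le_mul_of_nonneg_left hu.le ?_
          positivity

lemma g_meas_s16 (b : ℝ) : Measurable (fun r : ℝ => (Real.exp (-r) - Real.exp (-(b*r))) / r) := by
  exact ((Real.measurable_exp.comp measurable_neg).sub
    (Real.measurable_exp.comp ((measurable_const.mul measurable_id).neg))).div measurable_id

lemma g_nonneg_s16 {b r : ℝ} (hb : 1 ≤ b) (hr : 0 < r) :
    0 ≤ (Real.exp (-r) - Real.exp (-(b*r))) / r := by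
  apply div_nonneg _ hr.le
  rw [sub_nonneg]
  apply Real.exp_le_exp.2
  nlinarith

lemma g_le {b r : ℝ} (hb : 1 ≤ b) (hr : 0 < r) :
    (Real.exp (-r) - Real.exp (-(b*r))) / r ≤ b - 1 := by
  rw [div_le_iff₀ hr]
  have h1 : Real.exp (-(b*r)) = Real.exp (-r) * Real.exp (-((b-1)*r)) := by
    rw [← Real.exp_add]; ring_nf
  have h2 : 1 - Real.exp (-((b-1)*r)) ≤ (b-1)*r := by
    linarith [Real.add_one_le_exp (-((b-1)*r))]
  have h3 : Real.exp (-r) ≤ 1 := Real.exp_le_one_iff.2 (by linarith)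
  have h4 : Real.exp (-((b-1)*r)) ≤ 1 := Real.exp_le_one_iff.2 (by nlinarith)
  nlinarith [Real.exp_pos (-r)]

lemma g_int {b : ℝ} (hb : 1 < b) :
    IntegrableOn (fun r : ℝ => (Real.exp (-r) - Real.exp (-(b*r))) / r) (Ioi 0) := by
  have hsplit : (Ioi (0:ℝ)) = Ioc 0 1 ∪ Ioi 1 := by
    rw [Ioc_union_Ioi_eq_Ioi]; norm_num
  rw [hsplit, integrableOn_union]
  constructor
  · -- bounded by b - 1 on finite measure set
    have hc : IntegrableOn (fun _ : ℝ => (b - 1)) (Ioc (0:ℝ) 1) := by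
      refine integrableOn_const (ne_of_lt ?_)
      rw [Real.volume_Ioc]; exact ENNReal.ofReal_lt_top
    refine hc.mono' (g_meas_s16 b).aestronglyMeasurable ?_
    filter_upwards [ae_restrict_mem measurableSet_Ioc] with r hr
    rw [Real.norm_eq_abs, abs_of_nonneg (g_nonneg_s16 hb.le hr.1)]
    exact g_le hb.le hr.1
  · -- bounded by exp(-r) on Ioi 1
    have h0 : IntegrableOn (fun r : ℝ => Real.exp (-1 * r)) (Ioi 1) :=
      exp_neg_integrableOn_Ioi 1 one_pos
    refine h0.mono' (g_meas_s16 b).aestronglyMeasurable ?_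
    filter_upwards [ae_restrict_mem measurableSet_Ioi] with r hr
    have hr0 : (0:ℝ) < r := lt_trans one_pos hr
    rw [Real.norm_eq_abs, abs_of_nonneg (g_nonneg_s16 hb.le hr0), neg_one_mul]
    rw [div_le_iff₀ hr0]
    have h2 : Real.exp (-r) - Real.exp (-(b*r)) ≤ Real.exp (-r) := by
      linarith [Real.exp_pos (-(b*r))]
    nlinarith [Real.exp_pos (-r), Real.exp_pos (-(b*r)), (mem_Ioi.1 hr).le]

lemma aux_h_int' {b ε : ℝ} (hb : 0 < b) (hε : 0 < ε) :
    IntegrableOn (fun r : ℝ => Real.exp (-(b*r)) / r) (Ioi ε) := by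
  have h0 : IntegrableOn (fun u : ℝ => Real.exp (-b * u)) (Ioi ε) :=
    exp_neg_integrableOn_Ioi ε hb
  have h1 : IntegrableOn (fun u : ℝ => ε⁻¹ * Real.exp (-b * u)) (Ioi ε) := h0.const_mul _
  refine h1.mono' ?_ ?_
  · exact ((Real.measurable_exp.comp ((measurable_const.mul measurable_id).neg)).div
      measurable_id).aestronglyMeasurable
  · filter_upwards [ae_restrict_mem measurableSet_Ioi] with u hu
    have hu0 : 0 < u := hε.trans hu
    rw [norm_div, Real.norm_eq_abs, Real.norm_eq_abs, abs_of_pos (Real.exp_pos _),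
      abs_of_pos hu0, neg_mul]
    rw [div_le_iff₀ hu0]
    calc Real.exp (-(b*u)) ≤ ε⁻¹ * Real.exp (-(b*u)) * ε := by
          rw [mul_comm _ ε, ← mul_assoc, mul_inv_cancel₀ hε.ne', one_mul]
      _ ≤ ε⁻¹ * Real.exp (-(b*u)) * u := by
          refine mul_le_mul_of_nonneg_left hu.le ?_
          positivity

lemma frullani_eps {b ε : ℝ} (hb : 1 < b) (hε : 0 < ε) :
    |(∫ r in Ioi ε, (Real.exp (-r) - Real.exp (-(b*r))) / r) - Real.log b| ≤ (b-1)*ε := by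
  have hb0 : (0:ℝ) < b := lt_trans one_pos hb
  have hεb : ε < b * ε := by nlinarith
  -- substitution
  have hsub : (∫ r in Ioi ε, Real.exp (-(b*r)) / r)
      = ∫ u in Ioi (b*ε), Real.exp (-u) / u := by
    have hfun : (fun r : ℝ => Real.exp (-(b*r)) / r)
        = fun r : ℝ => b • ((fun u : ℝ => Real.exp (-u) / u) (b * r)) := by
      funext r
      simp only [smul_eq_mul]
      rw [mul_div_assoc' b, mul_div_mul_left _ _ hb0.ne']
    rw [hfun, integral_smul, integral_comp_mul_left_Ioi (fun u : ℝ => Real.exp (-u) / u) ε hb0, smul_smul,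
      mul_inv_cancel₀ hb0.ne', one_smul]
  -- split integral
  have hint1 : IntegrableOn (fun u : ℝ => Real.exp (-u) / u) (Ioi ε) := aux_h_int hε
  have hint2 : IntegrableOn (fun u : ℝ => Real.exp (-u) / u) (Ioi (b*ε)) :=
    aux_h_int (by positivity)
  have hint3 : IntegrableOn (fun u : ℝ => Real.exp (-u) / u) (Ioc ε (b*ε)) :=
    hint1.mono_set Ioc_subset_Ioi_self
  have hunion : Ioi ε = Ioc ε (b*ε) ∪ Ioi (b*ε) := (Ioc_union_Ioi_eq_Ioi hεb.le).symm
  have hdiff : (∫ r in Ioi ε, (Real.exp (-r) - Real.exp (-(b*r))) / r)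
      = ∫ u in ε..(b*ε), Real.exp (-u) / u := by
    have : (∫ r in Ioi ε, (Real.exp (-r) - Real.exp (-(b*r))) / r)
        = (∫ r in Ioi ε, Real.exp (-r) / r) - ∫ r in Ioi ε, Real.exp (-(b*r)) / r := by
      rw [← integral_sub hint1 (aux_h_int' hb0 hε)]
      congr 1; funext r; rw [sub_div]
    rw [this, hsub, intervalIntegral.integral_of_le hεb.le]
    have h5 : (∫ u in Ioi ε, Real.exp (-u) / u)
        = (∫ u in Ioc ε (b*ε), Real.exp (-u) / u) + ∫ u in Ioi (b*ε), Real.exp (-u) / u := by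
      rw [hunion] at hint1 ⊢
      rw [setIntegral_union (Ioc_disjoint_Ioi le_rfl) measurableSet_Ioi hint3 hint2]
    rw [h5]; ring
  rw [hdiff]
  -- now compare with ∫ 1/u
  have hlog : (∫ u in ε..(b*ε), 1 / u) = Real.log b := by
    rw [integral_one_div_of_pos hε (by positivity), mul_div_assoc,
      div_self hε.ne', mul_one]
  have hcont1 : IntervalIntegrable (fun u : ℝ => 1 / u) volume ε (b*ε) := by
    apply ContinuousOn.intervalIntegrable
    apply ContinuousOn.div continuousOn_const continuousOn_id
    intro x hx
    rw [uIcc_of_le hεb.le] at hx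
    exact (lt_of_lt_of_le hε hx.1).ne'
  have hcont2 : IntervalIntegrable (fun u : ℝ => (Real.exp (-u) - 1) / u) volume ε (b*ε) := by
    apply ContinuousOn.intervalIntegrable
    apply ContinuousOn.div (by fun_prop) continuousOn_id
    intro x hx
    rw [uIcc_of_le hεb.le] at hx
    exact (lt_of_lt_of_le hε hx.1).ne'
  have hsplit2 : (∫ u in ε..(b*ε), Real.exp (-u) / u)
      = (∫ u in ε..(b*ε), (Real.exp (-u) - 1) / u) + ∫ u in ε..(b*ε), 1 / u := by
    rw [← intervalIntegral.integral_add hcont2 hcont1]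
    congr 1; funext u; rw [← add_div, sub_add_cancel]
  rw [hsplit2, hlog, add_sub_cancel_right]
  have hbound : ‖∫ u in ε..(b*ε), (Real.exp (-u) - 1) / u‖ ≤ 1 * |b*ε - ε| := by
    apply intervalIntegral.norm_integral_le_of_norm_le_const
    intro x hx
    rw [uIoc_of_le hεb.le] at hx
    have hx0 : 0 < x := lt_trans hε hx.1
    rw [Real.norm_eq_abs, abs_div, abs_of_pos hx0, div_le_iff₀ hx0, one_mul]
    rw [abs_sub_comm, abs_of_nonneg (by linarith [Real.exp_le_one_iff.2 (neg_nonpos.2 hx0.le)])]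
    linarith [Real.add_one_le_exp (-x)]
  rw [Real.norm_eq_abs] at hbound
  calc |∫ u in ε..(b*ε), (Real.exp (-u) - 1) / u| ≤ 1 * |b*ε - ε| := hbound
    _ = (b-1)*ε := by rw [one_mul, abs_of_pos (by linarith)]; ring

lemma frullani_s16 {b : ℝ} (hb : 1 < b) :
    (∫ r in Ioi 0, (Real.exp (-r) - Real.exp (-(b*r))) / r) = Real.log b := by
  set G : ℝ → ℝ := fun r => (Real.exp (-r) - Real.exp (-(b*r))) / r with hG
  set s : ℕ → Set ℝ := fun n => Ioi (1/((n:ℝ)+1)) with hs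
  have hsm : ∀ n, MeasurableSet (s n) := fun n => measurableSet_Ioi
  have hmono : Monotone s := by
    intro n m hnm
    apply Ioi_subset_Ioi
    apply one_div_le_one_div_of_le (by positivity)
    have : (n:ℝ) ≤ m := Nat.cast_le.2 hnm
    linarith
  have hunion : (⋃ n, s n) = Ioi (0:ℝ) := by
    ext x
    simp only [mem_iUnion, hs, mem_Ioi]
    constructor
    · rintro ⟨n, hn⟩; exact lt_trans (by positivity) hn
    · intro hx; exact exists_nat_one_div_lt hx
  have hint : IntegrableOn G (⋃ n, s n) := by rw [hunion]; exact g_int hb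
  have h1 : Tendsto (fun n => ∫ x in s n, G x) atTop (nhds (∫ x in Ioi 0, G x)) := by
    have := tendsto_setIntegral_of_monotone hsm hmono hint
    rwa [hunion] at this
  have h2 : Tendsto (fun n => ∫ x in s n, G x) atTop (nhds (Real.log b)) := by
    have hz : Tendsto (fun n : ℕ => (b-1) * (1/((n:ℝ)+1))) atTop (nhds 0) := by
      have := tendsto_one_div_add_atTop_nhds_zero_nat.const_mul (b-1)
      simpa using this
    have hsq : Tendsto (fun n => (∫ x in s n, G x) - Real.log b) atTop (nhds 0) := by
      apply squeeze_zero_norm _ hz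
      intro n
      rw [Real.norm_eq_abs]
      exact frullani_eps hb (by positivity)
    have := hsq.add_const (Real.log b)
    simpa using this
  exact tendsto_nhds_unique h1 h2

lemma binom_id (n : ℕ) (hn : 1 ≤ n) (x : ℝ) :
    ∑ k ∈ Finset.Icc 1 n, (n.choose k : ℝ) * (-1)^(k+1) * (x - x^(k+1))
      = (1-x)^n - (1-x)^(n+1) := by
  have hins : Finset.range (n+1) = insert 0 (Finset.Icc 1 n) := by
    ext k
    simp only [Finset.mem_range, Finset.mem_insert, Finset.mem_Icc, Nat.lt_succ_iff]
    omega
  have h0 : (0:ℕ) ∉ Finset.Icc 1 n := by simp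
  -- alternating sum
  have key1 : ∑ k ∈ Finset.Icc 1 n, (n.choose k : ℝ) * (-1)^k = -1 := by
    have hZ := Int.alternating_sum_range_choose_of_ne (Nat.one_le_iff_ne_zero.mp hn)
    have hR : ∑ k ∈ Finset.range (n+1), (n.choose k : ℝ) * (-1)^k = 0 := by
      have : ((∑ k ∈ Finset.range (n+1), ((-1)^k * n.choose k : ℤ) : ℤ) : ℝ) = 0 := by
        rw [hZ]; norm_num
      rw [← this]
      push_cast
      apply Finset.sum_congr rfl
      intro k _; ring
    rw [hins, Finset.sum_insert h0] at hR
    simp only [pow_zero, Nat.choose_zero_right, Nat.cast_one, mul_one] at hR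
    linarith
  -- binomial expansion
  have key2 : ∑ k ∈ Finset.range (n+1), (n.choose k : ℝ) * (-1)^k * x^(k+1)
      = x * (1-x)^n := by
    have hap := add_pow (-x) 1 n
    have : (1-x)^n = ∑ k ∈ Finset.range (n+1), (n.choose k : ℝ) * (-1)^k * x^k := by
      rw [show (1-x) = -x + 1 by ring, hap]
      apply Finset.sum_congr rfl
      intro k _
      rw [one_pow, neg_pow]
      ring
    rw [this, Finset.mul_sum]
    apply Finset.sum_congr rfl
    intro k _
    ring
  have key3 : ∑ k ∈ Finset.Icc 1 n, (n.choose k : ℝ) * (-1)^k * x^(k+1)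
      = x * (1-x)^n - x := by
    rw [hins, Finset.sum_insert h0] at key2
    norm_num at key2
    linarith
  have hsplit : ∑ k ∈ Finset.Icc 1 n, (n.choose k : ℝ) * (-1)^(k+1) * (x - x^(k+1))
      = (∑ k ∈ Finset.Icc 1 n, (n.choose k : ℝ) * (-1)^k) * (-x)
        + ∑ k ∈ Finset.Icc 1 n, (n.choose k : ℝ) * (-1)^k * x^(k+1) := by
    rw [Finset.sum_mul, ← Finset.sum_add_distrib]
    apply Finset.sum_congr rfl
    intro k _
    rw [pow_succ]
    ring
  rw [hsplit, key1, key3, pow_succ]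
  ring

theorem stmt_16 (m : ℕ) (hm : 2 ≤ m) :
    Tendsto (fun t : ℝ => (1 / ((m : ℝ) - 1)) *
        ∫ r in (0:ℝ)..(-Real.log (1 - t)),
          ((1 - Real.exp (-r)) ^ (m - 1) - (1 - Real.exp (-r)) ^ m) / r)
      (nhdsWithin 1 (Set.Iio 1))
      (nhds ((1 / ((m : ℝ) - 1)) *
        ∑ k ∈ Finset.Icc 1 (m - 1),
          (Nat.choose (m - 1) k : ℝ) * (-1) ^ (k + 1) * Real.log ((k : ℝ) + 1))) := by
  obtain ⟨n, rfl⟩ : ∃ n, m = n + 1 := ⟨m - 1, by omega⟩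
  have hn : 1 ≤ n := by omega
  simp only [Nat.add_sub_cancel]
  set f : ℝ → ℝ := fun r => ((1 - Real.exp (-r)) ^ n - (1 - Real.exp (-r)) ^ (n+1)) / r
    with hf
  set F : ℝ → ℝ := fun r => ∑ k ∈ Finset.Icc 1 n,
    (Nat.choose n k : ℝ) * (-1)^(k+1) * ((Real.exp (-r) - Real.exp (-(((k:ℝ)+1)*r))) / r)
    with hF
  have heq : EqOn f F (Ioi 0) := by
    intro r hr
    have hr0 : r ≠ 0 := (mem_Ioi.1 hr).ne'
    rw [hf, hF]
    simp only
    rw [← binom_id n hn (Real.exp (-r)), Finset.sum_div]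
    apply Finset.sum_congr rfl
    intro k _
    have hx : Real.exp (-r) ^ (k+1) = Real.exp (-(((k:ℝ)+1)*r)) := by
      rw [← Real.exp_nat_mul]
      congr 1
      push_cast
      ring
    rw [hx]
    ring
  have hFint : IntegrableOn F (Ioi 0) := by
    apply integrable_finset_sum
    intro k hk
    have hk1 : 1 ≤ k := (Finset.mem_Icc.1 hk).1
    have hb : (1:ℝ) < (k:ℝ) + 1 := by
      have : (1:ℝ) ≤ (k:ℝ) := by exact_mod_cast hk1
      linarith
    exact (g_int hb).const_mul _
  have hfint : IntegrableOn f (Ioi 0) := by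
    exact hFint.congr_fun (fun x hx => (heq hx).symm) measurableSet_Ioi
  have hval : (∫ r in Ioi (0:ℝ), f r)
      = ∑ k ∈ Finset.Icc 1 n, (Nat.choose n k : ℝ) * (-1)^(k+1) * Real.log ((k:ℝ)+1) := by
    rw [setIntegral_congr_fun measurableSet_Ioi heq, hF]
    rw [integral_finset_sum _ (fun k hk => by
      have hk1 : 1 ≤ k := (Finset.mem_Icc.1 hk).1
      have hb : (1:ℝ) < (k:ℝ) + 1 := by
        have : (1:ℝ) ≤ (k:ℝ) := by exact_mod_cast hk1
        linarith
      exact (g_int hb).const_mul _)]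
    apply Finset.sum_congr rfl
    intro k hk
    have hk1 : 1 ≤ k := (Finset.mem_Icc.1 hk).1
    have hb : (1:ℝ) < (k:ℝ) + 1 := by
      have : (1:ℝ) ≤ (k:ℝ) := by exact_mod_cast hk1
      linarith
    rw [integral_const_mul, frullani_s16 hb]
  -- the improper integral limit
  have hT : Tendsto (fun t : ℝ => -Real.log (1 - t)) (nhdsWithin 1 (Set.Iio 1)) atTop := by
    have h1 : Tendsto (fun t : ℝ => 1 - t) (nhdsWithin 1 (Set.Iio 1)) (nhdsWithin 0 (Set.Ioi 0)) := by
      apply tendsto_nhdsWithin_of_tendsto_nhds_of_eventually_within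
      · have : Tendsto (fun t : ℝ => 1 - t) (nhds 1) (nhds 0) := by
          have h := ((continuous_const (y := (1:ℝ))).sub continuous_id).tendsto (1:ℝ)
          simpa [Pi.sub_def] using h
        exact this.mono_left nhdsWithin_le_nhds
      · filter_upwards [self_mem_nhdsWithin] with t ht
        simp only [Set.mem_Iio] at ht
        simp only [Set.mem_Ioi]
        linarith
    have h2 := Real.tendsto_log_nhdsGT_zero.comp h1
    exact tendsto_neg_atBot_atTop.comp h2
  have hmain := (intervalIntegral_tendsto_integral_Ioi 0 hfint tendsto_id).comp hT
  rw [hval] at hmain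
  exact hmain.const_mul _
end
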